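/- arXiv:2410.23787 — 4 statements merged into one kernel-verified Lean document; each statement's English description precedes it below -/
import Mathlib

section
/- For every real x > 0, log Γ(x+1) = ∫₀^∞ [x e^{-t} + ((1+t)^{-x-1} - (1+t)^{-1}) / log(1+t)] (dt/t) (the Féaux integral representation of log Γ). -/
open Real MeasureTheory Set Filter
open scoped Topology

lemma int_exp_mul {c : ℝ} (hc : 0 < c) : ∫ u in Ioi (0:ℝ), exp (-(c*u)) = 1/c := by
  have := MeasureTheory.integral_comp_mul_left_Ioi (fun y => exp (-y)) 0 hc
  simp only [mul_zero, integral_exp_neg_Ioi, neg_zero, exp_zero, smul_eq_mul, mul_one] at this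
  rw [this, one_div]

lemma integrableOn_exp_mul {c : ℝ} (hc : 0 < c) :
    IntegrableOn (fun u => exp (-(c*u))) (Ioi (0:ℝ)) := by
  simpa [neg_mul] using exp_neg_integrableOn_Ioi 0 hc

lemma one_sub_exp_neg_le {y : ℝ} (hy : 0 ≤ y) : 1 - exp (-y) ≤ y := by
  nlinarith [Real.add_one_le_exp (-y)]

lemma exp_diff_eq_integral {a b u : ℝ} (hab : a ≤ b) (hu : 0 < u) :
    (exp (-(a*u)) - exp (-(b*u)))/u = ∫ s in Ioc a b, exp (-(s*u)) := by
  rw [← intervalIntegral.integral_of_le hab]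
  have : ∀ s ∈ uIcc a b, HasDerivAt (fun s => -exp (-(s*u))/u) (exp (-(s*u))) s := by
    intro s _
    have h1 : HasDerivAt (fun s : ℝ => -(s*u)) (-u) s := by
      have := ((hasDerivAt_id s).mul_const u).neg
      rw [one_mul] at this
      exact this
    have h2 := (h1.exp.neg.div_const u)
    convert h2 using 1
    · rfl
    · rfl
    · rfl
    · field_simp
  rw [intervalIntegral.integral_eq_sub_of_hasDerivAt this]
  · ring
  · apply Continuous.intervalIntegrable
    exact Real.continuous_exp.comp ((continuous_id.mul continuous_const).neg)


lemma frullani_integrable_aux {a b : ℝ} (ha : 0 < a) (hab : a ≤ b) :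
    IntegrableOn (fun u => (exp (-(a*u)) - exp (-(b*u)))/u) (Ioi (0:ℝ)) := by
  have hbd : ∀ u ∈ Ioi (0:ℝ), ‖(exp (-(a*u)) - exp (-(b*u)))/u‖ ≤ (b-a) * exp (-(a*u)) := by
    intro u hu
    rw [mem_Ioi] at hu
    have h1 : exp (-(a*u)) - exp (-(b*u)) = exp (-(a*u)) * (1 - exp (-((b-a)*u))) := by
      rw [mul_sub, mul_one, ← Real.exp_add]; ring_nf
    have h2 : 0 ≤ 1 - exp (-((b-a)*u)) := by
      simp only [sub_nonneg, Real.exp_le_one_iff, Left.neg_nonpos_iff]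
      nlinarith
    have h3 : 1 - exp (-((b-a)*u)) ≤ (b-a)*u := one_sub_exp_neg_le (by nlinarith)
    rw [norm_div, Real.norm_of_nonneg hu.le, div_le_iff₀ hu,
      Real.norm_of_nonneg (by nlinarith [exp_pos (-(a*u))])]
    nlinarith [exp_pos (-(a*u))]
  have hmeas : AEStronglyMeasurable (fun u => (exp (-(a*u)) - exp (-(b*u)))/u)
      (volume.restrict (Ioi (0:ℝ))) := by
    apply Measurable.aestronglyMeasurable
    exact ((Real.measurable_exp.comp ((measurable_const.mul measurable_id).neg)).sub
      (Real.measurable_exp.comp ((measurable_const.mul measurable_id).neg))).div measurable_id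
  apply Integrable.mono' (((integrableOn_exp_mul ha).const_mul (b-a))) hmeas
  exact (ae_restrict_iff' measurableSet_Ioi).2 (Filter.Eventually.of_forall hbd)

lemma frullani_aux {a b : ℝ} (ha : 0 < a) (hab : a ≤ b) :
    ∫ u in Ioi (0:ℝ), (exp (-(a*u)) - exp (-(b*u)))/u = log b - log a := by
  have hb : 0 < b := ha.trans_le hab
  -- integrability of the integrand
  have hint := frullani_integrable_aux ha hab
  -- Fubini
  have hF : Integrable (fun p : ℝ × ℝ => exp (-(p.2 * p.1)))
      ((volume.restrict (Ioi (0:ℝ))).prod (volume.restrict (Ioc a b))) := by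
    have hFm : AEStronglyMeasurable (fun p : ℝ × ℝ => exp (-(p.2 * p.1)))
        ((volume.restrict (Ioi (0:ℝ))).prod (volume.restrict (Ioc a b))) := by
      exact (Real.continuous_exp.comp ((continuous_snd.mul continuous_fst).neg)).aestronglyMeasurable
    rw [MeasureTheory.integrable_prod_iff hFm]
    constructor
    · refine Filter.Eventually.of_forall (fun u => ?_)
      exact (Real.continuous_exp.comp ((continuous_id.mul continuous_const).neg)).integrableOn_Ioc
    · apply Integrable.congr hint
      rw [EventuallyEq, ae_restrict_iff' measurableSet_Ioi]
      refine Filter.Eventually.of_forall (fun u hu => ?_)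
      rw [exp_diff_eq_integral hab hu]
      rw [integral_congr_ae (Filter.Eventually.of_forall (fun s => Real.norm_of_nonneg (exp_pos _).le))]
  have swap := MeasureTheory.integral_integral_swap (f := fun u s => exp (-(s * u))) hF
  calc ∫ u in Ioi (0:ℝ), (exp (-(a*u)) - exp (-(b*u)))/u
      = ∫ u in Ioi (0:ℝ), ∫ s in Ioc a b, exp (-(s*u)) := by
        apply setIntegral_congr_fun measurableSet_Ioi
        intro u hu
        exact exp_diff_eq_integral hab hu
    _ = ∫ s in Ioc a b, ∫ u in Ioi (0:ℝ), exp (-(s*u)) := swap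
    _ = ∫ s in Ioc a b, 1/s := by
        apply setIntegral_congr_fun measurableSet_Ioc
        intro s hs
        exact int_exp_mul (ha.trans_le hs.1.le)
    _ = log b - log a := by
        rw [← intervalIntegral.integral_of_le hab,
          integral_one_div (by intro h; rcases Set.mem_uIcc.mp h with ⟨h1,h2⟩|⟨h1,h2⟩ <;> linarith),
          Real.log_div hb.ne' ha.ne']

lemma frullani {a b : ℝ} (ha : 0 < a) (hb : 0 < b) :
    ∫ u in Ioi (0:ℝ), (exp (-(a*u)) - exp (-(b*u)))/u = log b - log a := by
  rcases le_total a b with h | h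
  · exact frullani_aux ha h
  · have := frullani_aux hb h
    have : ∫ u in Ioi (0:ℝ), (exp (-(a*u)) - exp (-(b*u)))/u
        = - ∫ u in Ioi (0:ℝ), (exp (-(b*u)) - exp (-(a*u)))/u := by
      rw [← integral_neg]; congr 1; ext u; ring
    rw [this, frullani_aux hb h]; ring

lemma frullani_integrable {a b : ℝ} (ha : 0 < a) (hb : 0 < b) :
    IntegrableOn (fun u => (exp (-(a*u)) - exp (-(b*u)))/u) (Ioi (0:ℝ)) := by
  rcases le_total a b with h | h
  · exact frullani_integrable_aux ha h
  · exact ((frullani_integrable_aux hb h).neg).congr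
      (Filter.Eventually.of_forall (fun u => by simp only [Pi.neg_apply]; ring))

lemma integrable_exp_neg_mul_log : IntegrableOn (fun t => exp (-t) * log t) (Ioi (0:ℝ)) := by
  have h1 := (Real.GammaIntegral_convergent (by norm_num : (0:ℝ) < 1/2)).const_mul 2
  have h2 := Real.GammaIntegral_convergent (by norm_num : (0:ℝ) < 2)
  apply Integrable.mono' (h1.add h2)
  · exact ((Real.measurable_exp.comp measurable_neg).mul
      (Real.measurable_log)).aestronglyMeasurable
  · rw [ae_restrict_iff' measurableSet_Ioi]
    refine Filter.Eventually.of_forall (fun t ht => ?_)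
    rw [mem_Ioi] at ht
    have he := exp_pos (-t)
    rw [norm_mul, Real.norm_of_nonneg he.le, Real.norm_eq_abs]
    rcases le_total t 1 with h | h
    · have hlog : |log t| ≤ 2 * t ^ ((1:ℝ)/2 - 1) := by
        have h0 : (0:ℝ) < t ^ (-(1:ℝ)/2) := rpow_pos_of_pos ht _
        have := Real.log_le_sub_one_of_pos h0
        rw [Real.log_rpow ht] at this
        have hlt : log t ≤ 0 := Real.log_nonpos ht.le h
        rw [abs_of_nonpos hlt]
        have : -(1:ℝ)/2 * log t ≤ t ^ (-(1:ℝ)/2) := by linarith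
        calc -log t = 2 * (-(1:ℝ)/2 * log t) := by ring
          _ ≤ 2 * t ^ (-(1:ℝ)/2) := by linarith
          _ = 2 * t ^ ((1:ℝ)/2 - 1) := by norm_num
      calc exp (-t) * |log t| ≤ exp (-t) * (2 * t ^ ((1:ℝ)/2 - 1)) := by
            apply mul_le_mul_of_nonneg_left hlog he.le
        _ = 2 * (exp (-t) * t ^ ((1:ℝ)/2 - 1)) + 0 := by ring
        _ ≤ 2 * (exp (-t) * t ^ ((1:ℝ)/2 - 1)) + exp (-t) * t ^ ((2:ℝ) - 1) :=
            add_le_add (le_refl _) (by positivity)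
    · have hlog : |log t| ≤ t ^ ((2:ℝ) - 1) := by
        rw [abs_of_nonneg (Real.log_nonneg h)]
        have := Real.log_le_sub_one_of_pos ht
        have ht1 : t ^ ((2:ℝ) - 1) = t := by norm_num
        linarith [ht1 ▸ (le_refl t)]
      calc exp (-t) * |log t| ≤ exp (-t) * t ^ ((2:ℝ) - 1) := by
            apply mul_le_mul_of_nonneg_left hlog he.le
        _ = 0 + exp (-t) * t ^ ((2:ℝ) - 1) := by ring
        _ ≤ 2 * (exp (-t) * t ^ ((1:ℝ)/2 - 1)) + exp (-t) * t ^ ((2:ℝ) - 1) :=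
            add_le_add (by positivity) (le_refl _)

lemma integrable_exp_neg_mul_abs_log :
    IntegrableOn (fun t => exp (-t) * |log t|) (Ioi (0:ℝ)) := by
  have := integrable_exp_neg_mul_log.abs
  apply this.congr
  refine Filter.Eventually.of_forall (fun t => ?_)
  show |exp (-t) * log t| = exp (-t) * |log t|
  rw [abs_mul, abs_of_nonneg (exp_pos _).le]

lemma integral_exp_neg_log :
    ∫ t in Ioi (0:ℝ), exp (-t) * log t = -Real.eulerMascheroniConstant := by
  have h1 := Complex.hasDerivAt_GammaIntegral (s := 1) (by norm_num)
  have heq : Complex.Gamma =ᶠ[nhds (1:ℂ)] Complex.GammaIntegral := by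
    have hopen : IsOpen {s : ℂ | 0 < s.re} := isOpen_lt continuous_const Complex.continuous_re
    filter_upwards [hopen.mem_nhds (by norm_num : (0:ℝ) < (1:ℂ).re)] with s hs
    exact Complex.Gamma_eq_integral hs
  have h2 : HasDerivAt Complex.Gamma
      (∫ t : ℝ in Ioi 0, (t:ℂ) ^ (1 - 1 : ℂ) * (Real.log t * Real.exp (-t))) 1 :=
    h1.congr_of_eventuallyEq heq
  have h4 := h2.unique Complex.hasDerivAt_Gamma_one
  have h5 : ∫ t : ℝ in Ioi 0, (t:ℂ) ^ (1 - 1 : ℂ) * (Real.log t * Real.exp (-t))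
      = ((∫ t in Ioi (0:ℝ), exp (-t) * log t : ℝ) : ℂ) :=
    calc ∫ t : ℝ in Ioi 0, (t:ℂ) ^ (1 - 1 : ℂ) * (Real.log t * Real.exp (-t))
        = ∫ t in Ioi (0:ℝ), ((exp (-t) * log t : ℝ) : ℂ) := by
          apply setIntegral_congr_fun measurableSet_Ioi
          intro t _
          show (t:ℂ) ^ (1 - 1 : ℂ) * (Real.log t * Real.exp (-t)) = _
          rw [sub_self, Complex.cpow_zero, one_mul]
          push_cast
          ring
      _ = ((∫ t in Ioi (0:ℝ), exp (-t) * log t : ℝ) : ℂ) := integral_ofReal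
  rw [h5] at h4
  have : ((∫ t in Ioi (0:ℝ), exp (-t) * log t : ℝ) : ℂ)
      = ((-Real.eulerMascheroniConstant : ℝ) : ℂ) := by
    rw [h4]; push_cast; ring
  exact_mod_cast this

lemma norm_frullani_int {t : ℝ} (ht : 0 < t) :
    ∫ s in Ioi (0:ℝ), ‖(exp (-(1*s)) - exp (-(t*s)))/s‖ = |log t| := by
  rcases le_total 1 t with h | h
  · have he : ∀ s ∈ Ioi (0:ℝ), ‖(exp (-(1*s)) - exp (-(t*s)))/s‖
        = (exp (-(1*s)) - exp (-(t*s)))/s := by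
      intro s hs; rw [mem_Ioi] at hs
      rw [Real.norm_of_nonneg]
      apply div_nonneg _ hs.le
      rw [sub_nonneg, Real.exp_le_exp]
      nlinarith
    rw [setIntegral_congr_fun measurableSet_Ioi he, frullani one_pos ht, log_one, sub_zero,
      abs_of_nonneg (Real.log_nonneg h)]
  · have he : ∀ s ∈ Ioi (0:ℝ), ‖(exp (-(1*s)) - exp (-(t*s)))/s‖
        = (exp (-(t*s)) - exp (-(1*s)))/s := by
      intro s hs; rw [mem_Ioi] at hs
      rw [Real.norm_eq_abs, abs_div, abs_of_nonneg hs.le, abs_sub_comm, abs_of_nonneg]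
      rw [sub_nonneg, Real.exp_le_exp]
      nlinarith
    rw [setIntegral_congr_fun measurableSet_Ioi he, frullani ht one_pos, log_one, zero_sub,
      abs_of_nonpos (Real.log_nonpos ht.le h)]

set_option maxHeartbeats 2000000 in
lemma euler_gamma_integral :
    ∫ s in Ioi (0:ℝ), (exp (-s) - (1+s)⁻¹)/s = -Real.eulerMascheroniConstant := by
  set ν := volume.restrict (Ioi (0:ℝ))
  have hGm : AEStronglyMeasurable (fun p : ℝ × ℝ => exp (-p.1) * ((exp (-(1*p.2)) - exp (-(p.1 * p.2)))/p.2))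
      (ν.prod ν) := by
    apply Measurable.aestronglyMeasurable
    exact (Real.measurable_exp.comp measurable_fst.neg).mul
      (((Real.measurable_exp.comp ((measurable_const.mul measurable_snd).neg)).sub
        (Real.measurable_exp.comp ((measurable_fst.mul measurable_snd).neg))).div measurable_snd)
  have hG : Integrable (fun p : ℝ × ℝ => exp (-p.1) * ((exp (-(1*p.2)) - exp (-(p.1 * p.2)))/p.2))
      (ν.prod ν) := by
    rw [MeasureTheory.integrable_prod_iff hGm]
    constructor
    · rw [ae_restrict_iff' measurableSet_Ioi]
      refine Filter.Eventually.of_forall (fun t ht => ?_)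
      rw [mem_Ioi] at ht
      show Integrable (fun s => exp (-t) * ((exp (-(1*s)) - exp (-(t * s)))/s)) _
      exact ((frullani_integrable one_pos ht).const_mul _)
    · have heq : ∀ t ∈ Ioi (0:ℝ),
          (∫ s, ‖exp (-t) * ((exp (-(1*s)) - exp (-(t * s)))/s)‖ ∂ν) = exp (-t) * |log t| := by
        intro t ht
        rw [mem_Ioi] at ht
        have : ∀ s : ℝ, ‖exp (-t) * ((exp (-(1*s)) - exp (-(t * s)))/s)‖
            = exp (-t) * ‖(exp (-(1*s)) - exp (-(t * s)))/s‖ := by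
          intro s
          rw [norm_mul, Real.norm_of_nonneg (exp_pos _).le]
        simp_rw [this]
        rw [MeasureTheory.integral_const_mul, norm_frullani_int ht]
      apply Integrable.congr integrable_exp_neg_mul_abs_log
      rw [EventuallyEq, ae_restrict_iff' measurableSet_Ioi]
      refine Filter.Eventually.of_forall (fun t ht => ?_)
      show exp (-t) * |log t| = ∫ s, ‖exp (-t) * ((exp (-(1*s)) - exp (-(t * s)))/s)‖ ∂ν
      exact (heq t ht).symm
  have swap := MeasureTheory.integral_integral_swap
    (f := fun t s => exp (-t) * ((exp (-(1*s)) - exp (-(t * s)))/s)) hG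
  have hL : ∫ t, (∫ s, exp (-t) * ((exp (-(1*s)) - exp (-(t * s)))/s) ∂ν) ∂ν
      = -Real.eulerMascheroniConstant := by
    rw [← integral_exp_neg_log]
    apply setIntegral_congr_fun measurableSet_Ioi
    intro t ht
    rw [mem_Ioi] at ht
    show ∫ s, exp (-t) * ((exp (-(1*s)) - exp (-(t * s)))/s) ∂ν = exp (-t) * log t
    rw [MeasureTheory.integral_const_mul]
    show exp (-t) * (∫ s in Ioi (0:ℝ), (exp (-(1*s)) - exp (-(t * s)))/s) = _
    rw [frullani one_pos ht, log_one, sub_zero]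
  have hR : ∫ s, (∫ t, exp (-t) * ((exp (-(1*s)) - exp (-(t * s)))/s) ∂ν) ∂ν
      = ∫ s in Ioi (0:ℝ), (exp (-s) - (1+s)⁻¹)/s := by
    apply setIntegral_congr_fun measurableSet_Ioi
    intro s hs
    rw [mem_Ioi] at hs
    have h1s : (0:ℝ) < 1 + s := by linarith
    have hfun : ∀ t : ℝ, exp (-t) * ((exp (-(1*s)) - exp (-(t * s)))/s)
        = (exp (-s) * exp (-(1*t)) - exp (-((1+s) * t))) / s := by
      intro t
      have e1 : exp (-s) * exp (-(1*t)) = exp (-t) * exp (-(1*s)) := by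
        rw [← Real.exp_add, ← Real.exp_add]; ring_nf
      have e2 : exp (-((1+s)*t)) = exp (-t) * exp (-(t*s)) := by
        rw [← Real.exp_add]; ring_nf
      rw [e1, e2]; ring
    show ∫ t, exp (-t) * ((exp (-(1*s)) - exp (-(t * s)))/s) ∂ν = _
    simp_rw [hfun]
    have hint1 : IntegrableOn (fun t => exp (-s) * exp (-(1*t))) (Ioi (0:ℝ)) :=
      (integrableOn_exp_mul one_pos).const_mul _
    have hint2 : IntegrableOn (fun t => exp (-((1+s) * t))) (Ioi (0:ℝ)) :=
      integrableOn_exp_mul h1s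
    show ∫ t in Ioi (0:ℝ), (exp (-s) * exp (-(1*t)) - exp (-((1+s) * t))) / s = _
    simp_rw [div_eq_mul_inv _ s, MeasureTheory.integral_mul_const]
    rw [MeasureTheory.integral_sub hint1 hint2, MeasureTheory.integral_const_mul,
      int_exp_mul one_pos, int_exp_mul h1s]
    norm_num
  rw [← hR, ← swap, hL]

lemma term_integrable {x c : ℝ} (hx : 0 < x) (hc : 0 < c) :
    IntegrableOn (fun u => (x*u - 1 + exp (-(x*u))) * exp (-(c*u)) / u) (Ioi (0:ℝ)) := by
  have h1 : IntegrableOn (fun u => x * exp (-(c*u)) + (exp (-((x+c)*u)) - exp (-(c*u)))/u)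
      (Ioi (0:ℝ)) :=
    ((integrableOn_exp_mul hc).const_mul x).add (frullani_integrable (by linarith) hc)
  apply h1.congr_fun _ measurableSet_Ioi
  intro u hu
  rw [mem_Ioi] at hu
  have he : exp (-((x+c)*u)) = exp (-(x*u)) * exp (-(c*u)) := by
    rw [← Real.exp_add]; ring_nf
  dsimp only
  rw [he]
  field_simp
  ring

lemma term_integral {x c : ℝ} (hx : 0 < x) (hc : 0 < c) :
    ∫ u in Ioi (0:ℝ), (x*u - 1 + exp (-(x*u))) * exp (-(c*u)) / u
      = x/c - (log (x+c) - log c) := by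
  have hxc : (0:ℝ) < x + c := by linarith
  have heq : ∀ u ∈ Ioi (0:ℝ), (x*u - 1 + exp (-(x*u))) * exp (-(c*u)) / u
      = x * exp (-(c*u)) + (exp (-((x+c)*u)) - exp (-(c*u)))/u := by
    intro u hu
    rw [mem_Ioi] at hu
    have he : exp (-((x+c)*u)) = exp (-(x*u)) * exp (-(c*u)) := by
      rw [← Real.exp_add]; ring_nf
    rw [he]
    field_simp
    ring
  rw [setIntegral_congr_fun measurableSet_Ioi heq,
    MeasureTheory.integral_add ((integrableOn_exp_mul hc).const_mul x)
      (frullani_integrable hxc hc),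
    MeasureTheory.integral_const_mul, int_exp_mul hc, frullani hxc hc]
  field_simp
  ring

lemma term_nonneg {x c : ℝ} (hx : 0 < x) (hc : 0 < c) :
    0 ≤ x/c - (log (x+c) - log c) := by
  have h1 : log (x+c) - log c = log (1 + x/c) := by
    rw [← Real.log_div (by linarith) hc.ne']
    congr 1
    field_simp
    ring
  have h2 : log (1 + x/c) ≤ x/c := by
    have := Real.log_le_sub_one_of_pos (show (0:ℝ) < 1 + x/c by positivity)
    linarith
  rw [h1]; linarith

lemma term_le {x c : ℝ} (hx : 0 < x) (hc : 0 < c) :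
    x/c - (log (x+c) - log c) ≤ (x/c)^2 := by
  have hy : (0:ℝ) < x/c := by positivity
  have h1 : log (x+c) - log c = log (1 + x/c) := by
    rw [← Real.log_div (by linarith) hc.ne']
    congr 1
    field_simp
    ring
  have h2 : log (1 + x/c) ≥ x/c - (x/c)^2 := by
    have hp : (0:ℝ) < 1 + x/c := by positivity
    have := Real.log_le_sub_one_of_pos (show (0:ℝ) < (1 + x/c)⁻¹ by positivity)
    rw [Real.log_inv] at this
    have hb : (1 + x/c)⁻¹ - 1 = -(x/c)/(1 + x/c) := by field_simp; ring
    rw [hb] at this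
    have h3 : x/c - (x/c)^2 ≤ (x/c)/(1 + x/c) := by
      rw [le_div_iff₀ hp]
      nlinarith
    have h4 : -(x/c)/(1 + x/c) = -((x/c)/(1 + x/c)) := by ring
    rw [h4] at this
    linarith
  rw [h1]; linarith

lemma summable_terms {x : ℝ} (hx : 0 < x) :
    Summable (fun k : ℕ => x/((k:ℝ)+1) - (log (x+((k:ℝ)+1)) - log ((k:ℝ)+1))) := by
  have hpos : ∀ k : ℕ, (0:ℝ) < (k:ℝ)+1 := fun k => by positivity
  have hbig : Summable (fun k : ℕ => (x/((k:ℝ)+1))^2) := by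
    have h1 : Summable (fun n : ℕ => (1:ℝ)/(n:ℝ)^2) :=
      Real.summable_one_div_nat_pow.mpr one_lt_two
    have h2 : Summable (fun k : ℕ => (1:ℝ)/((k:ℝ)+1)^2) := by
      have := (summable_nat_add_iff 1).mpr h1
      apply this.congr
      intro k
      push_cast
      ring_nf
    have h3 := h2.mul_left (x^2)
    apply h3.congr
    intro k
    rw [div_pow]
    field_simp
  exact Summable.of_nonneg_of_le (fun k => term_nonneg hx (hpos k))
    (fun k => term_le hx (hpos k)) hbig

lemma geom_exp {u : ℝ} (hu : 0 < u) :
    ∑' k : ℕ, exp (-(((k:ℝ)+1)*u)) = (exp u - 1)⁻¹ := by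
  have hr1 : exp (-u) < 1 := by rw [exp_lt_one_iff]; linarith
  have h1 : ∀ k : ℕ, exp (-(((k:ℝ)+1)*u)) = exp (-u) * exp (-u) ^ k := by
    intro k
    rw [← Real.exp_nat_mul, ← Real.exp_add]
    congr 1
    push_cast
    ring
  rw [tsum_congr h1, tsum_mul_left, tsum_geometric_of_lt_one (exp_pos _).le hr1]
  have he : exp (-u) = (exp u)⁻¹ := Real.exp_neg u
  have hne1 : exp u - 1 ≠ 0 := by
    have : 1 < exp u := by rw [← Real.exp_zero]; exact Real.exp_lt_exp.mpr hu
    linarith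
  have hne2 : 1 - exp (-u) ≠ 0 := by
    intro h; apply hne1
    rw [he] at h
    field_simp at h
    nlinarith [exp_pos u]
  field_simp [he]
  rw [mul_sub, he, inv_mul_cancel₀ (exp_pos u).ne', mul_one]

lemma series_eval {x : ℝ} (hx : 0 < x) :
    ∫ u in Ioi (0:ℝ), (x*u - 1 + exp (-(x*u)))/(u*(exp u - 1))
      = ∑' k : ℕ, (x/((k:ℝ)+1) - (log (x+((k:ℝ)+1)) - log ((k:ℝ)+1))) := by
  have hpos : ∀ k : ℕ, (0:ℝ) < (k:ℝ)+1 := fun k => by positivity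
  have hFint : ∀ k : ℕ, Integrable
      (fun u => (x*u - 1 + exp (-(x*u))) * exp (-(((k:ℝ)+1)*u)) / u)
      (volume.restrict (Ioi (0:ℝ))) := fun k => term_integrable hx (hpos k)
  have hnn : ∀ k : ℕ, ∀ u ∈ Ioi (0:ℝ),
      0 ≤ (x*u - 1 + exp (-(x*u))) * exp (-(((k:ℝ)+1)*u)) / u := by
    intro k u hu
    rw [mem_Ioi] at hu
    apply div_nonneg (mul_nonneg _ (exp_pos _).le) hu.le
    nlinarith [Real.add_one_le_exp (-(x*u))]
  have hnorm : ∀ k : ℕ, ∫ u in Ioi (0:ℝ),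
      ‖(x*u - 1 + exp (-(x*u))) * exp (-(((k:ℝ)+1)*u)) / u‖
      = x/((k:ℝ)+1) - (log (x+((k:ℝ)+1)) - log ((k:ℝ)+1)) := by
    intro k
    rw [← term_integral hx (hpos k)]
    apply setIntegral_congr_fun measurableSet_Ioi
    intro u hu
    exact Real.norm_of_nonneg (hnn k u hu)
  have hsum : Summable (fun k : ℕ => ∫ u in Ioi (0:ℝ),
      ‖(x*u - 1 + exp (-(x*u))) * exp (-(((k:ℝ)+1)*u)) / u‖) := by
    rw [funext hnorm]
    exact summable_terms hx
  have key := MeasureTheory.integral_tsum_of_summable_integral_norm hFint hsum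
  have hterm : ∀ k : ℕ, ∫ u in Ioi (0:ℝ),
      (x*u - 1 + exp (-(x*u))) * exp (-(((k:ℝ)+1)*u)) / u
      = x/((k:ℝ)+1) - (log (x+((k:ℝ)+1)) - log ((k:ℝ)+1)) :=
    fun k => term_integral hx (hpos k)
  rw [← funext hterm]
  rw [key]
  apply setIntegral_congr_fun measurableSet_Ioi
  intro u hu
  rw [mem_Ioi] at hu
  have hne1 : exp u - 1 ≠ 0 := by
    have : 1 < exp u := by rw [← Real.exp_zero]; exact Real.exp_lt_exp.mpr hu
    linarith
  show (x*u - 1 + exp (-(x*u)))/(u*(exp u - 1))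
      = ∑' k : ℕ, (x*u - 1 + exp (-(x*u))) * exp (-(((k:ℝ)+1)*u)) / u
  have h2 : ∀ k : ℕ, (x*u - 1 + exp (-(x*u))) * exp (-(((k:ℝ)+1)*u)) / u
      = ((x*u - 1 + exp (-(x*u)))/u) * exp (-(((k:ℝ)+1)*u)) := by
    intro k; ring
  rw [tsum_congr h2, tsum_mul_left, geom_exp hu]
  field_simp

lemma partial_sum_eq {x : ℝ} (hx : 0 < x) {n : ℕ} (hn : 1 ≤ n) :
    ∑ k ∈ Finset.range n, (x/((k:ℝ)+1) - (log (x+((k:ℝ)+1)) - log ((k:ℝ)+1)))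
      = x*((harmonic n : ℝ) - log n) + (log (x+1+n) - log n)
        + log (Real.GammaSeq (x+1) n) := by
  have hnpos : (0:ℝ) < n := by exact_mod_cast hn
  have hfact : ((n.factorial : ℕ) : ℝ) = ∏ k ∈ Finset.range n, ((k:ℝ)+1) := by
    rw [← Finset.prod_range_add_one_eq_factorial]
    push_cast
    rfl
  have hA : ∑ k ∈ Finset.range n, log ((k:ℝ)+1) = log ((n.factorial : ℕ) : ℝ) := by
    rw [hfact, Real.log_prod]
    intro k _
    positivity
  have hB : ∑ k ∈ Finset.range n, log (x+((k:ℝ)+1))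
      = log (∏ k ∈ Finset.range n, (x+((k:ℝ)+1))) := by
    rw [Real.log_prod]
    intro k _
    positivity
  have hH : (harmonic n : ℝ) = ∑ k ∈ Finset.range n, ((k:ℝ)+1)⁻¹ := by
    rw [harmonic]
    push_cast
    rfl
  have hprodpos : (0:ℝ) < ∏ k ∈ Finset.range n, (x+((k:ℝ)+1)) :=
    Finset.prod_pos (fun k _ => by positivity)
  -- log of GammaSeq
  have hP : ∏ j ∈ Finset.range (n+1), ((x+1) + (j:ℝ))
      = (∏ k ∈ Finset.range n, (x+((k:ℝ)+1))) * (x+1+n) := by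
    rw [Finset.prod_range_succ]
    congr 1
    apply Finset.prod_congr rfl
    intro k _
    ring
  have hgs : log (Real.GammaSeq (x+1) n)
      = (x+1) * log n + log ((n.factorial : ℕ) : ℝ)
        - (log (∏ k ∈ Finset.range n, (x+((k:ℝ)+1))) + log (x+1+n)) := by
    rw [Real.GammaSeq, hP]
    rw [Real.log_div (by positivity) (by positivity),
      Real.log_mul (by positivity) (by positivity),
      Real.log_mul hprodpos.ne' (by positivity),
      Real.log_rpow hnpos]
  rw [Finset.sum_sub_distrib, Finset.sum_sub_distrib, hA, hB]
  have hsx : ∑ k ∈ Finset.range n, x/((k:ℝ)+1) = x * (harmonic n : ℝ) := by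
    rw [hH, Finset.mul_sum]
    apply Finset.sum_congr rfl
    intro k _
    rw [div_eq_mul_inv]
  rw [hsx, hgs]
  ring

lemma sum_value {x : ℝ} (hx : 0 < x) :
    ∑' k : ℕ, (x/((k:ℝ)+1) - (log (x+((k:ℝ)+1)) - log ((k:ℝ)+1)))
      = Real.eulerMascheroniConstant * x + log (Real.Gamma (x+1)) := by
  have hsummable := summable_terms hx
  refine tendsto_nhds_unique hsummable.hasSum.tendsto_sum_nat ?_
  have h1 : Tendsto (fun n : ℕ => x*((harmonic n : ℝ) - log n)) atTop
      (𝓝 (x * Real.eulerMascheroniConstant)) :=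
    Real.tendsto_harmonic_sub_log.const_mul x
  have h2 : Tendsto (fun n : ℕ => log (x+1+n) - log n) atTop (𝓝 0) := by
    have ha : Tendsto (fun n : ℕ => (x+1)/(n:ℝ) + 1) atTop (𝓝 1) := by
      have := (tendsto_const_div_atTop_nhds_zero_nat (x+1)).add_const 1
      simpa using this
    have hb : Tendsto (fun n : ℕ => log ((x+1)/(n:ℝ) + 1)) atTop (𝓝 0) := by
      have hc := (Real.continuousAt_log one_ne_zero).tendsto.comp ha
      simpa [Function.comp_def] using hc
    apply hb.congr'
    filter_upwards [eventually_ge_atTop 1] with n hn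
    have hnpos : (0:ℝ) < n := by exact_mod_cast hn
    rw [← Real.log_div (by positivity) hnpos.ne']
    congr 1
    field_simp
  have hgpos : 0 < Real.Gamma (x+1) := Real.Gamma_pos_of_pos (by linarith)
  have h3 : Tendsto (fun n : ℕ => log (Real.GammaSeq (x+1) n)) atTop
      (𝓝 (log (Real.Gamma (x+1)))) :=
    ((Real.continuousAt_log hgpos.ne').tendsto).comp (Real.GammaSeq_tendsto_Gamma (x+1))
  have hcomb := (h1.add h2).add h3
  rw [add_zero] at hcomb
  have : x * Real.eulerMascheroniConstant + log (Real.Gamma (x+1))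
      = Real.eulerMascheroniConstant * x + log (Real.Gamma (x+1)) := by ring
  rw [this] at hcomb
  apply hcomb.congr'
  filter_upwards [eventually_ge_atTop 1] with n hn
  exact (partial_sum_eq hx hn).symm

lemma A_integrable : IntegrableOn (fun t => (exp (-t) - (1+t)⁻¹)/t) (Ioi (0:ℝ)) := by
  have hmeas : ∀ s : Set ℝ, AEStronglyMeasurable (fun t => (exp (-t) - (1+t)⁻¹)/t)
      (volume.restrict s) := by
    intro s
    apply Measurable.aestronglyMeasurable
    exact ((Real.measurable_exp.comp measurable_neg).sub
      ((measurable_const.add measurable_id).inv)).div measurable_id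
  rw [← Ioc_union_Ioi_eq_Ioi (zero_le_one (α := ℝ))]
  apply IntegrableOn.union
  · apply Integrable.mono' (integrableOn_const (C := (1:ℝ)) measure_Ioc_lt_top.ne) (hmeas _)
    rw [ae_restrict_iff' measurableSet_Ioc]
    refine Filter.Eventually.of_forall (fun t ht => ?_)
    obtain ⟨ht0, ht1⟩ := ht
    have h1 : exp (-t) ≤ (1+t)⁻¹ := by
      rw [le_inv_comm₀ (exp_pos _) (by linarith)]
      calc (1+t) = (t+1) := by ring
        _ ≤ exp t := Real.add_one_le_exp t
        _ = (exp (-t))⁻¹ := by rw [← Real.exp_neg, neg_neg]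
    have h2 : (1+t)⁻¹ - exp (-t) ≤ t^2 := by
      have h3 : 1 - t ≤ exp (-t) := by
        have := Real.add_one_le_exp (-t)
        linarith
      have h4 : (1+t)⁻¹ ≤ 1 := by
        rw [inv_le_one_iff₀]; right; linarith
      have hinv : (1+t)⁻¹ * (1+t) = 1 := inv_mul_cancel₀ (by linarith)
      nlinarith [hinv, inv_nonneg.mpr (show (0:ℝ) ≤ 1+t by linarith)]
    rw [norm_div, Real.norm_of_nonneg ht0.le, div_le_iff₀ ht0, Real.norm_eq_abs,
      abs_sub_comm, abs_of_nonneg (by linarith)]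
    nlinarith
  · have hint : IntegrableOn (fun t : ℝ => exp (-(1*t)) + t ^ (-2:ℝ)) (Ioi (1:ℝ)) :=
      ((integrableOn_exp_mul one_pos).mono_set (Ioi_subset_Ioi zero_le_one)).add
        (integrableOn_Ioi_rpow_of_lt (by norm_num) one_pos)
    apply Integrable.mono' hint (hmeas _)
    rw [ae_restrict_iff' measurableSet_Ioi]
    refine Filter.Eventually.of_forall (fun t ht => ?_)
    rw [mem_Ioi] at ht
    have ht0 : (0:ℝ) < t := by linarith
    have h1 : (0:ℝ) < 1 + t := by linarith
    have hrw : t ^ (-2:ℝ) = (t^2)⁻¹ := by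
      rw [show (-2:ℝ) = -((2:ℕ):ℝ) by norm_num, Real.rpow_neg ht0.le, Real.rpow_natCast]
    rw [norm_div, Real.norm_of_nonneg ht0.le, div_le_iff₀ ht0, Real.norm_eq_abs]
    have habs : |exp (-t) - (1+t)⁻¹| ≤ exp (-t) + (1+t)⁻¹ := by
      rw [abs_sub_le_iff]
      constructor <;> nlinarith [exp_pos (-t), inv_nonneg.mpr h1.le]
    have hb1 : exp (-t) * t ≤ exp (-(1*t)) * t := by rw [one_mul]
    have hb2 : (1+t)⁻¹ ≤ t⁻¹ := by
      apply inv_anti₀ ht0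
      linarith
    calc |exp (-t) - (1+t)⁻¹| ≤ exp (-t) + (1+t)⁻¹ := habs
      _ ≤ exp (-(1*t)) + t⁻¹ := by rw [one_mul]; linarith
      _ ≤ (exp (-(1*t)) + t ^ (-2:ℝ)) * t := by
          rw [hrw, add_mul]
          have e1 : exp (-(1*t)) ≤ exp (-(1*t)) * t := by
            nlinarith [exp_pos (-(1*t))]
          have e2 : (t^2)⁻¹ * t = t⁻¹ := by
            field_simp
          rw [e2]
          linarith

lemma B_bound {x t : ℝ} (hx : 0 < x) (ht : 0 < t) :
    0 ≤ x*(1+t)⁻¹ + ((1+t) ^ (-x-1:ℝ) - (1+t) ^ (-1:ℝ))/log (1+t)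
    ∧ x*(1+t)⁻¹ + ((1+t) ^ (-x-1:ℝ) - (1+t) ^ (-1:ℝ))/log (1+t) ≤ x^2 * log (1+t)
    ∧ x*(1+t)⁻¹ + ((1+t) ^ (-x-1:ℝ) - (1+t) ^ (-1:ℝ))/log (1+t) ≤ x * (1+t)⁻¹ := by
  have h1t : (1:ℝ) < 1 + t := by linarith
  have hbpos : (0:ℝ) < 1 + t := by linarith
  set L := log (1+t) with hLdef
  have hLpos : 0 < L := Real.log_pos h1t
  set y := x * L with hydef
  have hy : 0 < y := mul_pos hx hLpos
  set P := exp (-L) with hPdef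
  have hP : 0 < P := exp_pos _
  have hP1 : P ≤ 1 := by
    rw [hPdef]
    exact Real.exp_le_one_iff.mpr (by linarith)
  set D := (exp (-y) - 1)/L with hDdef
  have hDL : D * L = exp (-y) - 1 := div_mul_cancel₀ _ hLpos.ne'
  have hinv : (1+t)⁻¹ = P := by
    rw [hPdef, Real.exp_neg, Real.exp_log hbpos]
  have hp : (1+t) ^ (-1:ℝ) = P := by
    rw [Real.rpow_def_of_pos hbpos, hPdef]
    congr 1
    ring
  have hq : (1+t) ^ (-x-1:ℝ) = P * exp (-y) := by
    rw [Real.rpow_def_of_pos hbpos, hPdef, hydef, ← Real.exp_add]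
    congr 1
    ring
  have hNeq : x*(1+t)⁻¹ + ((1+t) ^ (-x-1:ℝ) - (1+t) ^ (-1:ℝ))/L = P*(x + D) := by
    rw [hp, hq, hinv, hDdef]
    field_simp
  have e1 : 1 - exp (-y) ≤ y := one_sub_exp_neg_le hy.le
  have he : exp y * exp (-y) = 1 := by rw [← Real.exp_add]; simp
  have e2 : y * exp (-y) ≤ 1 - exp (-y) := by
    nlinarith [Real.add_one_le_exp y, exp_pos (-y)]
  have hxD : 0 ≤ x + D := by nlinarith [e1, hDL]
  have h5 : (x + D)*L ≤ y*y := by nlinarith [e2, hDL, exp_pos (-y)]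
  have h6 : x + D ≤ x^2 * L := by nlinarith [h5, hLpos]
  have hD0 : D ≤ 0 := by
    apply div_nonpos_of_nonpos_of_nonneg _ hLpos.le
    have : exp (-y) ≤ 1 := Real.exp_le_one_iff.mpr (by linarith)
    linarith
  refine ⟨?_, ?_, ?_⟩
  · rw [hNeq]
    exact mul_nonneg hP.le hxD
  · rw [hNeq]
    nlinarith [hxD, hP1, hP, h6]
  · rw [hNeq, hinv]
    nlinarith [hP, hD0]

lemma B_measurable : ∀ {x : ℝ} (s : Set ℝ), AEStronglyMeasurable
    (fun t => (x*(1+t)⁻¹ + ((1+t) ^ (-x-1:ℝ) - (1+t) ^ (-1:ℝ))/log (1+t))/t)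
    (volume.restrict s) := by
  intro x s
  apply Measurable.aestronglyMeasurable
  have hb : Measurable (fun t : ℝ => 1 + t) := measurable_const.add measurable_id
  exact ((( measurable_const.mul hb.inv).add
    (((hb.pow_const _).sub (hb.pow_const _)).div (Real.measurable_log.comp hb))).div measurable_id)

lemma B_integrable {x : ℝ} (hx : 0 < x) : IntegrableOn
    (fun t => (x*(1+t)⁻¹ + ((1+t) ^ (-x-1:ℝ) - (1+t) ^ (-1:ℝ))/log (1+t))/t)
    (Ioi (0:ℝ)) := by
  rw [← Ioc_union_Ioi_eq_Ioi (zero_le_one (α := ℝ))]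
  apply IntegrableOn.union
  · apply Integrable.mono' (integrableOn_const (C := x^2) measure_Ioc_lt_top.ne) (B_measurable _)
    rw [ae_restrict_iff' measurableSet_Ioc]
    refine Filter.Eventually.of_forall (fun t ht => ?_)
    obtain ⟨ht0, ht1⟩ := ht
    obtain ⟨hb0, hb1, _⟩ := B_bound hx ht0
    have hlog : log (1+t) ≤ t := by
      have := Real.log_le_sub_one_of_pos (show (0:ℝ) < 1 + t by linarith)
      linarith
    rw [norm_div, Real.norm_of_nonneg ht0.le, div_le_iff₀ ht0, Real.norm_of_nonneg hb0]
    calc x*(1+t)⁻¹ + ((1+t) ^ (-x-1:ℝ) - (1+t) ^ (-1:ℝ))/log (1+t)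
        ≤ x^2 * log (1+t) := hb1
      _ ≤ x^2 * t := by nlinarith
  · have hint : IntegrableOn (fun t : ℝ => x * t ^ (-2:ℝ)) (Ioi (1:ℝ)) :=
      (integrableOn_Ioi_rpow_of_lt (by norm_num) one_pos).const_mul x
    apply Integrable.mono' hint (B_measurable _)
    rw [ae_restrict_iff' measurableSet_Ioi]
    refine Filter.Eventually.of_forall (fun t ht => ?_)
    rw [mem_Ioi] at ht
    have ht0 : (0:ℝ) < t := by linarith
    obtain ⟨hb0, _, hb2⟩ := B_bound hx ht0
    have hrw : t ^ (-2:ℝ) = (t^2)⁻¹ := by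
      rw [show (-2:ℝ) = -((2:ℕ):ℝ) by norm_num, Real.rpow_neg ht0.le, Real.rpow_natCast]
    rw [norm_div, Real.norm_of_nonneg ht0.le, div_le_iff₀ ht0, Real.norm_of_nonneg hb0]
    calc x*(1+t)⁻¹ + ((1+t) ^ (-x-1:ℝ) - (1+t) ^ (-1:ℝ))/log (1+t)
        ≤ x * (1+t)⁻¹ := hb2
      _ ≤ x * t ^ (-2:ℝ) * t := by
          rw [hrw]
          have h1 : (1+t)⁻¹ ≤ (t^2)⁻¹ * t := by
            have e2 : (t^2)⁻¹ * t = t⁻¹ := by field_simp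
            rw [e2]
            apply inv_anti₀ ht0
            linarith
          have := mul_le_mul_of_nonneg_left h1 hx.le
          linarith [this]

lemma image_exp_sub_one : (fun u : ℝ => exp u - 1) '' (Ioi 0) = Ioi (0:ℝ) := by
  ext t
  constructor
  · rintro ⟨u, hu, rfl⟩
    rw [mem_Ioi] at hu
    have h1 : 1 < exp u := by rw [← Real.exp_zero]; exact Real.exp_lt_exp.mpr hu
    show 0 < exp u - 1
    linarith
  · intro ht
    rw [mem_Ioi] at ht
    refine ⟨log (1+t), ?_, ?_⟩
    · rw [mem_Ioi]
      exact Real.log_pos (by linarith)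
    · show exp (log (1+t)) - 1 = t
      rw [Real.exp_log (by linarith)]
      ring

lemma subst_eq {x : ℝ} (hx : 0 < x) :
    ∫ t in Ioi (0:ℝ), (x*(1+t)⁻¹ + ((1+t) ^ (-x-1:ℝ) - (1+t) ^ (-1:ℝ))/log (1+t))/t
      = ∫ u in Ioi (0:ℝ), (x*u - 1 + exp (-(x*u)))/(u*(exp u - 1)) := by
  have key := MeasureTheory.integral_image_eq_integral_abs_deriv_smul
    (s := Ioi (0:ℝ)) measurableSet_Ioi
    (f := fun u : ℝ => exp u - 1) (f' := fun u : ℝ => exp u)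
    (fun u _ => ((Real.hasDerivAt_exp u).sub_const 1).hasDerivWithinAt)
    (fun a _ b _ h => by
      have he : exp a = exp b := by
        have : exp a - 1 = exp b - 1 := h
        linarith
      exact Real.exp_injective he)
    (fun t => (x*(1+t)⁻¹ + ((1+t) ^ (-x-1:ℝ) - (1+t) ^ (-1:ℝ))/log (1+t))/t)
  rw [image_exp_sub_one] at key
  rw [key]
  apply setIntegral_congr_fun measurableSet_Ioi
  intro u hu
  rw [mem_Ioi] at hu
  have hE1 : (1:ℝ) < exp u := by rw [← Real.exp_zero]; exact Real.exp_lt_exp.mpr hu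
  have hne : exp u - 1 ≠ 0 := by linarith
  show |exp u| • ((x*(1+(exp u - 1))⁻¹ + ((1+(exp u - 1)) ^ (-x-1:ℝ)
      - (1+(exp u - 1)) ^ (-1:ℝ))/log (1+(exp u - 1)))/(exp u - 1))
      = (x*u - 1 + exp (-(x*u)))/(u*(exp u - 1))
  have h1 : 1 + (exp u - 1) = exp u := by ring
  rw [h1, smul_eq_mul, abs_of_pos (exp_pos u), Real.log_exp]
  have hc : ∀ c : ℝ, (exp u) ^ (c:ℝ) = exp (u * c) := fun c => by
    rw [Real.rpow_def_of_pos (exp_pos u), Real.log_exp]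
  rw [hc, hc]
  have h2 : exp (u * (-x-1)) = exp (-(x*u)) * exp (-u) := by
    rw [← Real.exp_add]
    congr 1
    ring
  have h3 : exp (u * (-1:ℝ)) = exp (-u) := by
    congr 1
    ring
  rw [h2, h3]
  simp only [Real.exp_neg]
  field_simp
  ring

theorem feaux_formula (x : ℝ) (hx : 0 < x) :
    Real.log (Real.Gamma (x + 1)) =
      ∫ t in Set.Ioi (0 : ℝ),
        (x * Real.exp (-t) +
          ((1 + t) ^ (-x - 1 : ℝ) - (1 + t) ^ (-1 : ℝ)) / Real.log (1 + t)) / t := by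
  have hsplit : ∀ t ∈ Ioi (0:ℝ),
      (x * exp (-t) + ((1+t) ^ (-x-1:ℝ) - (1+t) ^ (-1:ℝ))/log (1+t))/t
      = x * ((exp (-t) - (1+t)⁻¹)/t)
        + (x*(1+t)⁻¹ + ((1+t) ^ (-x-1:ℝ) - (1+t) ^ (-1:ℝ))/log (1+t))/t := by
    intro t ht
    rw [mem_Ioi] at ht
    have hlog : log (1+t) ≠ 0 := (Real.log_pos (by linarith)).ne'
    field_simp
    ring
  rw [setIntegral_congr_fun measurableSet_Ioi hsplit,
    MeasureTheory.integral_add (A_integrable.const_mul x) (B_integrable hx),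
    MeasureTheory.integral_const_mul, euler_gamma_integral, subst_eq hx,
    series_eval hx, sum_value hx]
  ring
end

section
/- For every real x > 0, log Γ(x + 1/2) - log Γ(x + 2) = ∫₀^∞ [((1+t)^{3/2} - 1)/((1+t)^{x+2} log(1+t)) - (3/2) e^{-t}] (dt/t). -/
open MeasureTheory Set Filter Real
open scoped Topology NNReal

namespace FeauxAux


lemma abs_exp_sub_exp {p q m : ℝ} (hp : m ≤ p) (hq : m ≤ q) :
    |Real.exp (-p) - Real.exp (-q)| ≤ Real.exp (-m) * |p - q| := by
  wlog h : q ≤ p generalizing p q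
  · rw [abs_sub_comm, abs_sub_comm p q]; exact this hq hp (le_of_not_ge h)
  have h1 : Real.exp (-p) ≤ Real.exp (-q) := Real.exp_le_exp.2 (by linarith)
  rw [← neg_sub, abs_neg, abs_of_nonneg (by linarith), abs_of_nonneg (by linarith)]
  have heq : Real.exp (-q) - Real.exp (-p) = Real.exp (-q) * (1 - Real.exp (-(p - q))) := by
    rw [mul_sub, mul_one, ← Real.exp_add]; ring_nf
  rw [heq]
  have h2 : 1 - Real.exp (-(p - q)) ≤ p - q := by
    have := Real.add_one_le_exp (-(p - q)); linarith
  have h3 : Real.exp (-q) ≤ Real.exp (-m) := Real.exp_le_exp.2 (by linarith)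
  have h4 : 0 ≤ 1 - Real.exp (-(p - q)) := by
    have : Real.exp (-(p-q)) ≤ 1 := Real.exp_le_one_iff.2 (by linarith)
    linarith
  exact mul_le_mul h3 h2 h4 (Real.exp_pos _).le

lemma hasDerivAt_pow_aux (c : ℝ) (hc : 0 < c) (u : ℝ) (hu : u ∈ Ici (0:ℝ)) :
    HasDerivAt (fun u : ℝ => -(1 + u) ^ (-c) / c) ((1 + u) ^ (-(c + 1))) u := by
  have h1u : (0:ℝ) < 1 + u := by simp at hu; linarith
  have h : HasDerivAt (fun u : ℝ => 1 + u) 1 u := by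
    simpa using (hasDerivAt_id u).const_add 1
  have h2 := (h.rpow_const (p := -c) (Or.inl h1u.ne'))
  have h3 := (h2.neg).div_const c
  apply h3.congr_deriv
  rw [show -(c+1) = -c - 1 by ring]
  field_simp

lemma tendsto_pow_aux (c : ℝ) (hc : 0 < c) :
    Tendsto (fun u : ℝ => -(1 + u) ^ (-c) / c) atTop (𝓝 0) := by
  have h1 : Tendsto (fun u : ℝ => 1 + u) atTop atTop := tendsto_atTop_add_const_left _ _ tendsto_id
  have h2 : Tendsto (fun v : ℝ => v ^ (-c)) atTop (𝓝 0) := tendsto_rpow_neg_atTop hc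
  have := (h2.comp h1).neg.div_const c
  simpa using this

lemma integrableOn_pow (c : ℝ) (hc : 0 < c) :
    IntegrableOn (fun u : ℝ => (1 + u) ^ (-(c + 1))) (Ioi 0) := by
  refine integrableOn_Ioi_deriv_of_nonneg' (hasDerivAt_pow_aux c hc) ?_ (tendsto_pow_aux c hc)
  intro x hx
  exact Real.rpow_nonneg (by simp at hx; linarith) _

lemma integral_pow (c : ℝ) (hc : 0 < c) :
    ∫ u in Ioi (0:ℝ), (1 + u) ^ (-(c + 1)) = 1 / c := by
  rw [integral_Ioi_of_hasDerivAt_of_nonneg' (hasDerivAt_pow_aux c hc)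
    (fun x hx => Real.rpow_nonneg (by simp at hx; linarith) _) (tendsto_pow_aux c hc)]
  norm_num
  ring

lemma hasDerivAt_exp_aux (c : ℝ) (hc : 0 < c) (u : ℝ) (hu : u ∈ Ici (0:ℝ)) :
    HasDerivAt (fun u : ℝ => -Real.exp (-(c * u)) / c) (Real.exp (-(c * u))) u := by
  have h : HasDerivAt (fun u : ℝ => -(c * u)) (-c) u := by
    simpa using (hasDerivAt_id u).const_mul (-c)
  have h2 := (h.exp.neg).div_const c
  apply h2.congr_deriv
  field_simp

lemma integrableOn_exp_aux (c : ℝ) (hc : 0 < c) :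
    IntegrableOn (fun u : ℝ => Real.exp (-(c * u))) (Ioi 0) := by
  have := exp_neg_integrableOn_Ioi 0 hc
  simpa [mul_comm] using this

lemma integral_exp_aux (c : ℝ) (hc : 0 < c) :
    ∫ u in Ioi (0:ℝ), Real.exp (-(c * u)) = 1 / c := by
  have h1 : Tendsto (fun u : ℝ => c * u) atTop atTop :=
    tendsto_id.const_mul_atTop hc
  have h2 : Tendsto (fun u : ℝ => -Real.exp (-(c * u)) / c) atTop (𝓝 0) := by
    have := (Real.tendsto_exp_neg_atTop_nhds_zero.comp h1).neg.div_const c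
    simpa using this
  rw [integral_Ioi_of_hasDerivAt_of_nonneg' (hasDerivAt_exp_aux c hc)
    (fun x hx => (Real.exp_pos _).le) h2]
  norm_num
  ring




/-- the integrand of the exponential Frullani integral -/
noncomputable def eF (c : ℝ) (u : ℝ) : ℝ := (Real.exp (-u) - Real.exp (-(c * u))) / u

lemma eF_aesm (c : ℝ) : AEStronglyMeasurable (eF c) (volume.restrict (Ioi (0:ℝ))) := by
  apply ContinuousOn.aestronglyMeasurable _ measurableSet_Ioi
  apply ContinuousOn.div
  · exact (Continuous.sub (by continuity) (by continuity)).continuousOn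
  · exact continuousOn_id
  · intro u hu; exact (mem_Ioi.1 hu).ne'

lemma eF_bound (c : ℝ) (hc : 0 < c) (u : ℝ) (hu : u ∈ Ioi (0:ℝ)) :
    |eF c u| ≤ |1 - c| * Real.exp (-(min 1 c * u)) := by
  have hu0 : 0 < u := mem_Ioi.1 hu
  have h1 : min 1 c * u ≤ u := by nlinarith [min_le_left 1 c]
  have h2 : min 1 c * u ≤ c * u := by nlinarith [min_le_right 1 c]
  have h := abs_exp_sub_exp h1 h2
  rw [eF, abs_div, abs_of_pos hu0]
  rw [div_le_iff₀ hu0]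
  calc |Real.exp (-u) - Real.exp (-(c*u))| ≤ Real.exp (-(min 1 c * u)) * |u - c*u| := h
    _ = |1 - c| * Real.exp (-(min 1 c * u)) * u := by
        rw [show u - c*u = (1-c)*u by ring, abs_mul, abs_of_pos hu0]; ring

lemma eF_integrable (c : ℝ) (hc : 0 < c) : IntegrableOn (eF c) (Ioi 0) := by
  have hm : 0 < min 1 c := lt_min one_pos hc
  refine Integrable.mono' ((integrableOn_exp_aux _ hm).const_mul |1 - c|) (eF_aesm c) ?_
  filter_upwards [ae_restrict_mem measurableSet_Ioi] with u hu
  rw [Real.norm_eq_abs]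
  exact eF_bound c hc u hu

lemma eF_hasDeriv (c : ℝ) (hc : 0 < c) :
    HasDerivAt (fun d => ∫ u in Ioi (0:ℝ), eF d u) (1 / c) c := by
  have key := hasDerivAt_integral_of_dominated_loc_of_lip
    (F := fun d u => eF d u) (F' := fun u => Real.exp (-(c * u)))
    (x₀ := c) (s := Metric.ball c (c / 2)) (bound := fun u => Real.exp (-(c / 2 * u)))
    (μ := volume.restrict (Ioi (0:ℝ))) (Metric.ball_mem_nhds c (half_pos hc))
    (Eventually.of_forall fun d => eF_aesm d)
    (eF_integrable c hc)
    ((integrableOn_exp_aux c hc).aestronglyMeasurable)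
    ?_ ?_ ?_
  · rw [← integral_exp_aux c hc]; exact key.2
  · -- Lipschitz
    filter_upwards [ae_restrict_mem measurableSet_Ioi] with u hu
    have hu0 : 0 < u := mem_Ioi.1 hu
    apply LipschitzOnWith.of_dist_le_mul
    intro d1 hd1 d2 hd2
    simp only [Metric.mem_ball, Real.dist_eq] at hd1 hd2 ⊢
    have hb1 : c/2 * u ≤ d1 * u := by
      have : c/2 ≤ d1 := by cases abs_sub_lt_iff.1 hd1; linarith
      nlinarith
    have hb2 : c/2 * u ≤ d2 * u := by
      have : c/2 ≤ d2 := by cases abs_sub_lt_iff.1 hd2; linarith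
      nlinarith
    have h := abs_exp_sub_exp hb1 hb2
    have coe : ((Real.nnabs (Real.exp (-(c / 2 * u)))) : ℝ) = Real.exp (-(c / 2 * u)) := by
      rw [Real.coe_nnabs, abs_of_nonneg (Real.exp_pos _).le]
    rw [coe]
    have : eF d1 u - eF d2 u = (Real.exp (-(d2*u)) - Real.exp (-(d1*u))) / u := by
      rw [eF, eF]; ring
    rw [this, abs_div, abs_of_pos hu0, div_le_iff₀ hu0]
    calc |Real.exp (-(d2*u)) - Real.exp (-(d1*u))|
        ≤ Real.exp (-(c/2*u)) * |d2*u - d1*u| := abs_exp_sub_exp hb2 hb1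
      _ = Real.exp (-(c/2*u)) * |d1 - d2| * u := by
          rw [show d2*u - d1*u = -((d1-d2)*u) by ring, abs_neg, abs_mul, abs_of_pos hu0]; ring
  · exact integrableOn_exp_aux _ (half_pos hc)
  · -- pointwise derivative
    filter_upwards [ae_restrict_mem measurableSet_Ioi] with u hu
    have hu0 : 0 < u := mem_Ioi.1 hu
    have h1 : HasDerivAt (fun d : ℝ => -(d * u)) (-u) c := by
      exact (((hasDerivAt_id c).mul_const u).neg).congr_deriv (by simp)
    have h2 := ((h1.exp.const_sub (Real.exp (-u))).div_const u)
    have : -(Real.exp (-(c * u)) * -u) / u = Real.exp (-(c * u)) := by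
      field_simp
    rw [this] at h2
    exact h2

/-- exponential Frullani: ∫ (e^{-u} - e^{-cu})/u = log c -/
lemma eF_integral (c : ℝ) (hc : 0 < c) :
    ∫ u in Ioi (0:ℝ), eF c u = Real.log c := by
  set φ : ℝ → ℝ := fun d => (∫ u in Ioi (0:ℝ), eF d u) - Real.log d with hφ
  have key : ∀ a b : ℝ, 0 < a → a ≤ b → φ b = φ a := by
    intro a b ha hab
    have := constant_of_has_deriv_right_zero (f := φ) (a := a) (b := b) ?_ ?_
    · exact this b ⟨hab, le_rfl⟩
    · intro y hy
      have hy0 : 0 < y := lt_of_lt_of_le ha hy.1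
      exact ((eF_hasDeriv y hy0).sub (Real.hasDerivAt_log hy0.ne')).continuousAt.continuousWithinAt
    · intro y hy
      have hy0 : 0 < y := lt_of_lt_of_le ha hy.1
      have h := (eF_hasDeriv y hy0).sub (Real.hasDerivAt_log hy0.ne')
      rw [one_div, sub_self] at h
      exact h.hasDerivWithinAt
  have h1 : φ 1 = 0 := by
    have : ∀ u, eF 1 u = 0 := by intro u; simp [eF]
    simp [hφ, this]
  have hc1 : φ c = 0 := by
    rcases le_total c 1 with h | h
    · rw [← h1]; exact (key c 1 hc h).symm
    · rw [key 1 c one_pos h]; exact h1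
  have := sub_eq_zero.1 hc1
  linarith [hc1, sub_eq_zero.1 hc1]




/-- the integrand of the kernel Frullani integral -/
noncomputable def kF (c d : ℝ) (u : ℝ) : ℝ :=
  ((1 + u) ^ (-c) - (1 + u) ^ (-d)) / ((1 + u) * Real.log (1 + u))

lemma rpow_eq_exp (u e : ℝ) (hu : 0 < u) :
    (1 + u) ^ (-e) = Real.exp (-(e * Real.log (1 + u))) := by
  rw [Real.rpow_def_of_pos (by linarith)]
  ring_nf

lemma exp_eq_rpow_succ (u m : ℝ) (hu : 0 < u) :
    Real.exp (-(m * Real.log (1 + u))) = (1 + u) ^ (-(m + 1)) * (1 + u) := by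
  have h1u : (0:ℝ) < 1 + u := by linarith
  rw [show (-(m+1):ℝ) = -m + -1 by ring, Real.rpow_add h1u, Real.rpow_neg_one,
    ← rpow_eq_exp _ _ hu]
  field_simp

lemma log_one_add_pos {u : ℝ} (hu : 0 < u) : 0 < Real.log (1 + u) :=
  Real.log_pos (by linarith)

lemma kF_aesm (c d : ℝ) : AEStronglyMeasurable (kF c d) (volume.restrict (Ioi (0:ℝ))) := by
  apply ContinuousOn.aestronglyMeasurable _ measurableSet_Ioi
  apply ContinuousOn.div
  · apply ContinuousOn.sub
    · exact ContinuousOn.rpow_const (by fun_prop)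
        (fun u hu => Or.inl (by simp at hu; positivity))
    · exact ContinuousOn.rpow_const (by fun_prop)
        (fun u hu => Or.inl (by simp at hu; positivity))
  · exact ContinuousOn.mul (by fun_prop) ((Real.continuousOn_log.comp (by fun_prop)
      (fun u hu => by simp at hu ⊢; positivity)))
  · intro u hu
    have h1 := log_one_add_pos (mem_Ioi.1 hu)
    have : (0:ℝ) < 1 + u := by have := mem_Ioi.1 hu; linarith
    positivity

lemma kF_bound (c d : ℝ) (hc : 0 < c) (hd : 0 < d) (u : ℝ) (hu : u ∈ Ioi (0:ℝ)) :
    |kF c d u| ≤ |c - d| * (1 + u) ^ (-(min c d + 1)) := by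
  have hu0 : 0 < u := mem_Ioi.1 hu
  have hL : 0 < Real.log (1 + u) := log_one_add_pos hu0
  have h1u : (0:ℝ) < 1 + u := by linarith
  have h1 : min c d * Real.log (1+u) ≤ c * Real.log (1+u) := by nlinarith [min_le_left c d]
  have h2 : min c d * Real.log (1+u) ≤ d * Real.log (1+u) := by nlinarith [min_le_right c d]
  rw [kF, rpow_eq_exp _ _ hu0, rpow_eq_exp _ _ hu0, abs_div,
    abs_of_pos (by positivity : (0:ℝ) < (1+u) * Real.log (1+u)), div_le_iff₀ (by positivity)]
  calc |Real.exp (-(c*Real.log (1+u))) - Real.exp (-(d*Real.log (1+u)))|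
      ≤ Real.exp (-(min c d * Real.log (1+u))) * |c*Real.log (1+u) - d*Real.log (1+u)| :=
        abs_exp_sub_exp h1 h2
    _ = Real.exp (-(min c d * Real.log (1+u))) * (|c - d| * Real.log (1+u)) := by
        rw [show c*Real.log (1+u) - d*Real.log (1+u) = (c-d)*Real.log (1+u) by ring,
          abs_mul, abs_of_pos hL]
    _ ≤ |c - d| * (1 + u) ^ (-(min c d + 1)) * ((1 + u) * Real.log (1+u)) := by
        rw [exp_eq_rpow_succ _ _ hu0]
        exact le_of_eq (by ring)

lemma kF_integrable (c d : ℝ) (hc : 0 < c) (hd : 0 < d) : IntegrableOn (kF c d) (Ioi 0) := by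
  have hm : 0 < min c d := lt_min hc hd
  refine Integrable.mono' ((integrableOn_pow _ hm).const_mul |c - d|) (kF_aesm c d) ?_
  filter_upwards [ae_restrict_mem measurableSet_Ioi] with u hu
  rw [Real.norm_eq_abs]
  exact kF_bound c d hc hd u hu

lemma kF_hasDeriv (c d : ℝ) (hc : 0 < c) (hd : 0 < d) :
    HasDerivAt (fun e => ∫ u in Ioi (0:ℝ), kF c e u) (1 / d) d := by
  have key := hasDerivAt_integral_of_dominated_loc_of_lip
    (F := fun e u => kF c e u) (F' := fun u => (1 + u) ^ (-(d + 1)))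
    (x₀ := d) (s := Metric.ball d (d / 2)) (bound := fun u => (1 + u) ^ (-(d/2 + 1)))
    (μ := volume.restrict (Ioi (0:ℝ))) (Metric.ball_mem_nhds d (half_pos hd))
    (Eventually.of_forall fun e => kF_aesm c e)
    (kF_integrable c d hc hd)
    ((integrableOn_pow d hd).aestronglyMeasurable)
    ?_ ?_ ?_
  · rw [← integral_pow d hd]; exact key.2
  · -- Lipschitz
    filter_upwards [ae_restrict_mem measurableSet_Ioi] with u hu
    have hu0 : 0 < u := mem_Ioi.1 hu
    have hL : 0 < Real.log (1 + u) := log_one_add_pos hu0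
    have h1u : (0:ℝ) < 1 + u := by linarith
    apply LipschitzOnWith.of_dist_le_mul
    intro d1 hd1 d2 hd2
    simp only [Metric.mem_ball, Real.dist_eq] at hd1 hd2 ⊢
    have hg1 : d/2 ≤ d1 := by cases abs_sub_lt_iff.1 hd1; linarith
    have hg2 : d/2 ≤ d2 := by cases abs_sub_lt_iff.1 hd2; linarith
    have hb1 : d/2 * Real.log (1+u) ≤ d1 * Real.log (1+u) := by nlinarith
    have hb2 : d/2 * Real.log (1+u) ≤ d2 * Real.log (1+u) := by nlinarith
    have coe : ((Real.nnabs ((1+u) ^ (-(d/2 + 1)))) : ℝ) = (1+u) ^ (-(d/2 + 1)) := by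
      rw [Real.coe_nnabs, abs_of_nonneg (Real.rpow_nonneg h1u.le _)]
    rw [coe]
    have heq : kF c d1 u - kF c d2 u
        = ((1+u)^(-d2) - (1+u)^(-d1)) / ((1+u) * Real.log (1+u)) := by
      rw [kF, kF]; ring
    rw [heq, rpow_eq_exp _ _ hu0, rpow_eq_exp _ _ hu0, abs_div,
      abs_of_pos (by positivity : (0:ℝ) < (1+u)*Real.log (1+u)), div_le_iff₀ (by positivity)]
    calc |Real.exp (-(d2*Real.log (1+u))) - Real.exp (-(d1*Real.log (1+u)))|
        ≤ Real.exp (-(d/2*Real.log (1+u))) * |d2*Real.log (1+u) - d1*Real.log (1+u)| :=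
          abs_exp_sub_exp hb2 hb1
      _ = Real.exp (-(d/2*Real.log (1+u))) * Real.log (1+u) * |d1 - d2| := by
          rw [show d2*Real.log (1+u) - d1*Real.log (1+u) = -((d1-d2)*Real.log (1+u)) by ring,
            abs_neg, abs_mul, abs_of_pos hL]; ring
      _ ≤ (1+u) ^ (-(d/2+1)) * |d1 - d2| * ((1+u) * Real.log (1+u)) := by
          rw [exp_eq_rpow_succ _ _ hu0]
          exact le_of_eq (by ring)
  · exact integrableOn_pow _ (by linarith)
  · -- pointwise derivative in e at d
    filter_upwards [ae_restrict_mem measurableSet_Ioi] with u hu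
    have hu0 : 0 < u := mem_Ioi.1 hu
    have hL : 0 < Real.log (1 + u) := log_one_add_pos hu0
    have h1u : (0:ℝ) < 1 + u := by linarith
    have hfun : ∀ e : ℝ, kF c e u
        = ((1+u)^(-c) - Real.exp (-(e * Real.log (1+u)))) / ((1+u) * Real.log (1+u)) := by
      intro e; rw [kF, rpow_eq_exp u e hu0]
    have h1 : HasDerivAt (fun e : ℝ => -(e * Real.log (1+u))) (-Real.log (1+u)) d := by
      exact (((hasDerivAt_id d).mul_const (Real.log (1+u))).neg).congr_deriv (by simp)
    have h2 := ((h1.exp.const_sub ((1+u)^(-c))).div_const ((1+u) * Real.log (1+u)))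
    have hval : -(Real.exp (-(d * Real.log (1+u))) * -Real.log (1+u))
        / ((1+u) * Real.log (1+u)) = (1+u) ^ (-(d+1)) := by
      rw [show -(Real.exp (-(d * Real.log (1+u))) * -Real.log (1+u))
          = Real.exp (-(d*Real.log (1+u))) * Real.log (1+u) by ring]
      rw [show (-(d+1) : ℝ) = -d + -1 by ring, Real.rpow_add h1u, ← rpow_eq_exp _ _ hu0,
        Real.rpow_neg_one]
      field_simp
    rw [hval] at h2
    exact h2.congr_of_eventuallyEq (Eventually.of_forall fun e => hfun e)

/-- kernel Frullani: ∫ ((1+u)^{-c} - (1+u)^{-d})/((1+u) log(1+u)) = log d - log c -/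
lemma kF_integral (c d : ℝ) (hc : 0 < c) (hd : 0 < d) :
    ∫ u in Ioi (0:ℝ), kF c d u = Real.log d - Real.log c := by
  set φ : ℝ → ℝ := fun e => (∫ u in Ioi (0:ℝ), kF c e u) - Real.log e with hφ
  have key : ∀ a b : ℝ, 0 < a → a ≤ b → φ b = φ a := by
    intro a b ha hab
    have := constant_of_has_deriv_right_zero (f := φ) (a := a) (b := b) ?_ ?_
    · exact this b ⟨hab, le_rfl⟩
    · intro y hy
      have hy0 : 0 < y := lt_of_lt_of_le ha hy.1
      exact ((kF_hasDeriv c y hc hy0).sub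
        (Real.hasDerivAt_log hy0.ne')).continuousAt.continuousWithinAt
    · intro y hy
      have hy0 : 0 < y := lt_of_lt_of_le ha hy.1
      have h := (kF_hasDeriv c y hc hy0).sub (Real.hasDerivAt_log hy0.ne')
      rw [one_div, sub_self] at h
      exact h.hasDerivWithinAt
  have h1 : φ c = -Real.log c := by
    have hz : ∀ u, kF c c u = 0 := by intro u; simp [kF]
    simp [hφ, hz]
  have hc1 : φ d = -Real.log c := by
    rcases le_total d c with h | h
    · rw [← h1]; exact (key d c hd h).symm
    · rw [key c d hc h]; exact h1
  have := sub_eq_iff_eq_add.1 hc1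
  rw [hφ] at hc1
  simp only [sub_eq_iff_eq_add] at hc1
  rw [hc1]; ring




/-- the limiting integrand -/
noncomputable def hI (a b : ℝ) (u : ℝ) : ℝ :=
  (((1 + u) ^ (-a) - (1 + u) ^ (-b)) / Real.log (1 + u) - (b - a) * Real.exp (-u)) / u

lemma hI_meas (a b : ℝ) : Measurable (hI a b) := by
  unfold hI
  have m1 : Measurable fun u : ℝ => 1 + u := measurable_const.add measurable_id
  exact ((((m1.pow_const _).sub (m1.pow_const _)).div (Real.measurable_log.comp m1)).sub
    (measurable_const.mul (Real.measurable_exp.comp measurable_neg))).div measurable_id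

/-- bounds for the difference quotient on (0,1] -/
lemma hI_bound_small (a b : ℝ) (ha : 0 < a) (hab : a < b) {u : ℝ} (hu : u ∈ Ioc (0:ℝ) 1) :
    |hI a b u| ≤ (b - a) * (b + 1) := by
  obtain ⟨hu0, hu1⟩ := hu
  have h1u : (0:ℝ) < 1 + u := by linarith
  have hL : 0 < Real.log (1 + u) := log_one_add_pos hu0
  have hLu : Real.log (1 + u) ≤ u := by
    have := Real.log_le_sub_one_of_pos h1u; linarith
  set L := Real.log (1 + u) with hLdef
  have hDub : (1 + u) ^ (-a) - (1 + u) ^ (-b) ≤ (b - a) * L := by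
    rw [rpow_eq_exp _ _ hu0, rpow_eq_exp _ _ hu0, ← hLdef]
    have h := abs_exp_sub_exp (p := a * L) (q := b * L) (m := a * L) le_rfl
      (by nlinarith : a * L ≤ b * L)
    have h2 : Real.exp (-(a*L)) ≤ 1 := Real.exp_le_one_iff.2 (by nlinarith)
    have h3 : |a*L - b*L| = (b - a) * L := by
      rw [show a*L - b*L = -((b-a)*L) by ring, abs_neg, abs_of_nonneg (by nlinarith)]
    calc Real.exp (-(a*L)) - Real.exp (-(b*L)) ≤ |Real.exp (-(a*L)) - Real.exp (-(b*L))| :=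
          le_abs_self _
      _ ≤ Real.exp (-(a*L)) * |a*L - b*L| := h
      _ = Real.exp (-(a*L)) * ((b-a)*L) := by rw [h3]
      _ ≤ 1 * ((b-a)*L) := by apply mul_le_mul_of_nonneg_right h2 (by nlinarith)
      _ = (b - a) * L := by ring
  have hDlb : (b - a) * L * (1 - b * L) ≤ (1 + u) ^ (-a) - (1 + u) ^ (-b) := by
    rw [rpow_eq_exp _ _ hu0, rpow_eq_exp _ _ hu0, ← hLdef]
    have key : Real.exp (-(a*L)) - Real.exp (-(b*L))
        = Real.exp (-(b*L)) * (Real.exp ((b-a)*L) - 1) := by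
      rw [mul_sub, ← Real.exp_add]; ring_nf
    rw [key]
    have h1 : (b-a)*L + 1 ≤ Real.exp ((b-a)*L) := Real.add_one_le_exp _
    have h2 : 1 - b*L ≤ Real.exp (-(b*L)) := by have := Real.add_one_le_exp (-(b*L)); linarith
    have h3 : (0:ℝ) ≤ (b-a)*L := by nlinarith
    nlinarith [Real.exp_pos (-(b*L)), Real.exp_pos ((b-a)*L)]
  have hexp : 1 - u ≤ Real.exp (-u) ∧ Real.exp (-u) ≤ 1 := by
    constructor
    · have := Real.add_one_le_exp (-u); linarith
    · exact Real.exp_le_one_iff.2 (by linarith)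
  rw [hI, abs_div, abs_of_pos hu0, div_le_iff₀ hu0, ← hLdef]
  rw [abs_le]
  have hDiv_ub : ((1 + u) ^ (-a) - (1 + u) ^ (-b)) / L ≤ (b - a) := by
    rw [div_le_iff₀ hL]; nlinarith
  have hDiv_lb : (b - a) * (1 - b * L) ≤ ((1 + u) ^ (-a) - (1 + u) ^ (-b)) / L := by
    rw [le_div_iff₀ hL]; nlinarith
  constructor
  · nlinarith [hexp.2, mul_nonneg (mul_nonneg (by linarith : (0:ℝ) ≤ b - a)
      (by linarith : (0:ℝ) ≤ b)) (by linarith : (0:ℝ) ≤ u - L),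
      mul_nonneg (by linarith : (0:ℝ) ≤ b - a)
        (by linarith [hexp.2] : (0:ℝ) ≤ 1 - Real.exp (-u)),
      mul_nonneg (by linarith : (0:ℝ) ≤ b - a) hu0.le]
  · nlinarith [hexp.1, mul_le_mul_of_nonneg_left
      (by linarith [hexp.1] : 1 - Real.exp (-u) ≤ u) (by linarith : (0:ℝ) ≤ b - a),
      mul_nonneg (mul_nonneg (by linarith : (0:ℝ) ≤ b - a) (by linarith : (0:ℝ) ≤ b)) hu0.le,
      hDiv_ub]

lemma hI_bound_large (a b : ℝ) (ha : 0 < a) (hab : a < b) {u : ℝ} (hu : u ∈ Ioi (1:ℝ)) :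
    |hI a b u| ≤ (2 / Real.log 2) * (1 + u) ^ (-(a+1)) + (b - a) * Real.exp (-(1 * u)) := by
  have hu1 : 1 < u := mem_Ioi.1 hu
  have hu0 : 0 < u := by linarith
  have h1u : (0:ℝ) < 1 + u := by linarith
  have hL : Real.log 2 ≤ Real.log (1 + u) := by
    apply Real.log_le_log (by norm_num) (by linarith)
  have hL2 : (0:ℝ) < Real.log 2 := Real.log_pos (by norm_num)
  have hL0 : 0 < Real.log (1 + u) := lt_of_lt_of_le hL2 hL
  have hnum : |(1 + u) ^ (-a) - (1 + u) ^ (-b)| ≤ (1 + u) ^ (-a) := by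
    have h1 : (0:ℝ) < (1+u) ^ (-b) := Real.rpow_pos_of_pos h1u _
    have h2 : (1+u) ^ (-b) ≤ (1+u) ^ (-a) :=
      Real.rpow_le_rpow_of_exponent_le (by linarith) (by linarith)
    rw [abs_of_nonneg (by linarith)]; linarith
  have key : |hI a b u| ≤ (1 + u) ^ (-a) / (Real.log 2 * u) + (b - a) * Real.exp (-u) / u := by
    rw [hI, abs_div, abs_of_pos hu0, div_le_iff₀ hu0]
    have h2 : |((1 + u) ^ (-a) - (1 + u) ^ (-b)) / Real.log (1 + u) - (b - a) * Real.exp (-u)|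
        ≤ (1 + u) ^ (-a) / Real.log 2 + (b - a) * Real.exp (-u) := by
      refine (abs_sub _ _).trans ?_
      gcongr
      · rw [abs_div, abs_of_pos hL0, div_le_div_iff₀ hL0 hL2]
        calc |(1 + u) ^ (-a) - (1 + u) ^ (-b)| * Real.log 2
            ≤ (1+u)^(-a) * Real.log (1+u) := by
              apply mul_le_mul hnum hL hL2.le (Real.rpow_nonneg h1u.le _)
          _ = (1 + u) ^ (-a) * Real.log (1 + u) := rfl
      · rw [abs_mul, abs_of_nonneg (by linarith), abs_of_nonneg (Real.exp_pos _).le]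
    calc |((1 + u) ^ (-a) - (1 + u) ^ (-b)) / Real.log (1 + u) - (b - a) * Real.exp (-u)|
        ≤ (1 + u) ^ (-a) / Real.log 2 + (b - a) * Real.exp (-u) := h2
      _ = ((1 + u) ^ (-a) / (Real.log 2 * u) + (b - a) * Real.exp (-u) / u) * u := by
          field_simp
  refine key.trans ?_
  gcongr
  · -- (1+u)^(-a)/(log2 * u) ≤ 2/log2 * (1+u)^(-(a+1))
    rw [div_le_iff₀ (by positivity)]
    have e1 : (1+u) ^ (-(a+1)) * (1+u) = (1+u) ^ (-a) := by
      rw [show (-(a+1):ℝ) = -a + -1 by ring, Real.rpow_add h1u, Real.rpow_neg_one]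
      field_simp
    have h3 : (1+u) ≤ 2 * u := by linarith
    calc (1+u) ^ (-a) = (1+u) ^ (-(a+1)) * (1+u) := e1.symm
      _ ≤ (1+u) ^ (-(a+1)) * (2*u) := by
          apply mul_le_mul_of_nonneg_left h3 (Real.rpow_nonneg h1u.le _)
      _ = 2 / Real.log 2 * (1+u) ^ (-(a+1)) * (Real.log 2 * u) := by
          field_simp
  · rw [one_mul, div_le_iff₀ hu0]
    nlinarith [mul_nonneg (mul_nonneg (by linarith : (0:ℝ) ≤ b - a)
      (Real.exp_pos (-u)).le) (by linarith : (0:ℝ) ≤ u - 1)]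

lemma hI_integrable (a b : ℝ) (ha : 0 < a) (hab : a < b) :
    IntegrableOn (hI a b) (Ioi 0) := by
  have hsplit : (Ioi (0:ℝ)) = Ioc 0 1 ∪ Ioi 1 := (Ioc_union_Ioi_eq_Ioi (by norm_num)).symm
  rw [hsplit]
  apply IntegrableOn.union
  · apply Measure.integrableOn_of_bounded (M := (b - a) * (b + 1))
    · exact ((measure_Ioc_lt_top)).ne
    · exact (hI_meas a b).aestronglyMeasurable
    · filter_upwards [ae_restrict_mem measurableSet_Ioc] with u hu
      rw [Real.norm_eq_abs]; exact hI_bound_small a b ha hab hu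
  · have hg : IntegrableOn
        (fun u => (2 / Real.log 2) * (1 + u) ^ (-(a+1)) + (b - a) * Real.exp (-(1 * u)))
        (Ioi 1) := by
      apply Integrable.add
      · exact (((integrableOn_pow a ha).mono_set (Ioi_subset_Ioi (by norm_num))).const_mul _)
      · have : IntegrableOn (fun u : ℝ => Real.exp (-(1 * u))) (Ioi 1) := by
          simpa using exp_neg_integrableOn_Ioi (1:ℝ) one_pos
        exact this.const_mul _
    refine Integrable.mono' hg (hI_meas a b).aestronglyMeasurable ?_
    filter_upwards [ae_restrict_mem measurableSet_Ioi] with u hu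
    rw [Real.norm_eq_abs]; exact hI_bound_large a b ha hab hu




/-- correcting term -/
noncomputable def wI (n : ℕ) (u : ℝ) : ℝ :=
  (Real.exp (-((n:ℝ) * u)) - Real.exp (-u) * (1 + u) ^ (-((n:ℝ) + 1))) / u

lemma wI_meas (n : ℕ) : Measurable (wI n) := by
  unfold wI
  have m1 : Measurable fun u : ℝ => 1 + u := measurable_const.add measurable_id
  exact (((Real.measurable_exp.comp (measurable_const.mul measurable_id).neg).sub
    ((Real.measurable_exp.comp measurable_neg).mul (m1.pow_const _))).div measurable_id)

lemma wI_bound (n : ℕ) (hn : 1 ≤ n) {u : ℝ} (hu : u ∈ Ioi (0:ℝ)) :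
    |wI n u| ≤ (1 + u) ^ (-(n:ℝ)) * (2 + n * u) := by
  have hu0 : 0 < u := mem_Ioi.1 hu
  have h1u : (0:ℝ) < 1 + u := by linarith
  have hL : 0 < Real.log (1 + u) := log_one_add_pos hu0
  have hLu : Real.log (1 + u) ≤ u := by
    have := Real.log_le_sub_one_of_pos h1u; linarith
  have hLlb : u / (1 + u) ≤ Real.log (1 + u) := by
    have := Real.one_sub_inv_le_log_of_pos h1u
    have : 1 - (1+u)⁻¹ = u / (1+u) := by field_simp; ring
    linarith [Real.one_sub_inv_le_log_of_pos h1u, this.symm.le]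
  set L := Real.log (1 + u) with hLdef
  have key : Real.exp (-u) * (1 + u) ^ (-((n:ℝ) + 1)) = Real.exp (-(u + ((n:ℝ)+1) * L)) := by
    rw [rpow_eq_exp _ _ hu0, ← Real.exp_add, ← hLdef]
    ring_nf
  have hm1 : (n:ℝ) * L ≤ (n:ℝ) * u := by
    apply mul_le_mul_of_nonneg_left hLu (by positivity)
  have hm2 : (n:ℝ) * L ≤ u + ((n:ℝ)+1) * L := by nlinarith
  have habs := abs_exp_sub_exp hm1 hm2
  have hdiff : |(n:ℝ) * u - (u + ((n:ℝ)+1) * L)| ≤ 2*u + n*u^2 := by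
    rw [abs_le]
    constructor
    · -- -(2u + nu²) ≤ nu - u - (n+1)L ⟸ (n+1)L ≤ nu + u + ... easy from L ≤ u
      nlinarith [mul_le_mul_of_nonneg_left hLu (by positivity : (0:ℝ) ≤ (n:ℝ)+1)]
    · -- nu - u - (n+1)L ≤ 2u + nu² ⟸ n(u - L) ≤ nu²
      have h1 : u - L ≤ u^2 := by
        have h2 : u - u/(1+u) = u^2/(1+u) := by field_simp; ring
        have h3 : u^2/(1+u) ≤ u^2 := by
          apply _root_.div_le_self (by positivity) (by linarith)
        linarith
      nlinarith [mul_le_mul_of_nonneg_left h1 (by positivity : (0:ℝ) ≤ (n:ℝ))]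
  have hexpm : Real.exp (-((n:ℝ) * L)) = (1 + u) ^ (-(n:ℝ)) := (rpow_eq_exp u n hu0).symm
  rw [wI, key, abs_div, abs_of_pos hu0, div_le_iff₀ hu0]
  calc |Real.exp (-((n:ℝ)*u)) - Real.exp (-(u + ((n:ℝ)+1)*L))|
      ≤ Real.exp (-((n:ℝ)*L)) * |(n:ℝ)*u - (u + ((n:ℝ)+1)*L)| := habs
    _ ≤ Real.exp (-((n:ℝ)*L)) * (2*u + n*u^2) := by
        apply mul_le_mul_of_nonneg_left hdiff (Real.exp_pos _).le
    _ = (1 + u) ^ (-(n:ℝ)) * (2 + n*u) * u := by rw [hexpm]; ring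

lemma wI_dom_integrable (n : ℕ) (hn : 3 ≤ n) :
    IntegrableOn (fun u : ℝ => (1 + u) ^ (-(n:ℝ)) * (2 + n * u)) (Ioi 0) := by
  have h2 : (0:ℝ) < (n:ℝ) - 1 := by
    have : (3:ℝ) ≤ (n:ℝ) := by exact_mod_cast hn
    linarith
  have h3 : (0:ℝ) < (n:ℝ) - 2 := by
    have : (3:ℝ) ≤ (n:ℝ) := by exact_mod_cast hn
    linarith
  have e1 : ∀ u ∈ Ioi (0:ℝ), (1 + u) ^ (-(n:ℝ)) * (2 + n * u)
      = 2 * (1 + u) ^ (-(((n:ℝ)-1) + 1)) +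
        (n:ℝ) * ((1 + u) ^ (-(((n:ℝ)-2) + 1)) - (1 + u) ^ (-(((n:ℝ)-1) + 1))) := by
    intro u hu
    have hu0 : 0 < u := mem_Ioi.1 hu
    have h1u : (0:ℝ) < 1 + u := by linarith
    have key : (1 + u) ^ (-(((n:ℝ)-2) + 1)) = (1 + u) ^ (-(n:ℝ)) * (1 + u) := by
      rw [show (-(((n:ℝ)-2) + 1) : ℝ) = -(n:ℝ) + 1 by ring, Real.rpow_add h1u, Real.rpow_one]
    have e2 : (-(((n:ℝ)-1) + 1) : ℝ) = -(n:ℝ) := by ring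
    rw [key, e2]
    ring
  rw [integrableOn_congr_fun e1 measurableSet_Ioi]
  exact ((integrableOn_pow _ h2).const_mul 2).add
    (((integrableOn_pow _ h3).sub (integrableOn_pow _ h2)).const_mul _)

lemma wI_dom_integral (n : ℕ) (hn : 3 ≤ n) :
    ∫ u in Ioi (0:ℝ), (1 + u) ^ (-(n:ℝ)) * (2 + n * u) ≤ 4 / ((n:ℝ) - 2) := by
  have h2 : (0:ℝ) < (n:ℝ) - 1 := by
    have : (3:ℝ) ≤ (n:ℝ) := by exact_mod_cast hn
    linarith
  have h3 : (0:ℝ) < (n:ℝ) - 2 := by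
    have : (3:ℝ) ≤ (n:ℝ) := by exact_mod_cast hn
    linarith
  have e1 : ∀ u ∈ Ioi (0:ℝ), (1 + u) ^ (-(n:ℝ)) * (2 + n * u)
      = 2 * (1 + u) ^ (-(((n:ℝ)-1) + 1)) +
        (n:ℝ) * ((1 + u) ^ (-(((n:ℝ)-2) + 1)) - (1 + u) ^ (-(((n:ℝ)-1) + 1))) := by
    intro u hu
    have hu0 : 0 < u := mem_Ioi.1 hu
    have h1u : (0:ℝ) < 1 + u := by linarith
    have key : (1 + u) ^ (-(((n:ℝ)-2) + 1)) = (1 + u) ^ (-(n:ℝ)) * (1 + u) := by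
      rw [show (-(((n:ℝ)-2) + 1) : ℝ) = -(n:ℝ) + 1 by ring, Real.rpow_add h1u, Real.rpow_one]
    have e2 : (-(((n:ℝ)-1) + 1) : ℝ) = -(n:ℝ) := by ring
    rw [key, e2]
    ring
  rw [setIntegral_congr_fun measurableSet_Ioi e1]
  have I1 : Integrable (fun u : ℝ => 2 * (1 + u) ^ (-(((n:ℝ)-1) + 1)))
      (volume.restrict (Ioi 0)) := by
    simpa using ((integrableOn_pow _ h2).const_mul 2)
  have I2 : Integrable
      (fun u : ℝ => (n:ℝ) * ((1 + u) ^ (-(((n:ℝ)-2) + 1)) - (1 + u) ^ (-(((n:ℝ)-1) + 1))))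
      (volume.restrict (Ioi 0)) := by
    simpa using (((integrableOn_pow _ h3).sub (integrableOn_pow _ h2)).const_mul (n:ℝ))
  rw [integral_add I1 I2, integral_const_mul, integral_const_mul,
    integral_sub (integrableOn_pow _ h3) (integrableOn_pow _ h2),
    integral_pow _ h2, integral_pow _ h3]
  have hn3 : (3:ℝ) ≤ (n:ℝ) := by exact_mod_cast hn
  have key : 2 * (1/((n:ℝ)-1)) ≤ 2 / ((n:ℝ)-2) := by
    rw [mul_one_div, div_le_div_iff₀ h2 h3]; nlinarith
  have key2 : (n:ℝ) * (1/((n:ℝ)-2) - 1/((n:ℝ)-1)) ≤ 2 / ((n:ℝ)-2) := by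
    have e : 1/((n:ℝ)-2) - 1/((n:ℝ)-1) = 1/(((n:ℝ)-2)*((n:ℝ)-1)) := by
      field_simp
      ring
    rw [e, mul_one_div, div_le_div_iff₀ (by positivity) h3]
    nlinarith
  have e4 : (4:ℝ)/((n:ℝ)-2) = 2/((n:ℝ)-2) + 2/((n:ℝ)-2) := by ring
  linarith

lemma wI_integrable (n : ℕ) (hn : 3 ≤ n) : IntegrableOn (wI n) (Ioi 0) := by
  refine Integrable.mono' (wI_dom_integrable n hn) (wI_meas n).aestronglyMeasurable ?_
  filter_upwards [ae_restrict_mem measurableSet_Ioi] with u hu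
  rw [Real.norm_eq_abs]
  exact wI_bound n (by omega) hu

lemma tendsto_wI : Tendsto (fun n => ∫ u in Ioi (0:ℝ), wI n u) atTop (𝓝 0) := by
  have hb : ∀ᶠ n in atTop, |∫ u in Ioi (0:ℝ), wI n u| ≤ 4 / ((n:ℝ) - 2) := by
    filter_upwards [eventually_ge_atTop 3] with n hn
    calc |∫ u in Ioi (0:ℝ), wI n u| ≤ ∫ u in Ioi (0:ℝ), (1 + u) ^ (-(n:ℝ)) * (2 + n * u) := by
          rw [← Real.norm_eq_abs]
          apply norm_integral_le_of_norm_le (wI_dom_integrable n hn)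
          filter_upwards [ae_restrict_mem measurableSet_Ioi] with u hu
          rw [Real.norm_eq_abs]
          exact wI_bound n (by omega) hu
      _ ≤ 4 / ((n:ℝ) - 2) := wI_dom_integral n hn
  have hg : Tendsto (fun n : ℕ => 4 / ((n:ℝ) - 2)) atTop (𝓝 0) := by
    apply Tendsto.div_atTop (tendsto_const_nhds)
    have := tendsto_atTop_add_const_right atTop (-2 : ℝ) tendsto_natCast_atTop_atTop
    simpa [sub_eq_add_neg] using this
  exact squeeze_zero_norm' (by filter_upwards [hb] with n hn; rwa [Real.norm_eq_abs]) hg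




lemma rpow_nat_inv (u : ℝ) (hu : 0 < u) (m : ℕ) :
    (1 + u) ^ (-(m:ℝ)) = ((1 + u)⁻¹) ^ m := by
  have h1u : (0:ℝ) < 1 + u := by linarith
  rw [Real.rpow_neg h1u.le, Real.rpow_natCast, inv_pow]

lemma T_meas (a b : ℝ) (n : ℕ) :
    Measurable (fun u : ℝ => (1 + u) ^ (-((n:ℝ) + 1)) * hI a b u) :=
  ((measurable_const.add measurable_id).pow_const _).mul (hI_meas a b)

lemma T_bound (a b : ℝ) (n : ℕ) {u : ℝ} (hu : u ∈ Ioi (0:ℝ)) :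
    ‖(1 + u) ^ (-((n:ℝ) + 1)) * hI a b u‖ ≤ |hI a b u| := by
  have hu0 : 0 < u := mem_Ioi.1 hu
  have h1u : (1:ℝ) ≤ 1 + u := by linarith
  rw [Real.norm_eq_abs, abs_mul]
  have h1 : |(1 + u) ^ (-((n:ℝ) + 1))| ≤ 1 := by
    rw [abs_of_nonneg (Real.rpow_nonneg (by linarith) _)]
    exact Real.rpow_le_one_of_one_le_of_nonpos h1u
      (by have := Nat.cast_nonneg (α := ℝ) n; linarith)
  nlinarith [abs_nonneg (hI a b u), abs_nonneg ((1 + u) ^ (-((n:ℝ) + 1)))]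

lemma T_integrable (a b : ℝ) (ha : 0 < a) (hab : a < b) (n : ℕ) :
    IntegrableOn (fun u : ℝ => (1 + u) ^ (-((n:ℝ) + 1)) * hI a b u) (Ioi 0) := by
  refine Integrable.mono' (hI_integrable a b ha hab).abs
    (T_meas a b n).aestronglyMeasurable ?_
  filter_upwards [ae_restrict_mem measurableSet_Ioi] with u hu
  exact T_bound a b n hu

lemma tendsto_T (a b : ℝ) (ha : 0 < a) (hab : a < b) :
    Tendsto (fun n : ℕ => ∫ u in Ioi (0:ℝ), (1 + u) ^ (-((n:ℝ) + 1)) * hI a b u)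
      atTop (𝓝 0) := by
  have H := tendsto_integral_of_dominated_convergence
    (F := fun (n : ℕ) (u : ℝ) => (1 + u) ^ (-((n:ℝ) + 1)) * hI a b u)
    (f := fun _ => (0:ℝ)) (bound := fun u => |hI a b u|)
    (fun n => (T_meas a b n).aestronglyMeasurable) (hI_integrable a b ha hab).abs
    (fun n => by
      filter_upwards [ae_restrict_mem measurableSet_Ioi] with u hu
      exact T_bound a b n hu)
    (by
      filter_upwards [ae_restrict_mem measurableSet_Ioi] with u hu
      have hu0 : 0 < u := mem_Ioi.1 hu
      have he : ∀ n : ℕ, (1 + u) ^ (-((n:ℝ) + 1)) = ((1 + u)⁻¹) ^ (n + 1) := by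
        intro n
        rw [show (-((n:ℝ)+1) : ℝ) = -(((n+1:ℕ)):ℝ) by push_cast; ring, rpow_nat_inv u hu0]
      simp only [he]
      have hr0 : (0:ℝ) ≤ (1+u)⁻¹ := by positivity
      have hr1 : (1+u)⁻¹ < 1 := by
        rw [inv_lt_one_iff₀]; right; linarith
      have := ((tendsto_pow_atTop_nhds_zero_of_lt_one hr0 hr1).comp
        (tendsto_add_atTop_nat 1)).mul_const (hI a b u)
      simpa using this)
  simpa using H

lemma pointwise_id (a b : ℝ) (ha : 0 < a) (hab : a < b) (n : ℕ) {u : ℝ}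
    (hu : u ∈ Ioi (0:ℝ)) :
    (a - b) * eF (n:ℝ) u + ∑ k ∈ Finset.range (n+1), kF (a + k) (b + k) u
    = hI a b u + (-((1 + u) ^ (-((n:ℝ)+1)) * hI a b u) + (b - a) * wI n u) := by
  have hu0 : 0 < u := mem_Ioi.1 hu
  have h1u : (0:ℝ) < 1 + u := by linarith
  have hL : 0 < Real.log (1 + u) := log_one_add_pos hu0
  have hterm : ∀ k ∈ Finset.range (n+1), kF (a + k) (b + k) u
      = ((1 + u) ^ (-a) - (1 + u) ^ (-b)) * ((1 + u)⁻¹) ^ k / ((1 + u) * Real.log (1 + u)) := by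
    intro k _
    rw [kF]
    have e1 : (1 + u) ^ (-(a + (k:ℝ))) = (1 + u) ^ (-a) * ((1 + u)⁻¹) ^ k := by
      rw [show (-(a + (k:ℝ)) : ℝ) = -a + -(k:ℝ) by ring, Real.rpow_add h1u,
        rpow_nat_inv u hu0]
    have e2 : (1 + u) ^ (-(b + (k:ℝ))) = (1 + u) ^ (-b) * ((1 + u)⁻¹) ^ k := by
      rw [show (-(b + (k:ℝ)) : ℝ) = -b + -(k:ℝ) by ring, Real.rpow_add h1u,
        rpow_nat_inv u hu0]
    rw [e1, e2]
    ring
  rw [Finset.sum_congr rfl hterm, ← Finset.sum_div, ← Finset.mul_sum]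
  have hr1 : ((1 + u)⁻¹ : ℝ) ≠ 1 := by
    intro h
    have : (1:ℝ) + u = 1 := by
      field_simp at h
      linarith
    linarith
  rw [geom_sum_eq hr1]
  have hR : ((1 + u)⁻¹) ^ (n+1) = (1 + u) ^ (-((n:ℝ)+1)) := by
    rw [show (-((n:ℝ)+1) : ℝ) = -(((n+1:ℕ)):ℝ) by push_cast; ring, rpow_nat_inv u hu0]
  rw [eF, hI, wI, ← hR]
  have hrm1 : ((1 + u)⁻¹ : ℝ) - 1 = -(u / (1 + u)) := by field_simp; ring
  rw [hrm1]
  field_simp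
  ring

lemma log_GammaSeq (s : ℝ) (hs : 0 < s) (n : ℕ) (hn : 1 ≤ n) :
    Real.log (Real.GammaSeq s n)
      = s * Real.log n + Real.log (n.factorial) - ∑ j ∈ Finset.range (n+1), Real.log (s + j) := by
  have hn0 : (0:ℝ) < (n:ℝ) := by exact_mod_cast hn
  have hfac : (0:ℝ) < (n.factorial : ℝ) := by exact_mod_cast Nat.factorial_pos n
  have hprod : ∀ j ∈ Finset.range (n+1), (s + (j:ℝ)) ≠ 0 := by
    intro j _
    have : (0:ℝ) ≤ (j:ℝ) := Nat.cast_nonneg j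
    positivity
  have hprodpos : (0:ℝ) < ∏ j ∈ Finset.range (n+1), (s + (j:ℝ)) := by
    apply Finset.prod_pos
    intro j _
    have : (0:ℝ) ≤ (j:ℝ) := Nat.cast_nonneg j
    positivity
  rw [Real.GammaSeq, Real.log_div (by positivity) hprodpos.ne', Real.log_mul
    (by positivity) hfac.ne', Real.log_rpow hn0, Real.log_prod hprod]

lemma Sn_eq (a b : ℝ) (ha : 0 < a) (hab : a < b) (n : ℕ) (hn : 1 ≤ n) :
    Real.log (Real.GammaSeq a n) - Real.log (Real.GammaSeq b n)
      = (a - b) * Real.log n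
        + ∑ k ∈ Finset.range (n+1), (Real.log (b + k) - Real.log (a + k)) := by
  have hsplit : ∑ k ∈ Finset.range (n+1), (Real.log (b + k) - Real.log (a + k))
      = (∑ k ∈ Finset.range (n+1), Real.log (b + k))
        - ∑ k ∈ Finset.range (n+1), Real.log (a + k) := Finset.sum_sub_distrib _ _
  rw [log_GammaSeq a ha n hn, log_GammaSeq b (by linarith) n hn, hsplit]
  set Sa := ∑ k ∈ Finset.range (n+1), Real.log (a + (k:ℝ)) with hSa
  set Sb := ∑ k ∈ Finset.range (n+1), Real.log (b + (k:ℝ)) with hSb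
  ring

lemma Sn_integral (a b : ℝ) (ha : 0 < a) (hab : a < b) (n : ℕ) (hn : 1 ≤ n) :
    (a - b) * Real.log n
        + ∑ k ∈ Finset.range (n+1), (Real.log (b + k) - Real.log (a + k))
      = ∫ u in Ioi (0:ℝ),
          ((a - b) * eF (n:ℝ) u + ∑ k ∈ Finset.range (n+1), kF (a + k) (b + k) u) := by
  have hn0 : (0:ℝ) < (n:ℝ) := by exact_mod_cast hn
  have hke : ∀ k ∈ Finset.range (n+1), Real.log (b + k) - Real.log (a + k)
      = ∫ u in Ioi (0:ℝ), kF (a + k) (b + k) u := by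
    intro k _
    have hk : (0:ℝ) ≤ (k:ℝ) := Nat.cast_nonneg k
    rw [kF_integral (a + k) (b + k) (by linarith) (by linarith)]
  have hki : ∀ k ∈ Finset.range (n+1), IntegrableOn (kF (a + k) (b + k)) (Ioi 0) := by
    intro k _
    have hk : (0:ℝ) ≤ (k:ℝ) := Nat.cast_nonneg k
    exact kF_integrable _ _ (by linarith) (by linarith)
  rw [Finset.sum_congr rfl hke, ← integral_finset_sum _ hki, ← eF_integral (n:ℝ) hn0,
    ← integral_const_mul, ← integral_add ((eF_integrable (n:ℝ) hn0).const_mul _)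
      (integrable_finset_sum _ hki)]

/-- The Malmsten-type formula. -/
lemma main (a b : ℝ) (ha : 0 < a) (hab : a < b) :
    Real.log (Real.Gamma a) - Real.log (Real.Gamma b) = ∫ u in Ioi (0:ℝ), hI a b u := by
  have hGa : Tendsto (fun n => Real.log (Real.GammaSeq a n)) atTop
      (𝓝 (Real.log (Real.Gamma a))) :=
    ((Real.continuousAt_log (Real.Gamma_pos_of_pos ha).ne').tendsto).comp
      (Real.GammaSeq_tendsto_Gamma a)
  have hGb : Tendsto (fun n => Real.log (Real.GammaSeq b n)) atTop
      (𝓝 (Real.log (Real.Gamma b))) :=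
    ((Real.continuousAt_log (Real.Gamma_pos_of_pos (by linarith)).ne').tendsto).comp
      (Real.GammaSeq_tendsto_Gamma b)
  have hS := hGa.sub hGb
  -- the other expression for the sequence
  have key : ∀ᶠ n : ℕ in atTop,
      Real.log (Real.GammaSeq a n) - Real.log (Real.GammaSeq b n)
      = (∫ u in Ioi (0:ℝ), hI a b u)
        + (-(∫ u in Ioi (0:ℝ), (1 + u) ^ (-((n:ℝ)+1)) * hI a b u)
           + (b - a) * ∫ u in Ioi (0:ℝ), wI n u) := by
    filter_upwards [eventually_ge_atTop 3] with n hn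
    rw [Sn_eq a b ha hab n (by omega), Sn_integral a b ha hab n (by omega)]
    rw [setIntegral_congr_fun measurableSet_Ioi
      (fun u hu => pointwise_id a b ha hab n hu)]
    have I2a : Integrable (fun u : ℝ => -((1 + u) ^ (-((n:ℝ)+1)) * hI a b u))
        (volume.restrict (Ioi 0)) := (T_integrable a b ha hab n).neg
    have I2b : Integrable (fun u : ℝ => (b - a) * wI n u) (volume.restrict (Ioi 0)) :=
      (wI_integrable n hn).const_mul (b - a)
    have I2 : Integrable
        (fun u : ℝ => -((1 + u) ^ (-((n:ℝ)+1)) * hI a b u) + (b - a) * wI n u)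
        (volume.restrict (Ioi 0)) := I2a.add I2b
    rw [integral_add (hI_integrable a b ha hab) I2,
      integral_add I2a I2b, integral_neg, integral_const_mul]
  have hlim2 : Tendsto (fun n : ℕ =>
      (∫ u in Ioi (0:ℝ), hI a b u)
        + (-(∫ u in Ioi (0:ℝ), (1 + u) ^ (-((n:ℝ)+1)) * hI a b u)
           + (b - a) * ∫ u in Ioi (0:ℝ), wI n u)) atTop
      (𝓝 ((∫ u in Ioi (0:ℝ), hI a b u) + (-0 + (b - a) * 0))) := by
    exact tendsto_const_nhds.add (((tendsto_T a b ha hab).neg).add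
      (tendsto_wI.const_mul _))
  rw [show ((∫ u in Ioi (0:ℝ), hI a b u) + (-0 + (b - a) * 0))
      = ∫ u in Ioi (0:ℝ), hI a b u by ring] at hlim2
  exact tendsto_nhds_unique (hS.congr' key) hlim2


end FeauxAux


theorem feaux_diff (x : ℝ) (hx : 0 < x) :
    Real.log (Real.Gamma (x + 1 / 2)) - Real.log (Real.Gamma (x + 2)) =
      ∫ t in Set.Ioi (0 : ℝ),
        (((1 + t) ^ (3 / 2 : ℝ) - 1) / ((1 + t) ^ (x + 2 : ℝ) * Real.log (1 + t)) -
          3 / 2 * Real.exp (-t)) / t := by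
  rw [FeauxAux.main (x + 1/2) (x + 2) (by linarith) (by linarith)]
  apply setIntegral_congr_fun measurableSet_Ioi
  intro t ht
  have ht0 : 0 < t := mem_Ioi.1 ht
  have h1t : (0:ℝ) < 1 + t := by linarith
  have hL : 0 < Real.log (1 + t) := FeauxAux.log_one_add_pos ht0
  rw [FeauxAux.hI]
  have key : ((1 + t) ^ (3 / 2 : ℝ) - 1) / ((1 + t) ^ (x + 2 : ℝ) * Real.log (1 + t))
      = ((1 + t) ^ (-(x + 1/2)) - (1 + t) ^ (-(x + 2))) / Real.log (1 + t) := by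
    have e1 : (1 + t) ^ (-(x + 1/2)) = (1 + t) ^ (3 / 2 : ℝ) / (1 + t) ^ (x + 2 : ℝ) := by
      rw [← Real.rpow_sub h1t]
      norm_num
      ring_nf
    have e2 : (1 + t) ^ (-(x + 2)) = 1 / (1 + t) ^ (x + 2 : ℝ) := by
      rw [Real.rpow_neg h1t.le]
      rw [one_div]
    rw [e1, e2]
    have hP : (1 + t) ^ (x + 2 : ℝ) ≠ 0 := (Real.rpow_pos_of_pos h1t _).ne'
    field_simp
  show _ = (((1 + t) ^ (3 / 2 : ℝ) - 1) / ((1 + t) ^ (x + 2 : ℝ) * Real.log (1 + t)) -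
      3 / 2 * Real.exp (-t)) / t
  rw [key]
  norm_num
end

section
/- For every positive integer n, the n-th Catalan number satisfies C_n = (2^{2n}/√π) * exp( ∫₀^∞ [ ((1+t)^{3/2} - 1)/((1+t)^{n+2} log(1+t)) - (3/2) e^{-t} ] (dt/t) ). -/
open Real MeasureTheory Set Filter Topology intervalIntegral


private lemma exp_int_aux {C : ℝ} (hC : 0 < C) (p q : ℝ) :
    ∫ s in p..q, Real.exp (-(s * C)) = (Real.exp (-(p * C)) - Real.exp (-(q * C))) / C := by
  have h : ∀ x ∈ uIcc p q, HasDerivAt (fun s => -Real.exp (-(s * C)) / C)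
      (Real.exp (-(x * C))) x := by
    intro x _
    have h1 : HasDerivAt (fun s : ℝ => -(s * C)) (-C) x := by
      exact (hasDerivAt_mul_const C).neg
    have h2 := (h1.exp).neg.div_const C
    refine h2.congr_deriv ?_
    field_simp
  rw [intervalIntegral.integral_eq_sub_of_hasDerivAt h
    ((Continuous.intervalIntegrable (by continuity) _ _))]
  field_simp
  ring

private lemma kernel_fubini (c : ℝ → ℝ) (hc : Measurable c)
    (hcpos : ∀ t ∈ Ioi (0:ℝ), 0 < c t)
    {p q : ℝ} (hp : 0 < p) (hpq : p ≤ q)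
    (hint : IntegrableOn (fun t => Real.exp (-(p * c t))) (Ioi 0)) :
    IntegrableOn (fun t => (Real.exp (-(p * c t)) - Real.exp (-(q * c t))) / c t) (Ioi 0) ∧
    ∫ t in Ioi 0, (Real.exp (-(p * c t)) - Real.exp (-(q * c t))) / c t
      = ∫ s in Ioc p q, (∫ t in Ioi (0:ℝ), Real.exp (-(s * c t))) := by
  set μ := volume.restrict (Ioi (0:ℝ)) with hμ
  set ν := volume.restrict (Ioc p q) with hν
  set K : ℝ × ℝ → ℝ := fun z => Real.exp (-(z.2 * c z.1)) with hK
  have hKm : AEStronglyMeasurable K (μ.prod ν) := by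
    apply Measurable.aestronglyMeasurable
    exact (measurable_snd.mul (hc.comp measurable_fst)).neg.exp
  have hKi : Integrable K (μ.prod ν) := by
    rw [integrable_prod_iff hKm]
    constructor
    · refine ae_of_all _ fun t => ?_
      exact (Continuous.integrableOn_Ioc (by continuity))
    · have hbound : ∀ t ∈ Ioi (0:ℝ),
          ‖∫ s, ‖K (t, s)‖ ∂ν‖ ≤ (q - p) * Real.exp (-(p * c t)) := by
        intro t ht
        have hct := hcpos t ht
        have h0 : ∀ s, ‖K (t, s)‖ = Real.exp (-(s * c t)) := fun s => by
          simp [hK, abs_of_pos (Real.exp_pos _)]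
        simp_rw [h0]
        have h2 : ∫ s in Ioc p q, Real.exp (-(s * c t))
            ≤ ∫ s in Ioc p q, Real.exp (-(p * c t)) := by
          apply setIntegral_mono_on (Continuous.integrableOn_Ioc (by continuity))
            (integrableOn_const measure_Ioc_lt_top.ne) measurableSet_Ioc
          intro s hs
          exact Real.exp_le_exp.2 (by nlinarith [hs.1, hct])
        have h3 : ∫ s in Ioc p q, (Real.exp (-(p * c t)) : ℝ)
            = (q - p) * Real.exp (-(p * c t)) := by
          rw [setIntegral_const, Real.volume_real_Ioc, smul_eq_mul,
            max_eq_left (by linarith)]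
        have h4 : (0:ℝ) ≤ ∫ s in Ioc p q, Real.exp (-(s * c t)) :=
          setIntegral_nonneg measurableSet_Ioc fun s _ => (Real.exp_pos _).le
        rw [Real.norm_eq_abs, abs_of_nonneg h4]
        linarith
      refine Integrable.mono' (hint.const_mul (q - p)) ?_ ?_
      · exact (hKm.norm.integral_prod_right')
      · exact (ae_restrict_mem measurableSet_Ioi).mono fun t ht => by
          simpa [mul_comm] using hbound t ht
  have hswap : ∫ t, (∫ s, K (t, s) ∂ν) ∂μ = ∫ s, (∫ t, K (t, s) ∂μ) ∂ν :=
    MeasureTheory.integral_integral_swap (f := fun t s => K (t, s)) hKi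
  have hinner : ∀ t ∈ Ioi (0:ℝ), (∫ s, K (t, s) ∂ν)
      = (Real.exp (-(p * c t)) - Real.exp (-(q * c t))) / c t := by
    intro t ht
    have hct := hcpos t ht
    have : (∫ s, K (t, s) ∂ν) = ∫ s in p..q, Real.exp (-(s * c t)) := by
      rw [intervalIntegral.integral_of_le hpq]
    rw [this, exp_int_aux hct]
  constructor
  · refine (hKi.integral_prod_left).congr ?_
    exact (ae_restrict_mem measurableSet_Ioi).mono fun t ht => (hinner t ht)
  · rw [← setIntegral_congr_fun measurableSet_Ioi hinner, hswap]

private lemma exp_inner {s : ℝ} (hs : 0 < s) :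
    ∫ t in Ioi (0:ℝ), Real.exp (-(s * t)) = 1 / s := by
  have := integral_comp_mul_left_Ioi (fun x => Real.exp (-x)) 0 hs
  simp only [mul_zero] at this
  rw [this, integral_exp_neg_Ioi_zero]
  simp [one_div]

private lemma frullani_s3 {p q : ℝ} (hp : 0 < p) (hpq : p ≤ q) :
    IntegrableOn (fun t => (Real.exp (-(p * t)) - Real.exp (-(q * t))) / t) (Ioi 0) ∧
    ∫ t in Ioi 0, (Real.exp (-(p * t)) - Real.exp (-(q * t))) / t = Real.log (q / p) := by
  have hint : IntegrableOn (fun t => Real.exp (-(p * t))) (Ioi 0) := by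
    simpa [neg_mul] using exp_neg_integrableOn_Ioi 0 hp
  obtain ⟨h1, h2⟩ := kernel_fubini id measurable_id (fun t ht => ht) hp hpq hint
  simp only [id] at h1 h2
  refine ⟨h1, ?_⟩
  rw [h2, setIntegral_congr_fun measurableSet_Ioc
    (fun s hs => exp_inner (lt_of_lt_of_le hp hs.1.le))]
  rw [← intervalIntegral.integral_of_le hpq, integral_one_div]
  intro h
  rcases h with h
  have := h.1
  rw [inf_le_iff] at this
  rcases this with h' | h' <;> linarith

private lemma powint {s : ℝ} (hs : 1 < s) :
    IntegrableOn (fun t : ℝ => (1+t) ^ (-s)) (Ioi 0) ∧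
    ∫ t in Ioi (0:ℝ), (1+t) ^ (-s) = 1/(s-1) := by
  have hemb : MeasurableEmbedding (fun x : ℝ => x + 1) :=
    (MeasurableEquiv.addRight (1:ℝ)).measurableEmbedding
  have hmp : MeasurePreserving (fun x : ℝ => x + 1) volume volume :=
    measurePreserving_add_right volume 1
  have hpre : (fun x : ℝ => x + 1) ⁻¹' (Ioi 1) = Ioi 0 := by
    ext x; simp
  have key : ∀ g : ℝ → ℝ, ∫ x in Ioi (0:ℝ), g (x + 1) = ∫ y in Ioi (1:ℝ), g y := by
    intro g
    rw [← hpre]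
    exact hmp.setIntegral_preimage_emb hemb g _
  have hieq : ∀ x ∈ Ioi (0:ℝ), ((1+x) ^ (-s) : ℝ) = (fun y : ℝ => y ^ (-s)) (x + 1) := by
    intro x _; simp [add_comm]
  constructor
  · have : IntegrableOn (fun y : ℝ => y ^ (-s)) (Ioi 1) :=
      integrableOn_Ioi_rpow_of_lt (by linarith) one_pos
    have := (hmp.integrableOn_comp_preimage hemb).2 this
    rw [hpre] at this
    exact this.congr_fun (fun x hx => by simp [add_comm]) measurableSet_Ioi
  · rw [setIntegral_congr_fun measurableSet_Ioi hieq, key (fun y : ℝ => y ^ (-s)),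
      integral_Ioi_rpow_of_lt (by linarith) one_pos]
    rw [Real.one_rpow]
    rw [div_eq_div_iff (by linarith) (by linarith)]
    ring

private lemma sub_one_int {p q : ℝ} (hp : 1 < p) (hpq : p ≤ q) :
    ∫ s in p..q, 1/(s-1) = Real.log ((q-1)/(p-1)) := by
  have := intervalIntegral.integral_comp_sub_right (fun u => 1/u) 1 (a := p) (b := q)
  rw [this, integral_one_div]
  intro h
  rcases h with h
  have := h.1
  rw [inf_le_iff] at this
  rcases this with h' | h' <;> linarith

private lemma frullani_pow {p q : ℝ} (hp : 1 < p) (hpq : p ≤ q) :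
    IntegrableOn (fun t : ℝ => ((1+t)^(-p) - (1+t)^(-q)) / Real.log (1+t)) (Ioi 0) ∧
    ∫ t in Ioi (0:ℝ), ((1+t)^(-p) - (1+t)^(-q)) / Real.log (1+t)
      = Real.log ((q-1)/(p-1)) := by
  have hc : Measurable fun t : ℝ => Real.log (1+t) :=
    Real.measurable_log.comp (measurable_const.add measurable_id)
  have hcpos : ∀ t ∈ Ioi (0:ℝ), 0 < Real.log (1+t) := fun t ht =>
    Real.log_pos (by simpa using ht)
  have hrw : ∀ r : ℝ, ∀ t ∈ Ioi (0:ℝ), Real.exp (-(r * Real.log (1+t))) = (1+t) ^ (-r) := by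
    intro r t ht
    rw [Real.rpow_def_of_pos (by simp at ht; linarith)]
    ring_nf
  have hint : IntegrableOn (fun t => Real.exp (-(p * Real.log (1+t)))) (Ioi 0) :=
    (powint hp).1.congr_fun (fun t ht => (hrw p t ht).symm) measurableSet_Ioi
  obtain ⟨h1, h2⟩ := kernel_fubini _ hc hcpos (by linarith : (0:ℝ) < p) hpq hint
  constructor
  · exact h1.congr_fun (fun t ht => by dsimp only; rw [hrw p t ht, hrw q t ht]) measurableSet_Ioi
  · rw [← setIntegral_congr_fun measurableSet_Ioi
      (fun t ht => by rw [← hrw p t ht, ← hrw q t ht]), h2]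
    rw [setIntegral_congr_fun measurableSet_Ioc (fun s hs => ?_),
      ← intervalIntegral.integral_of_le hpq, sub_one_int hp hpq]
    rw [setIntegral_congr_fun measurableSet_Ioi (hrw s), (powint (lt_of_lt_of_le hp hs.1.le)).2]

-- telescoping term: ((1+t)^{3/2}-1)/((1+t)^{m+1} log(1+t))
private lemma fint {m : ℝ} (hm : 3 ≤ m) :
    IntegrableOn (fun t : ℝ =>
      ((1+t) ^ (3/2 : ℝ) - 1) / ((1+t) ^ (m+1) * Real.log (1+t))) (Ioi 0) ∧
    ∫ t in Ioi (0:ℝ), ((1+t) ^ (3/2 : ℝ) - 1) / ((1+t) ^ (m+1) * Real.log (1+t))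
      = Real.log (m / (m - 3/2)) := by
  have hp : (1:ℝ) < m - 1/2 := by linarith
  have hpq : m - 1/2 ≤ m + 1 := by linarith
  have heq : ∀ t ∈ Ioi (0:ℝ),
      ((1+t)^(-(m-1/2)) - (1+t)^(-(m+1))) / Real.log (1+t)
        = ((1+t) ^ (3/2 : ℝ) - 1) / ((1+t) ^ (m+1) * Real.log (1+t)) := by
    intro t ht
    have h1 : (0:ℝ) < 1 + t := by simp at ht; linarith
    have h2 : (1+t)^(-(m-1/2)) = (1+t) ^ (3/2:ℝ) * (1+t)^(-(m+1)) := by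
      rw [← Real.rpow_add h1]; ring_nf
    rw [h2, Real.rpow_neg h1.le (m+1)]
    have h3 : ((1:ℝ)+t) ^ (m+1) ≠ 0 := (Real.rpow_pos_of_pos h1 _).ne'
    field_simp
  obtain ⟨h1, h2⟩ := frullani_pow hp hpq
  constructor
  · exact h1.congr_fun heq measurableSet_Ioi
  · rw [← setIntegral_congr_fun measurableSet_Ioi heq, h2]
    have hq : m + 1 - 1 = m := by ring
    have hpv : m - 1/2 - 1 = m - 3/2 := by ring
    rw [hq, hpv]

-- a^m - b^m ≤ m * a^(m-1) * (a-b)  in the (m+1) form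
private lemma pow_diff_le (a b : ℝ) (hb : 0 ≤ b) (hba : b ≤ a) :
    ∀ m : ℕ, a^(m+1) - b^(m+1) ≤ (m+1) * a^m * (a - b) := by
  intro m
  induction m with
  | zero => simp
  | succ m ih =>
    have hpow : b^(m+1) ≤ a^(m+1) := pow_le_pow_left₀ hb hba _
    have ha : 0 ≤ a := hb.trans hba
    have hb1 : 0 ≤ b^(m+1) := pow_nonneg hb _
    have key : a^(m+1+1) - b^(m+1+1) = a*(a^(m+1) - b^(m+1)) + b^(m+1)*(a-b) := by ring
    rw [key]
    have h1 : a*(a^(m+1) - b^(m+1)) ≤ a * ((m+1) * a^m * (a - b)) := by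
      apply mul_le_mul_of_nonneg_left ih ha
    have h2 : b^(m+1)*(a-b) ≤ a^(m+1)*(a-b) :=
      mul_le_mul_of_nonneg_right hpow (by linarith)
    have h3 : a * ((m+1 : ℝ) * a^m * (a - b)) + a^(m+1)*(a-b)
        = ((m+1 : ℕ)+1 : ℝ) * a^(m+1) * (a-b) := by
      rw [pow_succ]
      push_cast
      ring
    push_cast at h3 ⊢
    linarith

-- 1 - (1+t) e^{-t} ≤ t^2/2  for t ≥ 0
private lemma one_sub_mul_exp_le (t : ℝ) (ht : 0 ≤ t) :
    1 - (1+t) * Real.exp (-t) ≤ t^2/2 := by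
  have key : ∀ x ∈ Ici (0:ℝ), HasDerivAt (fun u => u^2/2 - 1 + (1+u) * Real.exp (-u))
      (x - x * Real.exp (-x)) x := by
    intro x _
    have h1 : HasDerivAt (fun u : ℝ => u^2/2 - 1) x x := by
      simpa using ((hasDerivAt_pow 2 x).div_const 2).sub_const 1
    have h2 : HasDerivAt (fun u : ℝ => (1+u) * Real.exp (-u))
        (Real.exp (-x) + (1+x) * (-Real.exp (-x))) x := by
      have h := ((hasDerivAt_id x).const_add 1).mul (((hasDerivAt_id x).neg).exp)
      simp only [id] at h
      refine h.congr_deriv ?_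
      simp only [Pi.neg_apply, id]
      ring
    refine (h1.add h2).congr_deriv ?_
    ring
  have hmono : MonotoneOn (fun u : ℝ => u^2/2 - 1 + (1+u) * Real.exp (-u)) (Ici 0) := by
    apply monotoneOn_of_deriv_nonneg (convex_Ici 0)
    · exact Continuous.continuousOn (by continuity)
    · intro x hx
      exact (key x (interior_subset hx)).differentiableAt.differentiableWithinAt
    · intro x hx
      rw [interior_Ici] at hx
      rw [HasDerivAt.deriv (key x (mem_Ici.2 (le_of_lt hx)))]
      have : Real.exp (-x) ≤ 1 := Real.exp_le_one_iff.2 (by linarith [mem_Ioi.1 hx])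
      have hx' := le_of_lt (mem_Ioi.1 hx)
      nlinarith
  have h0 := hmono (self_mem_Ici) (mem_Ici.2 ht) ht
  simp only [Real.exp_zero] at h0
  norm_num at h0
  linarith

private lemma P1_bounds {m t : ℝ} (ht : 0 < t) :
    0 ≤ (((1+t)^(3/2:ℝ) - 1)/Real.log (1+t) - 3/2) * (1+t)^(-m) / t ∧
    (((1+t)^(3/2:ℝ) - 1)/Real.log (1+t) - 3/2) * (1+t)^(-m) / t
      ≤ 9/4 * (1+t)^(1/2 - m) := by
  have hu : (0:ℝ) < 1 + t := by linarith
  have hu1 : (1:ℝ) < 1 + t := by linarith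
  have hL : 0 < Real.log (1+t) := Real.log_pos hu1
  set y := (1+t) ^ ((1:ℝ)/2) with hy
  have hy0 : 0 < y := Real.rpow_pos_of_pos hu _
  have hy1 : 1 < y := Real.one_lt_rpow_iff_of_pos hu |>.2 (Or.inl ⟨hu1, by norm_num⟩)
  have hy2 : y^(2:ℕ) = 1 + t := by
    rw [hy, ← Real.rpow_natCast ((1+t) ^ ((1:ℝ)/2)) 2, ← Real.rpow_mul hu.le]
    norm_num
  have hy3 : (1+t)^(3/2:ℝ) = y^(3:ℕ) := by
    rw [hy, ← Real.rpow_natCast ((1+t) ^ ((1:ℝ)/2)) 3, ← Real.rpow_mul hu.le]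
    norm_num
  have hlogy : Real.log (1+t) = 2 * Real.log y := by
    rw [← hy2, Real.log_pow]; push_cast; ring
  have hly : Real.log y ≤ y - 1 := Real.log_le_sub_one_of_pos hy0
  have hpm : (0:ℝ) < (1+t)^(-m) := Real.rpow_pos_of_pos hu _
  -- lower bound : 3/2 ≤ ((1+t)^{3/2}-1)/L
  have hlower : 3/2 * Real.log (1+t) ≤ (1+t)^(3/2:ℝ) - 1 := by
    rw [hy3, hlogy]
    nlinarith [sq_nonneg (y-1), hy1]
  have hr_lb : (3:ℝ)/2 ≤ ((1+t)^(3/2:ℝ) - 1)/Real.log (1+t) := by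
    rw [le_div_iff₀ hL]; linarith
  constructor
  · apply div_nonneg _ ht.le
    exact mul_nonneg (by linarith) hpm.le
  · -- t/(1+t) ≤ log(1+t)
    have hLt : t ≤ Real.log (1+t) * (1+t) := by
      have h := Real.log_le_sub_one_of_pos (inv_pos.2 hu)
      rw [Real.log_inv] at h
      have h2 : (1+t)⁻¹ * (1+t) = 1 := inv_mul_cancel₀ hu.ne'
      nlinarith [h, hu]
    -- A/L ≤ 3/2 y^3
    have hub : ((1+t)^(3/2:ℝ) - 1)/Real.log (1+t) ≤ 3/2 * y^(3:ℕ) := by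
      rw [div_le_iff₀ hL, hy3]
      have h1 : 3/2 * y * t ≤ 3/2 * y * (Real.log (1+t) * (1+t)) := by
        apply mul_le_mul_of_nonneg_left hLt (by positivity)
      have h2 : y * (1+t) = y^(3:ℕ) := by rw [← hy2]; ring
      have h3 : 2*(y^(3:ℕ) - 1) ≤ 3*y*(y^(2:ℕ)-1) := by nlinarith [sq_nonneg (y-1), hy1]
      have h4 : y^(2:ℕ) - 1 = t := by rw [hy2]; ring
      nlinarith [h1, h2, h3, h4]
    have hstep : ((1+t)^(3/2:ℝ) - 1)/Real.log (1+t) - 3/2 ≤ 9/4 * t * y := by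
      have h3 : 2*(y^(3:ℕ) - 1) ≤ 3*y*(y^(2:ℕ)-1) := by nlinarith [sq_nonneg (y-1), hy1]
      have h4 : y^(2:ℕ) - 1 = t := by rw [hy2]; ring
      nlinarith [hub, h3, h4]
    have hrw : 9/4 * (1+t)^(1/2 - m) = 9/4 * y * (1+t)^(-m) := by
      rw [hy, show (1:ℝ)/2 - m = 1/2 + (-m) by ring, Real.rpow_add hu]
      ring
    rw [hrw, div_le_iff₀ ht]
    calc (((1+t)^(3/2:ℝ) - 1)/Real.log (1+t) - 3/2) * (1+t)^(-m)
        ≤ (9/4 * t * y) * (1+t)^(-m) := by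
          apply mul_le_mul_of_nonneg_right hstep hpm.le
      _ = 9/4 * y * (1+t)^(-m) * t := by ring

private lemma P2_bounds {m : ℕ} (hm : 1 ≤ m) {t : ℝ} (ht : 0 < t) :
    0 ≤ ((1+t)^(-(m:ℝ)) - Real.exp (-((m:ℝ)*t)))/t ∧
    ((1+t)^(-(m:ℝ)) - Real.exp (-((m:ℝ)*t)))/t ≤ (m:ℝ)/2 * t * (1+t)^(-(m:ℝ)) := by
  have hu : (0:ℝ) < 1 + t := by linarith
  obtain ⟨k, rfl⟩ : ∃ k, m = k + 1 := ⟨m - 1, by omega⟩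
  have ha : ((1:ℝ)+t)^(-((k+1:ℕ):ℝ)) = ((1+t)⁻¹)^(k+1) := by
    rw [Real.rpow_neg hu.le, Real.rpow_natCast, inv_pow]
  have hb : Real.exp (-(((k+1:ℕ):ℝ)*t)) = (Real.exp (-t))^(k+1) := by
    rw [← Real.exp_nat_mul]
    congr 1
    push_cast; ring
  have hba : Real.exp (-t) ≤ (1+t)⁻¹ := by
    rw [Real.exp_neg]
    exact inv_anti₀ hu (by linarith [Real.add_one_le_exp t])
  have hbnn : 0 ≤ Real.exp (-t) := (Real.exp_pos _).le
  have hpow := pow_diff_le ((1+t)⁻¹) (Real.exp (-t)) hbnn hba k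
  have hmono : (Real.exp (-t))^(k+1) ≤ ((1+t)⁻¹)^(k+1) :=
    pow_le_pow_left₀ hbnn hba _
  constructor
  · rw [ha, hb]
    apply div_nonneg (by linarith) ht.le
  · rw [ha, hb, div_le_iff₀ ht]
    have hab : (1+t)⁻¹ - Real.exp (-t) ≤ (1+t)⁻¹ * (t^2/2) := by
      have h1 := one_sub_mul_exp_le t ht.le
      have h2 : (1+t)⁻¹ * (1+t) = 1 := inv_mul_cancel₀ hu.ne'
      have h3 : (0:ℝ) < (1+t)⁻¹ := inv_pos.2 hu
      nlinarith [mul_le_mul_of_nonneg_left h1 h3.le]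
    have h4 : (0:ℝ) ≤ ((1+t)⁻¹)^k := pow_nonneg (inv_pos.2 hu).le _
    have h5 : ((k:ℝ)+1) * ((1+t)⁻¹)^k * ((1+t)⁻¹ - Real.exp (-t))
        ≤ ((k:ℝ)+1) * ((1+t)⁻¹)^k * ((1+t)⁻¹ * (t^2/2)) := by
      apply mul_le_mul_of_nonneg_left hab (by positivity)
    have h6 : ((k:ℝ)+1) * ((1+t)⁻¹)^k * ((1+t)⁻¹ * (t^2/2))
        = (((k+1:ℕ)):ℝ)/2 * t * ((1+t)⁻¹)^(k+1) * t := by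
      rw [pow_succ]
      push_cast; ring
    calc ((1+t)⁻¹)^(k+1) - (Real.exp (-t))^(k+1)
        ≤ ((k:ℝ)+1) * ((1+t)⁻¹)^k * ((1+t)⁻¹ - Real.exp (-t)) := by
          have := hpow; push_cast at this ⊢; linarith
      _ ≤ (((k+1:ℕ)):ℝ)/2 * t * ((1+t)⁻¹)^(k+1) * t := by rw [← h6]; exact h5

noncomputable def PhiFn (s t : ℝ) : ℝ :=
  (((1 + t) ^ (3 / 2 : ℝ) - 1) / ((1 + t) ^ s * Real.log (1 + t)) -
    3 / 2 * Real.exp (-t)) / t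

noncomputable def FFn (m t : ℝ) : ℝ :=
  ((1 + t) ^ (3 / 2 : ℝ) - 1) / ((1 + t) ^ (m + 1) * Real.log (1 + t))

private lemma Phi_step (s : ℝ) {t : ℝ} (ht : 0 < t) :
    PhiFn s t = FFn s t + PhiFn (s+1) t := by
  unfold PhiFn FFn
  have hu : (0:ℝ) < 1 + t := by linarith
  have hL : Real.log (1+t) ≠ 0 := (Real.log_pos (by linarith)).ne'
  have hP : ((1:ℝ)+t) ^ s ≠ 0 := (Real.rpow_pos_of_pos hu s).ne'
  have hP1 : ((1:ℝ)+t) ^ (s+1) = (1+t) ^ s * (1+t) := Real.rpow_add_one hu.ne' s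
  rw [hP1]
  field_simp
  ring

private lemma Phi_sum (s : ℝ) (M : ℕ) {t : ℝ} (ht : 0 < t) :
    PhiFn s t = (∑ k ∈ Finset.range M, FFn (s+k) t) + PhiFn (s+M) t := by
  induction M with
  | zero => simp
  | succ M ih =>
    rw [Finset.sum_range_succ, ih, Phi_step (s+M) ht]
    push_cast
    ring_nf

private lemma Phi_tail (m : ℝ) {t : ℝ} (ht : 0 < t) :
    PhiFn m t = (((1+t)^(3/2:ℝ) - 1)/Real.log (1+t) - 3/2) * (1+t)^(-m) / t
      + 3/2 * (((1+t)^(-m) - Real.exp (-(m*t)))/t)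
      + 3/2 * ((Real.exp (-(m*t)) - Real.exp (-(1*t)))/t) := by
  unfold PhiFn
  have hu : (0:ℝ) < 1 + t := by linarith
  have hL : Real.log (1+t) ≠ 0 := (Real.log_pos (by linarith)).ne'
  have hP : ((1:ℝ)+t) ^ m ≠ 0 := (Real.rpow_pos_of_pos hu m).ne'
  rw [Real.rpow_neg hu.le, one_mul]
  field_simp
  ring



set_option maxHeartbeats 1000000 in
private lemma Phi_m_int {m : ℕ} (hm : 3 ≤ m) :
    IntegrableOn (fun t => PhiFn (m:ℝ) t) (Ioi 0) ∧
    ∃ e : ℝ, (∫ t in Ioi (0:ℝ), PhiFn (m:ℝ) t) = e - 3/2 * Real.log m ∧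
      0 ≤ e ∧ e ≤ 8/(m:ℝ) := by
  have hm3 : (3:ℝ) ≤ (m:ℝ) := by exact_mod_cast hm
  set g1 : ℝ → ℝ := fun t =>
    (((1+t)^(3/2:ℝ) - 1)/Real.log (1+t) - 3/2) * (1+t)^(-(m:ℝ)) / t with hg1
  set g2 : ℝ → ℝ := fun t => ((1+t)^(-(m:ℝ)) - Real.exp (-((m:ℝ)*t)))/t with hg2
  set g3 : ℝ → ℝ := fun t => (Real.exp (-((m:ℝ)*t)) - Real.exp (-(1*t)))/t with hg3
  -- g1
  have hd1eq : (fun t : ℝ => (9:ℝ)/4 * (1+t)^(-((m:ℝ) - 1/2)))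
      = fun t : ℝ => 9/4 * (1+t)^((1:ℝ)/2 - (m:ℝ)) := by
    funext t
    rw [show -((m:ℝ) - 1/2) = (1:ℝ)/2 - (m:ℝ) by ring]
  have hd1 : IntegrableOn (fun t : ℝ => (9:ℝ)/4 * (1+t)^((1:ℝ)/2 - (m:ℝ))) (Ioi 0) := by
    rw [← hd1eq]
    exact ((powint (s := (m:ℝ) - 1/2) (by linarith)).1.const_mul _)
  have hlogm : Measurable fun t : ℝ => Real.log (1+t) :=
    Real.measurable_log.comp (measurable_const.add measurable_id)
  have hrpm : ∀ c : ℝ, Measurable fun t : ℝ => (1+t) ^ (c:ℝ) := fun c => by fun_prop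
  have hmeas1 : AEStronglyMeasurable g1 (volume.restrict (Ioi 0)) := by
    apply Measurable.aestronglyMeasurable
    exact ((((hrpm (3/2)).sub measurable_const).div hlogm |>.sub
      measurable_const).mul (hrpm (-(m:ℝ)))).div measurable_id
  have hint1 : IntegrableOn g1 (Ioi 0) := by
    apply Integrable.mono' hd1 hmeas1
    filter_upwards [ae_restrict_mem measurableSet_Ioi] with t ht
    rw [Real.norm_eq_abs, abs_of_nonneg (P1_bounds ht).1]
    exact (P1_bounds ht).2
  have hnn1 : 0 ≤ ∫ t in Ioi (0:ℝ), g1 t :=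
    setIntegral_nonneg measurableSet_Ioi fun t ht => (P1_bounds ht).1
  have hub1 : ∫ t in Ioi (0:ℝ), g1 t ≤ 9/4 * (1/((m:ℝ) - 3/2)) := by
    have h1 : ∫ t in Ioi (0:ℝ), g1 t ≤ ∫ t in Ioi (0:ℝ), 9/4 * (1+t)^((1:ℝ)/2 - (m:ℝ)) :=
      setIntegral_mono_on hint1 hd1 measurableSet_Ioi fun t ht => (P1_bounds ht).2
    have h2 : ∫ t in Ioi (0:ℝ), (9:ℝ)/4 * (1+t)^((1:ℝ)/2 - (m:ℝ))
        = 9/4 * (1/((m:ℝ) - 3/2)) := by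
      rw [← hd1eq, MeasureTheory.integral_const_mul,
        (powint (s := (m:ℝ) - 1/2) (by linarith)).2,
        show (m:ℝ) - 1/2 - 1 = (m:ℝ) - 3/2 by ring]
    linarith
  -- g2
  have hu : ∀ t : ℝ, t ∈ Ioi (0:ℝ) → (0:ℝ) < 1 + t := fun t ht => by
    simp at ht; linarith
  have hd2eq : ∀ t ∈ Ioi (0:ℝ), (m:ℝ)/2 * t * (1+t)^(-(m:ℝ))
      = (m:ℝ)/2 * ((1+t)^(-((m:ℝ)-1)) - (1+t)^(-(m:ℝ))) := by
    intro t ht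
    have h := hu t ht
    have : ((1:ℝ)+t)^(-((m:ℝ)-1)) = (1+t)^(-(m:ℝ)) * (1+t) := by
      rw [show -((m:ℝ)-1) = -(m:ℝ)+1 by ring, Real.rpow_add_one h.ne']
    rw [this]; ring
  have hd2 : IntegrableOn
      (fun t : ℝ => (m:ℝ)/2 * ((1+t)^(-((m:ℝ)-1)) - (1+t)^(-(m:ℝ)))) (Ioi 0) :=
    (((powint (s := (m:ℝ)-1) (by linarith)).1.sub
      ((powint (s := (m:ℝ)) (by linarith)).1)).const_mul _)
  have hmeas2 : AEStronglyMeasurable g2 (volume.restrict (Ioi 0)) := by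
    apply Measurable.aestronglyMeasurable
    exact ((hrpm (-(m:ℝ))).sub (by fun_prop)).div measurable_id
  have hint2 : IntegrableOn g2 (Ioi 0) := by
    apply Integrable.mono' hd2 hmeas2
    filter_upwards [ae_restrict_mem measurableSet_Ioi] with t ht
    rw [Real.norm_eq_abs, abs_of_nonneg (P2_bounds (by omega) ht).1, ← hd2eq t ht]
    exact (P2_bounds (by omega) ht).2
  have hnn2 : 0 ≤ ∫ t in Ioi (0:ℝ), g2 t :=
    setIntegral_nonneg measurableSet_Ioi fun t ht => (P2_bounds (by omega) ht).1
  have hub2 : ∫ t in Ioi (0:ℝ), g2 t ≤ (m:ℝ)/2 * (1/((m:ℝ)-2) - 1/((m:ℝ)-1)) := by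
    have h1 : ∫ t in Ioi (0:ℝ), g2 t
        ≤ ∫ t in Ioi (0:ℝ), (m:ℝ)/2 * ((1+t)^(-((m:ℝ)-1)) - (1+t)^(-(m:ℝ))) := by
      apply setIntegral_mono_on hint2 hd2 measurableSet_Ioi
      intro t ht
      rw [← hd2eq t ht]
      exact (P2_bounds (by omega) ht).2
    have h2 : ∫ t in Ioi (0:ℝ), (m:ℝ)/2 * ((1+t)^(-((m:ℝ)-1)) - (1+t)^(-(m:ℝ)))
        = (m:ℝ)/2 * (1/((m:ℝ)-2) - 1/((m:ℝ)-1)) := by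
      rw [MeasureTheory.integral_const_mul,
        MeasureTheory.integral_sub ((powint (s := (m:ℝ)-1) (by linarith)).1)
          ((powint (s := (m:ℝ)) (by linarith)).1),
        (powint (s := (m:ℝ)-1) (by linarith)).2, (powint (s := (m:ℝ)) (by linarith)).2,
        show (m:ℝ) - 1 - 1 = (m:ℝ) - 2 by ring]
    linarith
  -- g3
  have hfr := frullani_s3 (p := (1:ℝ)) (q := (m:ℝ)) one_pos (by linarith)
  have hint3 : IntegrableOn g3 (Ioi 0) := by
    have hneg : IntegrableOn
        (fun t => -((Real.exp (-(1*t)) - Real.exp (-((m:ℝ)*t)))/t)) (Ioi 0) := hfr.1.neg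
    apply hneg.congr_fun _ measurableSet_Ioi
    intro t _
    simp only [hg3]
    ring
  have hval3 : ∫ t in Ioi (0:ℝ), g3 t = - Real.log (m:ℝ) := by
    have h1 : ∫ t in Ioi (0:ℝ), g3 t
        = ∫ t in Ioi (0:ℝ), -((Real.exp (-(1*t)) - Real.exp (-((m:ℝ)*t)))/t) := by
      apply setIntegral_congr_fun measurableSet_Ioi
      intro t _
      simp only [hg3]
      ring
    rw [h1, MeasureTheory.integral_neg, hfr.2, div_one]
  -- assemble
  have hdecomp : ∀ t ∈ Ioi (0:ℝ), g1 t + 3/2 * g2 t + 3/2 * g3 t = PhiFn (m:ℝ) t :=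
    fun t ht => (Phi_tail (m:ℝ) (mem_Ioi.1 ht)).symm
  have hcomb : IntegrableOn (fun t => g1 t + 3/2 * g2 t + 3/2 * g3 t) (Ioi 0) :=
    (hint1.add (hint2.const_mul _)).add (hint3.const_mul _)
  constructor
  · exact hcomb.congr_fun hdecomp measurableSet_Ioi
  · refine ⟨(∫ t in Ioi (0:ℝ), g1 t) + 3/2 * ∫ t in Ioi (0:ℝ), g2 t, ?_, by linarith, ?_⟩
    · have hadd12 : IntegrableOn (fun t => g1 t + 3/2 * g2 t) (Ioi 0) :=
        hint1.add (hint2.const_mul _)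
      have h32g3 : IntegrableOn (fun t => 3/2 * g3 t) (Ioi 0) := hint3.const_mul _
      have h32g2 : IntegrableOn (fun t => 3/2 * g2 t) (Ioi 0) := hint2.const_mul _
      rw [← setIntegral_congr_fun measurableSet_Ioi hdecomp,
        MeasureTheory.integral_add hadd12 h32g3,
        MeasureTheory.integral_add hint1 h32g2,
        MeasureTheory.integral_const_mul, MeasureTheory.integral_const_mul, hval3]
      ring
    · -- crude bound 8/m
      set x := (m:ℝ) with hx
      have hx3 : (3:ℝ) ≤ x := hm3
      have hb1 : 9/4 * (1/(x - 3/2)) ≤ 9/(2*x) := by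
        rw [mul_one_div, div_le_div_iff₀ (by linarith) (by linarith)]
        nlinarith
      have hb2 : (1:ℝ)/(x-2) - 1/(x-1) = 1/((x-1)*(x-2)) := by
        have h1 : x - 1 ≠ 0 := by linarith
        have h2 : x - 2 ≠ 0 := by linarith
        field_simp
        ring
      have hb3 : (1:ℝ)/((x-1)*(x-2)) ≤ 9/(2*x^2) := by
        rw [div_le_div_iff₀ (by nlinarith) (by nlinarith)]
        nlinarith [sq_nonneg (x-3)]
      have hb4 : x/2 * (1/(x-2) - 1/(x-1)) ≤ 9/(4*x) := by
        rw [hb2]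
        have h5 : x/2 * (1/((x-1)*(x-2))) ≤ x/2 * (9/(2*x^2)) := by
          apply mul_le_mul_of_nonneg_left hb3 (by linarith)
        have heq : x/2 * (9/(2*x^2)) = 9/(4*x) := by
          have hx0 : x ≠ 0 := by linarith
          field_simp
          ring
        rw [heq] at h5
        exact h5
      have hfin : 9/(2*x) + 3/2 * (9/(4*x)) ≤ 8/x := by
        have hx0 : (0:ℝ) < x := by linarith
        have he : 9/(2*x) + 3/2 * (9/(4*x)) = 63/(8*x) := by
          field_simp
          ring
        rw [he, div_le_div_iff₀ (by positivity) hx0]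
        nlinarith
      linarith [hub1, hub2, hb1, hb4]

private lemma expT_tendsto (n : ℕ) :
    Tendsto (fun M : ℕ => Real.exp ((∑ k ∈ Finset.range M,
        Real.log ((((n:ℝ)+2) + k) / (((n:ℝ)+1/2) + k)))
      - 3/2 * Real.log (((n:ℝ)+2) + M)))
      atTop (𝓝 (Real.Gamma ((n:ℝ)+1/2) / Real.Gamma ((n:ℝ)+2))) := by
  set a : ℝ := (n:ℝ) + 1/2 with ha
  set b : ℝ := (n:ℝ) + 2 with hb
  have ha0 : 0 < a := by positivity
  have hb0 : 0 < b := by positivity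
  have hak : ∀ k : ℕ, (0:ℝ) < a + k := fun k => by positivity
  have hbk : ∀ k : ℕ, (0:ℝ) < b + k := fun k => by positivity
  -- exp (T M) value
  have hexp : ∀ M : ℕ, Real.exp ((∑ k ∈ Finset.range M, Real.log ((b + k) / (a + k)))
      - 3/2 * Real.log (b + M))
      = (∏ k ∈ Finset.range M, (b + k) / (a + k)) * (b + M) ^ (-(3/2) : ℝ) := by
    intro M
    rw [Real.exp_sub]
    have e1 : Real.exp (∑ k ∈ Finset.range M, Real.log ((b+k)/(a+k)))
        = ∏ k ∈ Finset.range M, (b+k)/(a+k) := by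
      rw [Real.exp_sum]
      exact Finset.prod_congr rfl fun k _ => Real.exp_log (div_pos (hbk k) (hak k))
    have e2 : Real.exp (3/2 * Real.log (b+M)) = (b+M) ^ ((3/2):ℝ) := by
      rw [Real.rpow_def_of_pos (hbk M), mul_comm]
    rw [e1, e2, Real.rpow_neg (hbk M).le, div_eq_mul_inv]
  -- relation with GammaSeq
  have hrel : ∀ M : ℕ, 1 ≤ M →
      (∏ k ∈ Finset.range M, (b + k) / (a + k)) * (b + M) ^ (-(3/2) : ℝ)
      = (Real.GammaSeq a M / Real.GammaSeq b M)
        * (((M:ℝ)/(b+M)) ^ ((3/2) : ℝ) * ((a+M)/(b+M))) := by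
    intro M hM
    have hM0 : (0:ℝ) < M := by exact_mod_cast hM
    have hPa : (0:ℝ) < ∏ j ∈ Finset.range (M+1), (a + j) :=
      Finset.prod_pos fun j _ => hak j
    have hPb : (0:ℝ) < ∏ j ∈ Finset.range (M+1), (b + j) :=
      Finset.prod_pos fun j _ => hbk j
    have hfact : (0:ℝ) < (M.factorial : ℝ) := by exact_mod_cast M.factorial_pos
    have hMa : (0:ℝ) < (M:ℝ) ^ a := Real.rpow_pos_of_pos hM0 _
    have hMb : (0:ℝ) < (M:ℝ) ^ b := Real.rpow_pos_of_pos hM0 _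
    rw [Real.GammaSeq, Real.GammaSeq]
    rw [div_div_div_comm]
    have h1 : ((M:ℝ) ^ a * M.factorial) / ((M:ℝ) ^ b * M.factorial)
        = (M:ℝ) ^ (a - b) := by
      rw [Real.rpow_sub hM0]
      exact mul_div_mul_right _ _ hfact.ne'
    rw [h1]
    have h2 : a - b = -(3/2) := by rw [ha, hb]; ring
    rw [h2]
    have h3 : (∏ j ∈ Finset.range (M+1), (a + j)) = (∏ j ∈ Finset.range M, (a + j)) * (a + M) :=
      Finset.prod_range_succ _ _
    have h4 : (∏ j ∈ Finset.range (M+1), (b + j)) = (∏ j ∈ Finset.range M, (b + j)) * (b + M) :=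
      Finset.prod_range_succ _ _
    have h5 : (∏ k ∈ Finset.range M, (b + k) / (a + k))
        = (∏ k ∈ Finset.range M, (b + k)) / (∏ k ∈ Finset.range M, (a + k)) :=
      Finset.prod_div_distrib _ _
    have h6 : ((M:ℝ)/(b+M)) ^ ((3/2) : ℝ) = (M:ℝ) ^ ((3/2):ℝ) / (b+M) ^ ((3/2):ℝ) :=
      Real.div_rpow hM0.le (hbk M).le _
    have hQa : (0:ℝ) < ∏ k ∈ Finset.range M, (a + k) :=
      Finset.prod_pos fun j _ => hak j
    have hQb : (0:ℝ) < ∏ k ∈ Finset.range M, (b + k) :=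
      Finset.prod_pos fun j _ => hbk j
    rw [h3, h4, h5, h6]
    rw [Real.rpow_neg hM0.le, Real.rpow_neg (hbk M).le]
    have hMr : (0:ℝ) < (M:ℝ) ^ ((3/2):ℝ) := Real.rpow_pos_of_pos hM0 _
    have hbMr : (0:ℝ) < (b+M) ^ ((3/2):ℝ) := Real.rpow_pos_of_pos (hbk M) _
    field_simp
  -- limits
  have hR : Tendsto (fun M : ℕ => Real.GammaSeq a M / Real.GammaSeq b M) atTop
      (𝓝 (Real.Gamma a / Real.Gamma b)) :=
    (Real.GammaSeq_tendsto_Gamma a).div (Real.GammaSeq_tendsto_Gamma b)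
      (Real.Gamma_pos_of_pos hb0).ne'
  have hdiv : ∀ c : ℝ, 0 < c → Tendsto (fun M : ℕ => c / (b + M)) atTop (𝓝 0) := by
    intro c hc
    apply Tendsto.div_atTop tendsto_const_nhds
    apply tendsto_atTop_add_const_left
    exact tendsto_natCast_atTop_atTop
  have h7 : Tendsto (fun M : ℕ => (M:ℝ)/(b+M)) atTop (𝓝 1) := by
    have : ∀ M : ℕ, (M:ℝ)/(b+M) = 1 - b/(b+M) := by
      intro M
      have : (0:ℝ) < b + M := hbk M
      field_simp
      ring
    simp_rw [this]
    have := (hdiv b hb0).const_sub 1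
    simpa using this
  have h8 : Tendsto (fun M : ℕ => ((M:ℝ)/(b+M)) ^ ((3/2) : ℝ)) atTop (𝓝 1) := by
    have := h7.rpow_const (p := (3/2:ℝ)) (Or.inr (by norm_num))
    simpa using this
  have h9 : Tendsto (fun M : ℕ => (a+M)/(b+M)) atTop (𝓝 1) := by
    have heq : ∀ M : ℕ, (a+M)/(b+M) = 1 - (b-a)/(b+M) := by
      intro M
      have : (0:ℝ) < b + M := hbk M
      field_simp
      ring
    simp_rw [heq]
    have := (hdiv (b-a) (by rw [ha,hb]; norm_num)).const_sub 1
    simpa using this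
  have hprod : Tendsto (fun M : ℕ => (Real.GammaSeq a M / Real.GammaSeq b M)
      * (((M:ℝ)/(b+M)) ^ ((3/2) : ℝ) * ((a+M)/(b+M)))) atTop
      (𝓝 (Real.Gamma a / Real.Gamma b)) := by
    have := hR.mul (h8.mul h9)
    simpa using this
  apply hprod.congr'
  filter_upwards [eventually_ge_atTop 1] with M hM
  rw [← hrel M hM, ← hexp M]

private lemma gamma_half (n : ℕ) :
    Real.Gamma ((n:ℝ) + 1/2) * (4^n * n.factorial) = Real.sqrt π * (2*n).factorial := by
  induction n with
  | zero =>
    rw [show ((0:ℕ):ℝ) + 1/2 = 1/2 by norm_num, Real.Gamma_one_half_eq]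
    simp
  | succ n ih =>
    have hne : (n:ℝ) + 1/2 ≠ 0 := by positivity
    have hrec : Real.Gamma (((n+1:ℕ):ℝ) + 1/2) = ((n:ℝ)+1/2) * Real.Gamma ((n:ℝ)+1/2) := by
      rw [show (((n+1:ℕ):ℝ) + 1/2) = ((n:ℝ)+1/2) + 1 by push_cast; ring,
        Real.Gamma_add_one hne]
    have hfacts : ((2*(n+1)).factorial : ℝ)
        = (2*n+2) * ((2*n+1) * (2*n).factorial) := by
      rw [show 2*(n+1) = (2*n+1)+1 by ring, Nat.factorial_succ, Nat.factorial_succ]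
      push_cast; ring
    have hfact1 : ((n+1).factorial : ℝ) = (n+1) * n.factorial := by
      rw [Nat.factorial_succ]; push_cast; ring
    rw [hrec, hfacts, hfact1]
    have h4 : (4:ℝ)^(n+1) = 4 * 4^n := by ring
    rw [h4]
    linear_combination (4*((n:ℝ)+1)*((n:ℝ)+1/2)) * ih

private lemma catalan_cast (n : ℕ) :
    (catalan n : ℝ) * ((n+1).factorial * n.factorial) = (2*n).factorial := by
  have h1 : (n+1) * catalan n * (n.factorial * n.factorial) = (2*n).factorial := by
    rw [succ_mul_catalan_eq_centralBinom, Nat.centralBinom]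
    have := Nat.choose_mul_factorial_mul_factorial (show n ≤ 2*n by omega)
    rw [show 2*n - n = n by omega] at this
    rw [← this]
    ring
  have h2 : ((n+1).factorial : ℝ) = (n+1) * n.factorial := by
    rw [Nat.factorial_succ]; push_cast; ring
  rw [h2]
  have := congrArg (fun x : ℕ => (x:ℝ)) h1
  push_cast at this ⊢
  linarith [this]



private lemma F_val (n : ℕ) (hn : 0 < n) :
    Real.exp (∫ t in Ioi (0:ℝ), PhiFn ((n:ℝ)+2) t)
      = Real.Gamma ((n:ℝ)+1/2) / Real.Gamma ((n:ℝ)+2) := by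
  have hn1 : (1:ℝ) ≤ (n:ℝ) := by exact_mod_cast hn
  have hdec : ∀ M : ℕ, (∫ t in Ioi (0:ℝ), PhiFn ((n:ℝ)+2) t)
      = (∑ k ∈ Finset.range M, Real.log ((((n:ℝ)+2)+k)/(((n:ℝ)+1/2)+k)))
      + ∫ t in Ioi (0:ℝ), PhiFn (((n:ℝ)+2) + M) t := by
    intro M
    have hcast : ((n + 2 + M : ℕ) : ℝ) = ((n:ℝ)+2) + M := by push_cast; ring
    have htailint : IntegrableOn (fun t => PhiFn (((n:ℝ)+2) + M) t) (Ioi 0) := by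
      have := (Phi_m_int (m := n + 2 + M) (by omega)).1
      rwa [hcast] at this
    have h3k : ∀ k : ℕ, (3:ℝ) ≤ ((n:ℝ)+2) + k := fun k => by
      have : (0:ℝ) ≤ (k:ℝ) := k.cast_nonneg
      linarith
    have hsumint : ∀ k ∈ Finset.range M,
        IntegrableOn (fun t => FFn (((n:ℝ)+2) + k) t) (Ioi 0) := by
      intro k _
      have := (fint (h3k k)).1
      exact this
    have heq : ∀ t ∈ Ioi (0:ℝ),
        (∑ k ∈ Finset.range M, FFn (((n:ℝ)+2) + k) t) + PhiFn (((n:ℝ)+2) + M) t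
          = PhiFn ((n:ℝ)+2) t :=
      fun t ht => (Phi_sum ((n:ℝ)+2) M (mem_Ioi.1 ht)).symm
    rw [← setIntegral_congr_fun measurableSet_Ioi heq,
      MeasureTheory.integral_add (integrable_finset_sum _ hsumint) htailint,
      MeasureTheory.integral_finset_sum _ hsumint]
    congr 1
    apply Finset.sum_congr rfl
    intro k _
    simp only [FFn]
    rw [(fint (h3k k)).2, show ((n:ℝ)+2) + k - 3/2 = ((n:ℝ)+1/2) + k by ring]
  set F : ℝ := ∫ t in Ioi (0:ℝ), PhiFn ((n:ℝ)+2) t with hFdef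
  set T : ℕ → ℝ := fun M => (∑ k ∈ Finset.range M,
      Real.log ((((n:ℝ)+2)+k)/(((n:ℝ)+1/2)+k))) - 3/2 * Real.log (((n:ℝ)+2) + M) with hTdef
  have hTF : ∀ M : ℕ, ‖T M - F‖ ≤ 8/((M:ℝ)+1) := by
    intro M
    obtain ⟨e, he1, he2, he3⟩ := (Phi_m_int (m := n + 2 + M) (by omega)).2
    have hcast : ((n + 2 + M : ℕ) : ℝ) = ((n:ℝ)+2) + M := by push_cast; ring
    rw [hcast] at he1 he3
    have hF_eq : F = (∑ k ∈ Finset.range M,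
        Real.log ((((n:ℝ)+2)+k)/(((n:ℝ)+1/2)+k))) + (e - 3/2 * Real.log (((n:ℝ)+2)+M)) := by
      rw [hdec M, he1]
    have : T M - F = -e := by rw [hF_eq, hTdef]; ring
    rw [this, norm_neg, Real.norm_eq_abs, abs_of_nonneg he2]
    have hle : ((M:ℝ)+1) ≤ ((n:ℝ)+2) + M := by linarith
    calc e ≤ 8/(((n:ℝ)+2) + M) := he3
      _ ≤ 8/((M:ℝ)+1) := by
          apply div_le_div_of_nonneg_left (by norm_num) (by positivity) hle
  have h8 : Tendsto (fun M : ℕ => 8/((M:ℝ)+1)) atTop (𝓝 0) := by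
    have := tendsto_one_div_add_atTop_nhds_zero_nat.const_mul (8:ℝ)
    simp only [mul_one_div] at this
    simpa using this
  have hT0 : Tendsto (fun M => T M - F) atTop (𝓝 0) := squeeze_zero_norm hTF h8
  have hT : Tendsto T atTop (𝓝 F) := by
    have := hT0.add_const F
    simpa using this
  have h1 : Tendsto (fun M => Real.exp (T M)) atTop (𝓝 (Real.exp F)) :=
    (Real.continuous_exp.tendsto F).comp hT
  exact tendsto_nhds_unique h1 (expT_tendsto n)

theorem catalan_integral_feaux (n : ℕ) (hn : 0 < n) :
    (catalan n : ℝ) =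
      2 ^ (2 * n) / Real.sqrt Real.pi *
        Real.exp (∫ t in Set.Ioi (0 : ℝ),
          (((1 + t) ^ (3 / 2 : ℝ) - 1) / ((1 + t) ^ ((n : ℝ) + 2) * Real.log (1 + t)) -
            3 / 2 * Real.exp (-t)) / t) := by
  have hF := F_val n hn
  show (catalan n : ℝ) = 2 ^ (2*n) / Real.sqrt Real.pi *
    Real.exp (∫ t in Set.Ioi (0:ℝ), PhiFn ((n:ℝ)+2) t)
  rw [hF]
  have hg2 : Real.Gamma ((n:ℝ)+2) = ((n+1).factorial : ℝ) := by
    rw [show ((n:ℝ)+2) = ((n+1:ℕ):ℝ) + 1 by push_cast; ring,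
      Real.Gamma_nat_eq_factorial]
  rw [hg2]
  have hfn : (0:ℝ) < (n.factorial : ℝ) := by exact_mod_cast n.factorial_pos
  have hfn1 : (0:ℝ) < ((n+1).factorial : ℝ) := by exact_mod_cast (n+1).factorial_pos
  have hπ : (0:ℝ) < Real.sqrt π := Real.sqrt_pos.2 Real.pi_pos
  have h4n : (0:ℝ) < 4^n * (n.factorial:ℝ) := by positivity
  have hΓ : Real.Gamma ((n:ℝ)+1/2)
      = Real.sqrt π * ((2*n).factorial:ℝ) / (4^n * n.factorial) := by
    rw [eq_div_iff h4n.ne']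
    exact gamma_half n
  have hC : (catalan n : ℝ) = ((2*n).factorial:ℝ) / ((n+1).factorial * n.factorial) := by
    rw [eq_div_iff (by positivity)]
    exact catalan_cast n
  rw [hC, hΓ, show (2:ℝ)^(2*n) = 4^n by rw [pow_mul]; norm_num]
  field_simp
end

section
/- For every real x > 0, log Γ(x + 1/2) = (1 - 2x) log 2 + (log π)/2 + ∫₀^∞ [ x e^{-t} + ((1+t)^{-2x} - (1+t)^{-x}) / log(1+t) ] (dt/t). -/
open Real MeasureTheory Set Filter Topology

namespace FeauxAux

noncomputable def g (s t : ℝ) : ℝ :=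
  ((s - 1) * Real.exp (-t) +
    ((1 + t) ^ (-s : ℝ) - (1 + t) ^ (-(1:ℝ))) / Real.log (1 + t)) / t

lemma abs_exp_sub_one_le {t : ℝ} (ht : 0 ≤ t) : |Real.exp (-t) - 1| ≤ t := by
  have h1 : Real.exp (-t) ≤ 1 := Real.exp_le_one_iff.mpr (by linarith)
  have h2 : 1 - t ≤ Real.exp (-t) := by
    have := Real.add_one_le_exp (-t); linarith
  rw [abs_sub_comm, abs_of_nonneg (by linarith)]; linarith

lemma abs_exp_sub_one_add_le {a : ℝ} (ha : 0 ≤ a) :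
    |Real.exp (-a) - 1 + a| ≤ a ^ 2 / 2 := by
  have h2 : 1 - a ≤ Real.exp (-a) := by
    have := Real.add_one_le_exp (-a); linarith
  have hup : Real.exp (-a) ≤ 1 - a + a ^ 2 / 2 := by
    have hmono : MonotoneOn (fun a : ℝ => 1 - a + a ^ 2 / 2 - Real.exp (-a)) (Set.Ici 0) := by
      have hd : ∀ y : ℝ, HasDerivAt (fun a : ℝ => 1 - a + a ^ 2 / 2 - Real.exp (-a))
          (-1 + y + Real.exp (-y)) y := by
        intro y
        have h1 : HasDerivAt (fun a : ℝ => Real.exp (-a)) (-Real.exp (-y)) y := by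
          simpa [Function.comp_def] using (Real.hasDerivAt_exp (-y)).comp y (hasDerivAt_neg y)
        have h2 : HasDerivAt (fun a : ℝ => 1 - a + a ^ 2 / 2) (-1 + y) y := by
          have := ((hasDerivAt_pow 2 y).div_const 2)
          have h3 := ((hasDerivAt_const y (1:ℝ)).sub (hasDerivAt_id y)).add this
          exact h3.congr_deriv (by norm_num)
        exact (h2.sub h1).congr_deriv (by ring)
      apply monotoneOn_of_deriv_nonneg (convex_Ici 0)
      · exact (Continuous.continuousOn (by continuity))
      · exact fun y hy => (hd y).differentiableAt.differentiableWithinAt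
      · intro y hy
        rw [(hd y).deriv]
        have := Real.add_one_le_exp (-y)
        linarith
    have := hmono (Set.self_mem_Ici) (Set.mem_Ici.mpr ha) ha
    norm_num at this
    linarith
  rw [abs_le]; constructor <;> nlinarith

end FeauxAux

namespace FeauxAux2
open FeauxAux

lemma rpow_eq_exp {t : ℝ} (ht : 0 < t) (y : ℝ) :
    (1 + t) ^ (y : ℝ) = Real.exp (y * Real.log (1 + t)) := by
  rw [Real.rpow_def_of_pos (by linarith), mul_comm]

lemma log_pos' {t : ℝ} (ht : 0 < t) : 0 < Real.log (1 + t) :=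
  Real.log_pos (by linarith)

lemma log_le' {t : ℝ} (ht : 0 < t) : Real.log (1 + t) ≤ t := by
  have := Real.log_le_sub_one_of_pos (show (0:ℝ) < 1 + t by linarith)
  linarith

lemma g_eq {s t : ℝ} (ht : 0 < t) :
    g s t = (s - 1) * (Real.exp (-t) - 1) / t +
      ((Real.exp (-(s * Real.log (1 + t))) - 1 + s * Real.log (1 + t)) -
        (Real.exp (-Real.log (1 + t)) - 1 + Real.log (1 + t))) / (Real.log (1 + t) * t) := by
  have hL := log_pos' ht
  rw [g, rpow_eq_exp ht, rpow_eq_exp ht]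
  field_simp
  ring_nf

lemma g_abs_le {s t : ℝ} (hs : 0 < s) (ht : 0 < t) :
    |g s t| ≤ |s - 1| + (s ^ 2 + 1) / 2 := by
  have hL := log_pos' ht
  have hLt := log_le' ht
  set L := Real.log (1 + t) with hLdef
  rw [g_eq ht]
  have h1 : |(s - 1) * (Real.exp (-t) - 1) / t| ≤ |s - 1| := by
    rw [abs_div, abs_mul, abs_of_pos ht]
    rw [div_le_iff₀ ht]
    calc |s-1| * |Real.exp (-t) - 1| ≤ |s-1| * t :=
      mul_le_mul_of_nonneg_left (abs_exp_sub_one_le ht.le) (abs_nonneg _)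
    _ = |s-1| * t := rfl
  have h2 : |((Real.exp (-(s * L)) - 1 + s * L) - (Real.exp (-L) - 1 + L)) / (L * t)| ≤
      (s ^ 2 + 1) / 2 := by
    rw [abs_div, abs_of_pos (mul_pos hL ht), div_le_iff₀ (mul_pos hL ht)]
    have hA := abs_exp_sub_one_add_le (mul_nonneg hs.le hL.le)
    have hB := abs_exp_sub_one_add_le hL.le
    have habs : |(Real.exp (-(s * L)) - 1 + s * L) - (Real.exp (-L) - 1 + L)| ≤
        (s * L) ^ 2 / 2 + L ^ 2 / 2 := (abs_sub _ _).trans (by linarith)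
    calc |(Real.exp (-(s * L)) - 1 + s * L) - (Real.exp (-L) - 1 + L)|
        ≤ (s * L) ^ 2 / 2 + L ^ 2 / 2 := habs
      _ = (s ^ 2 + 1) / 2 * L * L := by ring
      _ ≤ (s ^ 2 + 1) / 2 * L * t := by
          have h := mul_le_mul_of_nonneg_left hLt (by positivity : (0:ℝ) ≤ (s ^ 2 + 1) / 2 * L)
          linarith [h]
      _ = (s ^ 2 + 1) / 2 * (L * t) := by ring
  calc |_| ≤ _ := abs_add_le _ _
    _ ≤ |s - 1| + (s ^ 2 + 1) / 2 := add_le_add h1 h2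

end FeauxAux2

namespace FeauxAux3
open FeauxAux FeauxAux2

lemma continuousOn_g (s : ℝ) : ContinuousOn (g s) (Ioi 0) := by
  unfold g
  apply ContinuousOn.div
  · apply ContinuousOn.add
    · exact (continuous_const.mul (Real.continuous_exp.comp continuous_neg)).continuousOn
    · apply ContinuousOn.div
      · apply ContinuousOn.sub <;>
        · apply ContinuousOn.rpow_const (by fun_prop)
          intro t ht
          left
          simp only [mem_Ioi] at ht
          positivity
      · exact Real.continuousOn_log.comp (by fun_prop) (fun t ht => by
          simp only [mem_Ioi] at ht; simp; positivity)
      · intro t ht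
        simp only [mem_Ioi] at ht
        exact (log_pos' ht).ne'
  · fun_prop
  · exact fun t ht => (mem_Ioi.mp ht).ne'

lemma integrableOn_g_Ioc {s : ℝ} (hs : 0 < s) : IntegrableOn (g s) (Ioc 0 1) := by
  refine Integrable.mono' (g := fun _ => |s - 1| + (s ^ 2 + 1) / 2)
    ((integrableOn_const_iff).mpr (Or.inr measure_Ioc_lt_top)) ?_ ?_
  · exact ((continuousOn_g s).mono Ioc_subset_Ioi_self).aestronglyMeasurable measurableSet_Ioc
  · rw [ae_restrict_iff' measurableSet_Ioc]
    exact Eventually.of_forall fun t ht => by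
      simpa using g_abs_le hs ht.1

lemma integrable_term2 {s : ℝ} (hs : 0 < s) :
    IntegrableOn (fun t => (1 + t) ^ (-s : ℝ) / (Real.log (1 + t) * t)) (Ioi 1) := by
  have base : IntegrableOn (fun t : ℝ => (Real.log 2)⁻¹ * t ^ (-s - 1 : ℝ)) (Ioi 1) :=
    (integrableOn_Ioi_rpow_of_lt (by linarith) one_pos).const_mul _
  refine base.mono' ?_ ?_
  · apply ContinuousOn.aestronglyMeasurable ?_ measurableSet_Ioi
    apply ContinuousOn.div
    · apply ContinuousOn.rpow_const (by fun_prop)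
      intro t ht; left; simp only [mem_Ioi] at ht; positivity
    · apply ContinuousOn.mul
      · exact Real.continuousOn_log.comp (by fun_prop) (fun t ht => by
          simp only [mem_Ioi] at ht; simp; positivity)
      · fun_prop
    · intro t ht
      simp only [mem_Ioi] at ht
      have h0 : 0 < t := lt_trans one_pos ht
      exact (mul_pos (log_pos' h0) h0).ne'
  · rw [ae_restrict_iff' measurableSet_Ioi]
    refine Eventually.of_forall fun t ht => ?_
    simp only [mem_Ioi] at ht
    have h0 : (0:ℝ) < t := lt_trans one_pos ht
    have hL2 : Real.log 2 ≤ Real.log (1 + t) :=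
      Real.log_le_log (by norm_num) (by linarith)
    have hL2pos : (0:ℝ) < Real.log 2 := Real.log_pos (by norm_num)
    have hP : (1 + t) ^ (-s : ℝ) ≤ t ^ (-s : ℝ) := by
      rw [Real.rpow_neg (by linarith), Real.rpow_neg h0.le]
      exact inv_anti₀ (Real.rpow_pos_of_pos h0 s)
        (Real.rpow_le_rpow h0.le (by linarith) hs.le)
    have hPpos : (0:ℝ) < (1 + t) ^ (-s : ℝ) := Real.rpow_pos_of_pos (by linarith) _
    rw [Real.norm_eq_abs, abs_of_pos (div_pos hPpos (mul_pos (log_pos' h0) h0))]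
    calc (1 + t) ^ (-s : ℝ) / (Real.log (1 + t) * t)
        ≤ t ^ (-s : ℝ) / (Real.log 2 * t) := by
          exact div_le_div₀ (Real.rpow_nonneg h0.le _) hP (mul_pos hL2pos h0)
            (mul_le_mul_of_nonneg_right hL2 h0.le)
      _ = (Real.log 2)⁻¹ * t ^ (-s - 1 : ℝ) := by
          rw [Real.rpow_sub h0, Real.rpow_one]
          field_simp

lemma integrable_term1 (c : ℝ) :
    IntegrableOn (fun t => c * Real.exp (-t) / t) (Ioi 1) := by
  have base : IntegrableOn (fun t : ℝ => |c| * Real.exp (-1 * t)) (Ioi 1) :=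
    (exp_neg_integrableOn_Ioi 1 one_pos).const_mul _
  refine base.mono' ?_ ?_
  · apply ContinuousOn.aestronglyMeasurable ?_ measurableSet_Ioi
    exact ContinuousOn.div (by fun_prop) (by fun_prop)
      (fun t ht => (lt_trans one_pos (mem_Ioi.mp ht)).ne')
  · rw [ae_restrict_iff' measurableSet_Ioi]
    refine Eventually.of_forall fun t ht => ?_
    simp only [mem_Ioi] at ht
    have h0 : (0:ℝ) < t := lt_trans one_pos ht
    rw [Real.norm_eq_abs, abs_div, abs_mul, abs_of_pos h0, abs_of_pos (Real.exp_pos _),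
      neg_one_mul]
    rw [div_le_iff₀ h0]
    calc |c| * Real.exp (-t) ≤ |c| * Real.exp (-t) * 1 := by ring_nf; rfl
      _ ≤ |c| * Real.exp (-t) * t := by
          apply mul_le_mul_of_nonneg_left (by linarith) (by positivity)

lemma g_split {s t : ℝ} :
    g s t = (s - 1) * Real.exp (-t) / t +
      ((1 + t) ^ (-s : ℝ) / (Real.log (1 + t) * t) -
        (1 + t) ^ (-(1:ℝ) : ℝ) / (Real.log (1 + t) * t)) := by
  simp only [g, add_div, sub_div, div_div]

lemma integrableOn_g_Ioi_one {s : ℝ} (hs : 0 < s) : IntegrableOn (g s) (Ioi 1) := by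
  have h := (integrable_term1 (s - 1)).add
    ((integrable_term2 hs).sub (integrable_term2 one_pos))
  exact h.congr (Eventually.of_forall fun t => g_split.symm)

lemma integrableOn_g {s : ℝ} (hs : 0 < s) : IntegrableOn (g s) (Ioi 0) := by
  rw [← Ioc_union_Ioi_eq_Ioi (zero_le_one (α := ℝ))]
  exact (integrableOn_g_Ioc hs).union (integrableOn_g_Ioi_one hs)

end FeauxAux3

namespace FeauxAux4
open FeauxAux FeauxAux2 FeauxAux3

noncomputable def f (s : ℝ) : ℝ := ∫ t in Ioi (0:ℝ), g s t

lemma f_one : f 1 = 0 := by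
  have : ∀ t : ℝ, g 1 t = 0 := fun t => by simp [g]
  simp [f, this]

lemma g_pointwise_convex {a b p q t : ℝ} (ht : 0 < t) (hp : 0 ≤ p) (hq : 0 ≤ q)
    (hpq : p + q = 1) : g (p * a + q * b) t ≤ p * g a t + q * g b t := by
  have hL := log_pos' ht
  have haux : ∀ {A B C : ℝ}, A ≤ p * B + q * C → A / t ≤ p * (B / t) + q * (C / t) := by
    intro A B C h
    calc A / t ≤ (p * B + q * C) / t := (div_le_div_iff_of_pos_right ht).mpr h
      _ = p * (B / t) + q * (C / t) := by ring
  simp only [g, rpow_eq_exp ht]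
  apply haux
  set L := Real.log (1 + t)
  set e := Real.exp (-t)
  set c := Real.exp (-(1:ℝ) * L) with hc
  set X := Real.exp (-a * L) with hX
  set Y := Real.exp (-b * L) with hY
  set Z := Real.exp (-(p * a + q * b) * L) with hZ
  have key : Z ≤ p * X + q * Y := by
    have h := convexOn_exp.2 (mem_univ (-a * L)) (mem_univ (-b * L)) hp hq hpq
    simp only [smul_eq_mul] at h
    rw [hZ, hX, hY, show -(p * a + q * b) * L = p * (-a * L) + q * (-b * L) from by ring]
    exact h
  have h2 : (Z - c) / L ≤ (p * X + q * Y - c) / L := by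
    apply (div_le_div_iff_of_pos_right hL).mpr
    linarith
  have hre : p * ((a - 1) * e + (X - c) / L) + q * ((b - 1) * e + (Y - c) / L) =
      (p * (a - 1) + q * (b - 1)) * e + (p * (X - c) + q * (Y - c)) / L := by ring
  rw [hre]
  have h3 : p * (X - c) + q * (Y - c) = p * X + q * Y - c := by linear_combination (-c) * hpq
  rw [h3]
  have h4 : p * a + q * b - 1 = p * (a - 1) + q * (b - 1) := by linear_combination hpq
  rw [h4]
  linarith

lemma convexOn_f : ConvexOn ℝ (Ioi 0) f := by
  refine ⟨convex_Ioi 0, fun a ha b hb p q hp hq hpq => ?_⟩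
  simp only [smul_eq_mul, mem_Ioi] at *
  have hmin : 0 < min a b := lt_min ha hb
  have hcomb : (p + q) * min a b ≤ p * a + q * b := by
    rw [add_mul]
    exact add_le_add (mul_le_mul_of_nonneg_left (min_le_left a b) hp)
      (mul_le_mul_of_nonneg_left (min_le_right a b) hq)
  have hab : 0 < p * a + q * b := by rw [hpq, one_mul] at hcomb; linarith
  have hint : IntegrableOn (fun t => p * g a t + q * g b t) (Ioi (0:ℝ)) :=
    ((integrableOn_g ha).const_mul p).add ((integrableOn_g hb).const_mul q)
  calc f (p * a + q * b) = ∫ t in Ioi (0:ℝ), g (p * a + q * b) t := rfl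
    _ ≤ ∫ t in Ioi (0:ℝ), (p * g a t + q * g b t) :=
        setIntegral_mono_on (integrableOn_g hab) hint measurableSet_Ioi
          (fun t ht => g_pointwise_convex (mem_Ioi.mp ht) hp hq hpq)
    _ = p * f a + q * f b := by
        rw [integral_add ((integrableOn_g ha).const_mul p) ((integrableOn_g hb).const_mul q),
          MeasureTheory.integral_const_mul, MeasureTheory.integral_const_mul]
        rfl

end FeauxAux4

namespace FeauxAux5
open FeauxAux FeauxAux2 FeauxAux3 FeauxAux4

noncomputable def E (a : ℝ) : ℝ := ∫ v in Ioi a, Real.exp (-v) / v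

lemma integrableOn_exp_div {a : ℝ} (ha : 0 < a) :
    IntegrableOn (fun v => Real.exp (-v) / v) (Ioi a) := by
  have base : IntegrableOn (fun v : ℝ => a⁻¹ * Real.exp (-1 * v)) (Ioi a) :=
    (exp_neg_integrableOn_Ioi a one_pos).const_mul _
  refine base.mono' ?_ ?_
  · apply ContinuousOn.aestronglyMeasurable ?_ measurableSet_Ioi
    exact ContinuousOn.div (by fun_prop) (by fun_prop)
      (fun v hv => (lt_trans ha (mem_Ioi.mp hv)).ne')
  · rw [ae_restrict_iff' measurableSet_Ioi]
    refine Eventually.of_forall fun v hv => ?_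
    simp only [mem_Ioi] at hv
    have h0 : 0 < v := lt_trans ha hv
    rw [Real.norm_eq_abs, abs_of_pos (div_pos (Real.exp_pos _) h0), neg_one_mul,
      div_le_iff₀ h0]
    calc Real.exp (-v) = Real.exp (-v) * (a⁻¹ * a) := by
          rw [inv_mul_cancel₀ ha.ne', mul_one]
      _ ≤ Real.exp (-v) * (a⁻¹ * v) := by
          apply mul_le_mul_of_nonneg_left
            (mul_le_mul_of_nonneg_left hv.le (inv_nonneg.mpr ha.le)) (Real.exp_pos _).le
      _ = a⁻¹ * Real.exp (-v) * v := by ring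

lemma integrableOn_pow_div {s ε : ℝ} (hs : 0 < s) (hε : 0 < ε) :
    IntegrableOn (fun t => (1 + t) ^ (-(s + 1) : ℝ) / Real.log (1 + t)) (Ioi ε) := by
  have base : IntegrableOn (fun t : ℝ => (Real.log (1 + ε))⁻¹ * t ^ (-(s + 1) : ℝ)) (Ioi ε) :=
    (integrableOn_Ioi_rpow_of_lt (by linarith) hε).const_mul _
  refine base.mono' ?_ ?_
  · apply ContinuousOn.aestronglyMeasurable ?_ measurableSet_Ioi
    apply ContinuousOn.div
    · apply ContinuousOn.rpow_const (by fun_prop)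
      intro t ht; left; have := lt_trans hε (mem_Ioi.mp ht); positivity
    · exact Real.continuousOn_log.comp (by fun_prop) (fun t ht => by
        have := lt_trans hε (mem_Ioi.mp ht); simp; positivity)
    · exact fun t ht => (log_pos' (lt_trans hε (mem_Ioi.mp ht))).ne'
  · rw [ae_restrict_iff' measurableSet_Ioi]
    refine Eventually.of_forall fun t ht => ?_
    simp only [mem_Ioi] at ht
    have h0 : 0 < t := lt_trans hε ht
    have hLε : Real.log (1 + ε) ≤ Real.log (1 + t) := Real.log_le_log (by linarith) (by linarith)
    have hLεpos : 0 < Real.log (1 + ε) := log_pos' hε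
    have hP : (1 + t) ^ (-(s + 1) : ℝ) ≤ t ^ (-(s + 1) : ℝ) := by
      rw [Real.rpow_neg (by linarith), Real.rpow_neg h0.le]
      exact inv_anti₀ (Real.rpow_pos_of_pos h0 _)
        (Real.rpow_le_rpow h0.le (by linarith) (by linarith))
    have hPpos : (0:ℝ) < (1 + t) ^ (-(s + 1) : ℝ) := Real.rpow_pos_of_pos (by linarith) _
    rw [Real.norm_eq_abs, abs_of_pos (div_pos hPpos (log_pos' h0))]
    calc (1 + t) ^ (-(s + 1) : ℝ) / Real.log (1 + t)
        ≤ t ^ (-(s + 1) : ℝ) / Real.log (1 + ε) :=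
          div_le_div₀ (Real.rpow_nonneg h0.le _) hP hLεpos hLε
      _ = (Real.log (1 + ε))⁻¹ * t ^ (-(s + 1) : ℝ) := by rw [div_eq_inv_mul]

end FeauxAux5

namespace FeauxAux6
open FeauxAux FeauxAux2 FeauxAux3 FeauxAux4 FeauxAux5

lemma h_eq {s t : ℝ} (ht : 0 < t) :
    g (s + 1) t - g s t =
      Real.exp (-t) / t - (1 + t) ^ (-(s + 1) : ℝ) / Real.log (1 + t) := by
  have hL : Real.log (1 + t) ≠ 0 := (log_pos' ht).ne'
  have h1t : (0:ℝ) < 1 + t := by linarith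
  have hr : (1 + t) ^ (-(s + 1) : ℝ) * (1 + t) = (1 + t) ^ (-s : ℝ) := by
    nth_rewrite 2 [← Real.rpow_one (1 + t)]
    rw [← Real.rpow_add h1t]
    norm_num
  simp only [g]
  rw [div_sub_div_same, show s + 1 - 1 = s from by ring]
  have hnum : (s * Real.exp (-t) + ((1+t)^(-(s+1):ℝ) - (1+t)^(-(1:ℝ):ℝ)) / Real.log (1+t)) -
      ((s - 1) * Real.exp (-t) + ((1+t)^(-s:ℝ) - (1+t)^(-(1:ℝ):ℝ)) / Real.log (1+t)) =
      Real.exp (-t) + ((1+t)^(-(s+1):ℝ) - (1+t)^(-s:ℝ)) / Real.log (1+t) := by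
    ring
  rw [hnum, ← hr]
  rw [show (1+t)^(-(s+1):ℝ) - (1+t)^(-(s+1):ℝ) * (1+t) = -t * (1+t)^(-(s+1):ℝ) from by ring]
  field_simp
  ring

lemma exp_rpow' (u y : ℝ) : (Real.exp u) ^ (y : ℝ) = Real.exp (u * y) := by
  rw [Real.rpow_def_of_pos (Real.exp_pos u), Real.log_exp]

lemma image_exp_sub_one (a : ℝ) :
    (fun u => Real.exp u - 1) '' Ioi a = Ioi (Real.exp a - 1) := by
  ext v
  simp only [mem_image, mem_Ioi]
  constructor
  · rintro ⟨u, hu, rfl⟩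
    have := Real.exp_lt_exp.mpr hu
    linarith
  · intro hv
    have h1v : 0 < 1 + v := by have := Real.exp_pos a; linarith
    refine ⟨Real.log (1 + v), ?_, ?_⟩
    · rw [← Real.log_exp a]
      exact Real.log_lt_log (Real.exp_pos a) (by linarith)
    · rw [Real.exp_log h1v]; ring

lemma CoV1 {s ε : ℝ} (hε : 0 < ε) :
    ∫ t in Ioi ε, (1 + t) ^ (-(s + 1) : ℝ) / Real.log (1 + t) =
      ∫ u in Ioi (Real.log (1 + ε)), Real.exp (-(s * u)) / u := by
  have ha : 0 < Real.log (1 + ε) := log_pos' hε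
  have himg : (fun u => Real.exp u - 1) '' Ioi (Real.log (1 + ε)) = Ioi ε := by
    rw [image_exp_sub_one, Real.exp_log (by linarith)]
    norm_num
  rw [← himg,
    integral_image_eq_integral_abs_deriv_smul measurableSet_Ioi
      (fun u _ => ((Real.hasDerivAt_exp u).sub_const 1).hasDerivWithinAt)
      (fun u _ v _ huv => by
        have := congrArg (· + 1) huv
        simp only [sub_add_cancel] at this
        exact Real.exp_injective this)]
  apply setIntegral_congr_fun measurableSet_Ioi
  intro u hu
  have hu0 : 0 < u := lt_trans ha (mem_Ioi.mp hu)
  have h1 : 1 + (Real.exp u - 1) = Real.exp u := by ring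
  dsimp only
  rw [smul_eq_mul, abs_of_pos (Real.exp_pos u), h1, Real.log_exp, exp_rpow']
  rw [← mul_div_assoc, ← Real.exp_add]
  congr 2
  ring

lemma CoV2 {s a : ℝ} (hs : 0 < s) (ha : 0 < a) :
    ∫ u in Ioi a, Real.exp (-(s * u)) / u = ∫ v in Ioi (s * a), Real.exp (-v) / v := by
  have h := integral_comp_mul_left_Ioi (fun v => Real.exp (-v) / v) a hs
  have h2 : ∀ u ∈ Ioi a, Real.exp (-(s * u)) / u = s * (Real.exp (-(s * u)) / (s * u)) := by
    intro u hu
    have hu0 : 0 < u := lt_trans ha (mem_Ioi.mp hu)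
    field_simp
  rw [setIntegral_congr_fun measurableSet_Ioi h2, MeasureTheory.integral_const_mul, h,
    smul_eq_mul, ← mul_assoc, mul_inv_cancel₀ hs.ne', one_mul]

lemma E_diff {a b : ℝ} (ha : 0 < a) (hb : 0 < b) :
    E a - E b = ∫ v in a..b, Real.exp (-v) / v := by
  have key : ∀ {c d : ℝ}, 0 < c → 0 < d → c ≤ d →
      E c - E d = ∫ v in c..d, Real.exp (-v) / v := by
    intro c d hc hd hcd
    rw [intervalIntegral.integral_of_le hcd, E, E, ← Ioc_union_Ioi_eq_Ioi hcd,
      setIntegral_union (Ioc_disjoint_Ioi le_rfl) measurableSet_Ioi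
        ((integrableOn_exp_div hc).mono_set Ioc_subset_Ioi_self)
        (integrableOn_exp_div hd)]
    ring
  rcases le_total a b with hab | hab
  · exact key ha hb hab
  · rw [intervalIntegral.integral_symm, ← key hb ha hab]; ring

lemma interval_split {a b : ℝ} (ha : 0 < a) (hb : 0 < b) :
    ∫ v in a..b, Real.exp (-v) / v =
      Real.log (b / a) + ∫ v in a..b, (Real.exp (-v) - 1) / v := by
  have hsub : Set.uIcc a b ⊆ Ioi (0:ℝ) := by
    intro v hv
    have := hv.1
    simp only [mem_Ioi]
    calc (0:ℝ) < min a b := lt_min ha hb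
      _ ≤ v := hv.1
  have hcont1 : ContinuousOn (fun v : ℝ => v⁻¹) (Set.uIcc a b) :=
    ContinuousOn.inv₀ (by fun_prop) (fun v hv => (mem_Ioi.mp (hsub hv)).ne')
  have hcont2 : ContinuousOn (fun v : ℝ => (Real.exp (-v) - 1) / v) (Set.uIcc a b) :=
    ContinuousOn.div (by fun_prop) (by fun_prop) (fun v hv => (mem_Ioi.mp (hsub hv)).ne')
  have hcongr : EqOn (fun v : ℝ => Real.exp (-v) / v)
      (fun v : ℝ => v⁻¹ + (Real.exp (-v) - 1) / v) (Set.uIcc a b) := by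
    intro v hv
    have hv0 : v ≠ 0 := (mem_Ioi.mp (hsub hv)).ne'
    field_simp
    ring
  rw [intervalIntegral.integral_congr hcongr,
    intervalIntegral.integral_add (hcont1.intervalIntegrable) (hcont2.intervalIntegrable),
    integral_inv_of_pos ha hb]

end FeauxAux6

namespace FeauxAux7
open FeauxAux FeauxAux2 FeauxAux3 FeauxAux4 FeauxAux5 FeauxAux6

lemma tendsto_log_ratio :
    Tendsto (fun ε : ℝ => Real.log (1 + ε) / ε) (𝓝[>] (0:ℝ)) (𝓝 1) := by
  have h1 : HasDerivAt (fun x : ℝ => 1 + x) 1 0 := by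
    simpa using (hasDerivAt_id (0:ℝ)).const_add 1
  have h2 : HasDerivAt Real.log 1 (1 + 0 : ℝ) := by
    simpa using Real.hasDerivAt_log (by norm_num : (1:ℝ) + 0 ≠ 0)
  have hd : HasDerivAt (fun x : ℝ => Real.log (1 + x)) 1 0 := by
    simpa [Function.comp_def] using h2.comp 0 h1
  rw [hasDerivAt_iff_tendsto_slope] at hd
  have hmono : 𝓝[>] (0:ℝ) ≤ 𝓝[≠] (0:ℝ) :=
    nhdsWithin_mono 0 (fun x hx => (mem_Ioi.mp hx).ne')
  refine (hd.mono_left hmono).congr' ?_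
  filter_upwards [self_mem_nhdsWithin] with ε hε
  rw [slope_def_field]
  simp [div_eq_mul_inv]

end FeauxAux7

namespace FeauxAux8
open FeauxAux FeauxAux2 FeauxAux3 FeauxAux4 FeauxAux5 FeauxAux6 FeauxAux7

lemma integral_Ioi_h {s ε : ℝ} (hs : 0 < s) (hε : 0 < ε) :
    ∫ t in Ioi ε, (Real.exp (-t) / t - (1 + t) ^ (-(s + 1) : ℝ) / Real.log (1 + t)) =
      E ε - E (s * Real.log (1 + ε)) := by
  rw [integral_sub (integrableOn_exp_div hε) (integrableOn_pow_div hs hε)]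
  rw [CoV1 hε, CoV2 hs (log_pos' hε)]
  rfl

lemma hform {s ε : ℝ} (hs : 0 < s) (hε : 0 < ε) :
    ∫ t in Ioi ε, (Real.exp (-t) / t - (1 + t) ^ (-(s + 1) : ℝ) / Real.log (1 + t)) =
      Real.log (s * Real.log (1 + ε) / ε) +
        ∫ v in ε..(s * Real.log (1 + ε)), (Real.exp (-v) - 1) / v := by
  have hb : 0 < s * Real.log (1 + ε) := mul_pos hs (log_pos' hε)
  rw [integral_Ioi_h hs hε, E_diff hε hb, interval_split hε hb]

lemma f_feq {s : ℝ} (hs : 0 < s) : f (s + 1) = f s + Real.log s := by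
  have hs1 : (0:ℝ) < s + 1 := by linarith
  have hint : IntegrableOn
      (fun t => Real.exp (-t) / t - (1 + t) ^ (-(s + 1) : ℝ) / Real.log (1 + t)) (Ioi 0) := by
    have h0 : IntegrableOn (fun t => g (s + 1) t - g s t) (Ioi 0) :=
      (integrableOn_g hs1).sub (integrableOn_g hs)
    exact h0.congr_fun (fun t ht => h_eq (mem_Ioi.mp ht)) measurableSet_Ioi
  have hsplit : f (s + 1) - f s =
      ∫ t in Ioi (0:ℝ), (Real.exp (-t) / t - (1 + t) ^ (-(s + 1) : ℝ) / Real.log (1 + t)) := by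
    rw [f, f, ← integral_sub (integrableOn_g hs1) (integrableOn_g hs)]
    exact setIntegral_congr_fun measurableSet_Ioi (fun t ht => h_eq (mem_Ioi.mp ht))
  suffices hgoal : (∫ t in Ioi (0:ℝ),
      (Real.exp (-t) / t - (1 + t) ^ (-(s + 1) : ℝ) / Real.log (1 + t))) = Real.log s by
    linarith
  have hεpos : ∀ n : ℕ, (0:ℝ) < 1 / (n + 1) := fun n => by positivity
  have hLpos : ∀ n : ℕ, 0 < Real.log (1 + 1 / ((n:ℝ) + 1)) := fun n => log_pos' (hεpos n)
  have hmono : Monotone (fun n : ℕ => Ioi ((1:ℝ) / (n + 1))) := by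
    intro m n hmn
    apply Ioi_subset_Ioi
    apply one_div_le_one_div_of_le (by positivity)
    have := (Nat.cast_le (α := ℝ)).mpr hmn; linarith
  have hunion : ⋃ n : ℕ, Ioi ((1:ℝ) / (n + 1)) = Ioi 0 := by
    ext t
    simp only [mem_iUnion, mem_Ioi]
    constructor
    · rintro ⟨n, hn⟩; exact lt_trans (hεpos n) hn
    · intro ht
      obtain ⟨n, hn⟩ := exists_nat_one_div_lt ht
      exact ⟨n, by exact_mod_cast hn⟩
  have hlim1 : Tendsto (fun n : ℕ => ∫ t in Ioi ((1:ℝ) / (n + 1)),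
      (Real.exp (-t) / t - (1 + t) ^ (-(s + 1) : ℝ) / Real.log (1 + t))) atTop
      (𝓝 (∫ t in Ioi (0:ℝ),
        (Real.exp (-t) / t - (1 + t) ^ (-(s + 1) : ℝ) / Real.log (1 + t)))) := by
    have h := tendsto_setIntegral_of_monotone (fun n : ℕ => measurableSet_Ioi) hmono
      (by rw [hunion]; exact hint)
    rwa [hunion] at h
  have hseq : Tendsto (fun n : ℕ => (1:ℝ) / (n + 1)) atTop (𝓝[>] 0) := by
    apply tendsto_nhdsWithin_of_tendsto_nhds_of_eventually_within
    · exact tendsto_one_div_add_atTop_nhds_zero_nat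
    · exact Eventually.of_forall (fun n => hεpos n)
  have hratio : Tendsto (fun n : ℕ => Real.log (1 + 1 / ((n:ℝ) + 1)) / (1 / ((n:ℝ) + 1)))
      atTop (𝓝 1) := tendsto_log_ratio.comp hseq
  have hterm1 : Tendsto (fun n : ℕ =>
      Real.log (s * Real.log (1 + 1 / ((n:ℝ) + 1)) / (1 / ((n:ℝ) + 1)))) atTop
      (𝓝 (Real.log s)) := by
    have hc : Tendsto (fun y : ℝ => Real.log (s * y)) (𝓝 1) (𝓝 (Real.log s)) := by
      have h0 : ContinuousAt (fun y : ℝ => Real.log (s * y)) 1 := by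
        apply (Real.continuousAt_log (by simp [hs.ne'] : s * (1:ℝ) ≠ 0)).comp
        fun_prop
      simpa using h0.tendsto
    have h := hc.comp hratio
    refine h.congr (fun n => ?_)
    simp only [Function.comp_apply]
    rw [mul_div_assoc]
  have hterm2 : Tendsto (fun n : ℕ =>
      ∫ v in (1 / ((n:ℝ) + 1))..(s * Real.log (1 + 1 / ((n:ℝ) + 1))),
        (Real.exp (-v) - 1) / v) atTop (𝓝 0) := by
    apply squeeze_zero_norm (a := fun n : ℕ => (s + 1) * (1 / ((n:ℝ) + 1)))
    · intro n
      set ε := (1:ℝ) / ((n:ℝ) + 1) with hεdef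
      have hε : 0 < ε := hεpos n
      have hL : 0 < Real.log (1 + ε) := log_pos' hε
      have hLle : Real.log (1 + ε) ≤ ε := log_le' hε
      have hb : 0 < s * Real.log (1 + ε) := mul_pos hs hL
      have hbL : s * Real.log (1 + ε) ≤ s * ε := mul_le_mul_of_nonneg_left hLle hs.le
      have hbound : ∀ v ∈ Set.uIoc ε (s * Real.log (1 + ε)),
          ‖(Real.exp (-v) - 1) / v‖ ≤ 1 := by
        intro v hv
        have hv0 : 0 < v := (lt_min hε hb).trans hv.1
        rw [norm_div, Real.norm_eq_abs, Real.norm_eq_abs, abs_of_pos hv0, div_le_one hv0]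
        exact abs_exp_sub_one_le hv0.le
      calc ‖∫ v in ε..(s * Real.log (1 + ε)), (Real.exp (-v) - 1) / v‖
          ≤ 1 * |s * Real.log (1 + ε) - ε| :=
            intervalIntegral.norm_integral_le_of_norm_le_const hbound
        _ ≤ (s + 1) * ε := by
            rw [one_mul]
            rw [abs_le]
            constructor <;> nlinarith
    · have h := tendsto_one_div_add_atTop_nhds_zero_nat.const_mul (s + 1)
      simpa using h
  have hsum := hterm1.add hterm2
  rw [add_zero] at hsum
  have hfinal : Tendsto (fun n : ℕ => ∫ t in Ioi ((1:ℝ) / (n + 1)),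
      (Real.exp (-t) / t - (1 + t) ^ (-(s + 1) : ℝ) / Real.log (1 + t))) atTop
      (𝓝 (Real.log s)) := by
    refine hsum.congr (fun n => ?_)
    exact (hform hs (hεpos n)).symm
  exact tendsto_nhds_unique hlim1 hfinal

end FeauxAux8

namespace FeauxAux9
open FeauxAux FeauxAux2 FeauxAux3 FeauxAux4 FeauxAux8

lemma f_eq_log_Gamma {x : ℝ} (hx : 0 < x) : f x = Real.log (Real.Gamma x) := by
  have h1 := Real.BohrMollerup.tendsto_logGammaSeq convexOn_f
    (fun {y} hy => f_feq hy) hx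
  rw [f_one, sub_zero] at h1
  exact tendsto_nhds_unique h1 (Real.BohrMollerup.tendsto_log_gamma hx)

end FeauxAux9

theorem log_gamma_half (x : ℝ) (hx : 0 < x) :
    Real.log (Real.Gamma (x + 1 / 2)) =
      (1 - 2 * x) * Real.log 2 + Real.log Real.pi / 2 +
        ∫ t in Set.Ioi (0 : ℝ),
          (x * Real.exp (-t) +
            ((1 + t) ^ (-2 * x : ℝ) - (1 + t) ^ (-x : ℝ)) / Real.log (1 + t)) / t := by
  have h2x : (0:ℝ) < 2 * x := by linarith
  -- the integral equals f (2x) - f x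
  have hpt : ∀ t : ℝ,
      (x * Real.exp (-t) +
        ((1 + t) ^ (-2 * x : ℝ) - (1 + t) ^ (-x : ℝ)) / Real.log (1 + t)) / t =
      FeauxAux.g (2 * x) t - FeauxAux.g x t := by
    intro t
    simp only [FeauxAux.g]
    rw [show (-2 * x : ℝ) = -(2 * x) from by ring]
    ring
  have hIeq : (∫ t in Set.Ioi (0:ℝ),
      (x * Real.exp (-t) +
        ((1 + t) ^ (-2 * x : ℝ) - (1 + t) ^ (-x : ℝ)) / Real.log (1 + t)) / t) =
      FeauxAux4.f (2 * x) - FeauxAux4.f x := by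
    rw [FeauxAux4.f, FeauxAux4.f,
      ← MeasureTheory.integral_sub (FeauxAux3.integrableOn_g h2x) (FeauxAux3.integrableOn_g hx)]
    exact MeasureTheory.setIntegral_congr_fun measurableSet_Ioi (fun t ht => hpt t)
  rw [hIeq, FeauxAux9.f_eq_log_Gamma h2x, FeauxAux9.f_eq_log_Gamma hx]
  -- duplication formula
  have hdup := Real.Gamma_mul_Gamma_add_half x
  have hΓx : 0 < Real.Gamma x := Real.Gamma_pos_of_pos hx
  have hΓ2x : 0 < Real.Gamma (2 * x) := Real.Gamma_pos_of_pos h2x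
  have hΓh : 0 < Real.Gamma (x + 1 / 2) := Real.Gamma_pos_of_pos (by linarith)
  have hpow : (0:ℝ) < (2:ℝ) ^ (1 - 2 * x) := Real.rpow_pos_of_pos two_pos _
  have hsqrt : (0:ℝ) < Real.sqrt Real.pi := Real.sqrt_pos.mpr Real.pi_pos
  have hlog := congrArg Real.log hdup
  rw [Real.log_mul hΓx.ne' hΓh.ne', Real.log_mul (mul_pos hΓ2x hpow).ne' hsqrt.ne',
    Real.log_mul hΓ2x.ne' hpow.ne', Real.log_rpow two_pos, Real.log_sqrt Real.pi_pos.le]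
    at hlog
  linarith
end
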